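/- arXiv:2510.09873 — 8 statements merged into one kernel-verified Lean document; each statement's English description precedes it below -/
import Mathlib

section
/- Let X be an oriented graph on a finite vertex set V whose adjacency matrix A lies in the Bose–Mesner algebra (the linear span) of an association scheme 𝒜 = {A_0, …, A_d} on V. If perfect state transfer occurs from a vertex a to a vertex b with a ≠ b at time τ > 0, then U(τ) equals A_j for some j ≠ 0, where A_j is a permutation matrix with all diagonal entries zero (i.e., the permutation matrix of a fixed-point-free permutation of V) that commutes with A; in particular the phase λ in U(τ)e_a = λ e_b equals 1. -/
open Matrix

/-- The transition matrix `U(t) = exp(t A)` of a quantum walk on an oriented graph with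
adjacency matrix `A` (viewed as a complex matrix). -/
noncomputable def transU {V : Type*} [Fintype V] [DecidableEq V]
    (A : Matrix V V ℂ) (t : ℝ) : Matrix V V ℂ :=
  NormedSpace.exp ((t : ℂ) • A)

/-- Perfect state transfer from `a` to `b` at time `t`:
`U(t) e_a = λ e_b` for some scalar `λ` of norm 1. -/
def PST {V : Type*} [Fintype V] [DecidableEq V]
    (A : Matrix V V ℂ) (a b : V) (t : ℝ) : Prop :=
  ∃ lam : ℂ, ‖lam‖ = 1 ∧ (transU A t) *ᵥ (Pi.single a 1) = lam • (Pi.single b 1 : V → ℂ)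

/-- `M : Fin (d+1) → Matrix V V ℂ` is an association scheme on `V`. -/
structure IsAssocScheme {V : Type*} [Fintype V] [DecidableEq V] {d : ℕ}
    (M : Fin (d + 1) → Matrix V V ℂ) : Prop where
  h_zero : M 0 = 1
  h_entries : ∀ j i k, M j i k = 0 ∨ M j i k = 1
  h_sum : ∑ j, M j = Matrix.of (fun _ _ => (1 : ℂ))
  h_transpose : ∀ j, ∃ j', (M j)ᵀ = M j'
  h_comm : ∀ i j, M i * M j = M j * M i
  h_closed : ∀ i j, M i * M j ∈ Submodule.span ℂ (Set.range M)

/-- `A` is the adjacency matrix of an oriented graph: skew-symmetric with entries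
in `{-1, 0, 1}`. -/
def IsOrientedAdjMatrix {V : Type*} [Fintype V] [DecidableEq V]
    (A : Matrix V V ℂ) : Prop :=
  Aᵀ = -A ∧ ∀ i j, A i j = 0 ∨ A i j = 1 ∨ A i j = -1

section Aux

private lemma sum01 {ι : Type*} (s : Finset ι) (f : ι → ℂ)
    (h : ∀ i ∈ s, f i = 0 ∨ f i = 1) :
    ∑ i ∈ s, f i = ((s.filter fun i => f i = 1).card : ℂ) := by
  classical
  have e1 : ∑ i ∈ s.filter (fun i => f i = 1), f i
      = ((s.filter fun i => f i = 1).card : ℂ) := by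
    rw [Finset.sum_congr rfl (fun i hi => (Finset.mem_filter.mp hi).2)]
    simp
  have e2 : ∑ i ∈ s.filter (fun i => ¬ f i = 1), f i = 0 :=
    Finset.sum_eq_zero (fun i hi => by
      rcases h i (Finset.mem_of_mem_filter i hi) with h0 | h1
      · exact h0
      · exact absurd h1 (Finset.mem_filter.mp hi).2)
  rw [← Finset.sum_filter_add_sum_filter_not s (fun i => f i = 1), e1, e2, add_zero]

variable {V : Type*} [Fintype V] [DecidableEq V] {d : ℕ}
  {M : Fin (d + 1) → Matrix V V ℂ}

private lemma scheme_entry_sum (hM : IsAssocScheme M) (v w : V) :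
    ∑ j, M j v w = 1 := by
  have h := hM.h_sum
  have := congrFun (congrFun (congrArg (fun N => (N : Matrix V V ℂ)) h) v) w
  simpa [Matrix.sum_apply] using this

private lemma class_exists (hM : IsAssocScheme M) (v w : V) :
    ∃ j, M j v w = 1 ∧ ∀ i, i ≠ j → M i v w = 0 := by
  classical
  have hs := scheme_entry_sum hM v w
  rw [sum01 _ _ (fun j _ => hM.h_entries j v w)] at hs
  have hcard : (Finset.univ.filter fun j => M j v w = 1).card = 1 := by
    exact_mod_cast hs
  obtain ⟨j, hj⟩ := Finset.card_eq_one.mp hcard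
  refine ⟨j, ?_, ?_⟩
  · have : j ∈ Finset.univ.filter fun j => M j v w = 1 := hj ▸ Finset.mem_singleton_self j
    exact (Finset.mem_filter.mp this).2
  · intro i hij
    rcases hM.h_entries i v w with h0 | h1
    · exact h0
    · exfalso
      have : i ∈ Finset.univ.filter fun j => M j v w = 1 :=
        Finset.mem_filter.mpr ⟨Finset.mem_univ i, h1⟩
      rw [hj, Finset.mem_singleton] at this
      exact hij this

private lemma entry_eq_zero_of_ne (hM : IsAssocScheme M) {j i : Fin (d + 1)} {v w : V}
    (h : M j v w = 1) (hij : i ≠ j) : M i v w = 0 := by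
  obtain ⟨j', h1, h0⟩ := class_exists hM v w
  by_cases hjj : j = j'
  · exact h0 i (hjj ▸ hij)
  · exact absurd (h0 j hjj) (by rw [h]; norm_num)

private lemma span_mul_mem (hM : IsAssocScheme M) {x y : Matrix V V ℂ}
    (hx : x ∈ Submodule.span ℂ (Set.range M)) (hy : y ∈ Submodule.span ℂ (Set.range M)) :
    x * y ∈ Submodule.span ℂ (Set.range M) := by
  refine Submodule.span_induction₂
    (p := fun x y _ _ => x * y ∈ Submodule.span ℂ (Set.range M)) ?_ ?_ ?_ ?_ ?_ ?_ ?_ hx hy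
  · rintro x y ⟨i, rfl⟩ ⟨j, rfl⟩; exact hM.h_closed i j
  · intro y _; simp
  · intro x _; simp
  · intro x y z _ _ _ h1 h2; rw [add_mul]; exact Submodule.add_mem _ h1 h2
  · intro x y z _ _ _ h1 h2; rw [mul_add]; exact Submodule.add_mem _ h1 h2
  · intro r x y _ _ h1; rw [smul_mul_assoc]; exact Submodule.smul_mem _ _ h1
  · intro r x y _ _ h1; rw [mul_smul_comm]; exact Submodule.smul_mem _ _ h1

private lemma span_comm (hM : IsAssocScheme M) {x y : Matrix V V ℂ}
    (hx : x ∈ Submodule.span ℂ (Set.range M)) (hy : y ∈ Submodule.span ℂ (Set.range M)) :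
    x * y = y * x := by
  refine Submodule.span_induction₂ (p := fun x y _ _ => x * y = y * x) ?_ ?_ ?_ ?_ ?_ ?_ ?_ hx hy
  · rintro x y ⟨i, rfl⟩ ⟨j, rfl⟩; exact hM.h_comm i j
  · intro y _; simp
  · intro x _; simp
  · intro x y z _ _ _ h1 h2; rw [add_mul, mul_add, h1, h2]
  · intro x y z _ _ _ h1 h2; rw [mul_add, add_mul, h1, h2]
  · intro r x y _ _ h1; rw [smul_mul_assoc, mul_smul_comm, h1]
  · intro r x y _ _ h1; rw [mul_smul_comm, smul_mul_assoc, h1]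

private lemma span_entry_const (hM : IsAssocScheme M) {N : Matrix V V ℂ}
    (hN : N ∈ Submodule.span ℂ (Set.range M)) {v w v' w' : V} {j : Fin (d + 1)}
    (h1 : M j v w = 1) (h2 : M j v' w' = 1) : N v w = N v' w' := by
  refine Submodule.span_induction (p := fun N _ => N v w = N v' w') ?_ ?_ ?_ ?_ hN
  · rintro x ⟨i, rfl⟩
    by_cases hij : i = j
    · subst hij; rw [h1, h2]
    · rw [entry_eq_zero_of_ne hM h1 hij, entry_eq_zero_of_ne hM h2 hij]
  · simp
  · intro x y _ _ hx hy
    simp only [Matrix.add_apply, hx, hy]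
  · intro r x _ hx
    simp only [Matrix.smul_apply, hx]

private lemma J_mem (hM : IsAssocScheme M) :
    (Matrix.of (fun _ _ => (1 : ℂ)) : Matrix V V ℂ) ∈ Submodule.span ℂ (Set.range M) := by
  rw [← hM.h_sum]
  exact Submodule.sum_mem _ fun j _ => Submodule.subset_span ⟨j, rfl⟩

private lemma span_rowsum_eq_colsum (hM : IsAssocScheme M) {N : Matrix V V ℂ}
    (hN : N ∈ Submodule.span ℂ (Set.range M)) (v w : V) :
    ∑ k, N v k = ∑ k, N k w := by
  have hcomm := span_comm hM hN (J_mem hM)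
  have h2 : (N * (Matrix.of (fun _ _ => (1 : ℂ)) : Matrix V V ℂ)) v w
      = ((Matrix.of (fun _ _ => (1 : ℂ)) : Matrix V V ℂ) * N) v w := by rw [hcomm]
  simpa [Matrix.mul_apply] using h2

private lemma exp_mem_span (hM : IsAssocScheme M) {x : Matrix V V ℂ}
    (hx : x ∈ Submodule.span ℂ (Set.range M)) :
    NormedSpace.exp x ∈ Submodule.span ℂ (Set.range M) := by
  letI : SeminormedRing (Matrix V V ℂ) := Matrix.linftyOpSemiNormedRing
  letI : NormedRing (Matrix V V ℂ) := Matrix.linftyOpNormedRing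
  letI : NormedAlgebra ℂ (Matrix V V ℂ) := Matrix.linftyOpNormedAlgebra
  have hs := NormedSpace.exp_series_hasSum_exp' (𝕂 := ℂ) x
  have hpow : ∀ n : ℕ, x ^ n ∈ Submodule.span ℂ (Set.range M) := by
    intro n
    induction n with
    | zero =>
      rw [pow_zero, ← hM.h_zero]
      exact Submodule.subset_span ⟨0, rfl⟩
    | succ n ih =>
      rw [pow_succ]
      exact span_mul_mem hM ih hx
  have hclosed : IsClosed (Submodule.span ℂ (Set.range M) : Set (Matrix V V ℂ)) :=
    Submodule.closed_of_finiteDimensional _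
  refine hclosed.mem_of_tendsto hs.tendsto_sum_nat (Filter.Eventually.of_forall fun s => ?_)
  exact Submodule.sum_mem _ fun n _ => Submodule.smul_mem _ _ (hpow n)

private lemma exp_mulVec_ones {x : Matrix V V ℂ} (hx : x *ᵥ (fun _ => (1 : ℂ)) = 0) :
    NormedSpace.exp x *ᵥ (fun _ => (1 : ℂ)) = fun _ => (1 : ℂ) := by
  letI : SeminormedRing (Matrix V V ℂ) := Matrix.linftyOpSemiNormedRing
  letI : NormedRing (Matrix V V ℂ) := Matrix.linftyOpNormedRing
  letI : NormedAlgebra ℂ (Matrix V V ℂ) := Matrix.linftyOpNormedAlgebra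
  have hs := NormedSpace.exp_series_hasSum_exp' (𝕂 := ℂ) x
  let L : Matrix V V ℂ →ₗ[ℂ] (V → ℂ) :=
    { toFun := fun N => N *ᵥ (fun _ => (1 : ℂ))
      map_add' := fun N N' => Matrix.add_mulVec N N' _
      map_smul' := fun r N => Matrix.smul_mulVec r N _ }
  have hLc : Continuous L := L.continuous_of_finiteDimensional
  have hs2 : HasSum (fun n : ℕ => L ((n.factorial : ℂ)⁻¹ • x ^ n)) (L (NormedSpace.exp x)) :=
    hs.map L.toAddMonoidHom hLc
  have hterm : (fun n : ℕ => L ((n.factorial : ℂ)⁻¹ • x ^ n))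
      = fun n : ℕ => if n = 0 then (fun _ => (1 : ℂ)) else (0 : V → ℂ) := by
    funext n
    cases n with
    | zero =>
      simp [L, Matrix.one_mulVec]
    | succ n =>
      have : x ^ (n + 1) *ᵥ (fun _ => (1 : ℂ)) = 0 := by
        rw [pow_succ, ← Matrix.mulVec_mulVec, hx, Matrix.mulVec_zero]
      simp [L, Matrix.smul_mulVec, this]
  rw [hterm] at hs2
  have hs3 : HasSum (fun n : ℕ => if n = 0 then (fun _ => (1 : ℂ)) else (0 : V → ℂ))
      (fun _ => (1 : ℂ)) := hasSum_ite_eq 0 _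
  exact hs2.unique hs3

end Aux

/-- If the adjacency matrix of an oriented graph lies in the Bose–Mesner
algebra of an association scheme and PST occurs from `a` to `b ≠ a` at time `τ > 0`, then
`U(τ) = A_j` for some `j ≠ 0`, where `A_j` is the permutation matrix of a fixed-point-free
permutation commuting with `A`; in particular the phase is `1`. -/
theorem stmt0 {V : Type*} [Fintype V] [DecidableEq V] {d : ℕ}
    (M : Fin (d + 1) → Matrix V V ℂ) (hM : IsAssocScheme M)
    (A : Matrix V V ℂ) (hA : IsOrientedAdjMatrix A)
    (hAin : A ∈ Submodule.span ℂ (Set.range M))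
    (a b : V) (hab : a ≠ b) (τ : ℝ) (hτ : 0 < τ) (hpst : PST A a b τ) :
    ∃ (j : Fin (d + 1)) (g : Equiv.Perm V),
      j ≠ 0 ∧
      M j = g.permMatrix ℂ ∧
      (∀ v : V, g v ≠ v) ∧
      transU A τ = M j ∧
      M j * A = A * M j ∧
      (transU A τ) *ᵥ (Pi.single a 1) = (Pi.single b 1 : V → ℂ) := by
  classical
  obtain ⟨lam, hlam, hvec⟩ := hpst
  set U := transU A τ with hUdef
  have hxmem : ((τ : ℂ) • A) ∈ Submodule.span ℂ (Set.range M) := Submodule.smul_mem _ _ hAin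
  have hUmem : U ∈ Submodule.span ℂ (Set.range M) := exp_mem_span hM hxmem
  -- column a of U
  have hcol : ∀ v, U v a = if v = b then lam else 0 := by
    intro v
    have h := congrFun hvec v
    simp only [Matrix.mulVec_single_one, Matrix.col_apply, mul_one, Pi.smul_apply, Pi.single_apply,
      smul_eq_mul] at h
    rw [h]
    split <;> simp
  have hUba : U b a = lam := by rw [hcol b]; simp
  -- unitarity
  have hAH : ((τ : ℂ) • A)ᴴ = -((τ : ℂ) • A) := by
    have hAreal : Aᴴ = Aᵀ := by
      ext i j
      rw [Matrix.conjTranspose_apply, Matrix.transpose_apply]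
      rcases hA.2 j i with h | h | h <;> rw [h] <;> simp
    rw [Matrix.conjTranspose_smul, hAreal, hA.1]
    simp [Complex.conj_ofReal]
  have hunit : U * Uᴴ = 1 := by
    have h1 : Uᴴ = NormedSpace.exp (((τ : ℂ) • A)ᴴ) :=
      (Matrix.exp_conjTranspose _).symm
    rw [hUdef]
    show NormedSpace.exp ((τ : ℂ) • A) * (transU A τ)ᴴ = 1
    rw [show (transU A τ)ᴴ = Uᴴ from rfl, h1, hAH,
      ← Matrix.exp_add_of_commute (m := V) (𝔸 := ℂ) _ _ (Commute.neg_right (Commute.refl _)),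
      add_neg_cancel, NormedSpace.exp_zero]
  have hrowb : ∀ w, w ≠ a → U b w = 0 := by
    intro w hw
    have h1 : (U * Uᴴ) b b = 1 := by rw [hunit]; simp
    rw [Matrix.mul_apply] at h1
    have h2 : ∑ k, Complex.normSq (U b k) = 1 := by
      have h3 : ∑ k, ((Complex.normSq (U b k) : ℂ)) = 1 := by
        rw [← h1]
        refine Finset.sum_congr rfl fun k _ => ?_
        rw [Matrix.conjTranspose_apply, Complex.star_def]
        exact (Complex.mul_conj _).symm
      exact_mod_cast h3
    have ha1 : Complex.normSq (U b a) = 1 := by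
      rw [hUba, Complex.normSq_eq_norm_sq, hlam]; norm_num
    have hrest : ∑ k ∈ Finset.univ.erase a, Complex.normSq (U b k) = 0 := by
      have h4 := Finset.add_sum_erase Finset.univ (fun k => Complex.normSq (U b k))
        (Finset.mem_univ a)
      linarith [h4, h2, ha1]
    have h5 := (Finset.sum_eq_zero_iff_of_nonneg
      (fun k _ => Complex.normSq_nonneg (U b k))).mp hrest w
      (Finset.mem_erase.mpr ⟨hw, Finset.mem_univ w⟩)
    exact Complex.normSq_eq_zero.mp h5
  -- the class of (b, a)
  obtain ⟨j0, hj0one, hj0zero⟩ := class_exists hM b a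
  have hj0ne : j0 ≠ 0 := by
    intro h
    rw [h, hM.h_zero, Matrix.one_apply_ne (Ne.symm hab)] at hj0one
    exact zero_ne_one hj0one
  -- U = lam • M j0
  have hUeq : U = lam • M j0 := by
    ext v w
    obtain ⟨i, hione, hizero⟩ := class_exists hM v w
    by_cases hij : i = j0
    · subst hij
      have hc := span_entry_const hM hUmem hione hj0one
      rw [Matrix.smul_apply, hione, hc, hUba, smul_eq_mul, mul_one]
    · have hMj0vw : M j0 v w = 0 := hizero j0 (Ne.symm hij)
      have hrow : ∑ k, M i b k = ∑ k, M i v k := by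
        rw [span_rowsum_eq_colsum hM (Submodule.subset_span ⟨i, rfl⟩) b w,
          ← span_rowsum_eq_colsum hM (Submodule.subset_span ⟨i, rfl⟩) v w]
      have hbcard : ((Finset.univ.filter fun k => M i b k = 1).card : ℂ)
          = ((Finset.univ.filter fun k => M i v k = 1).card : ℂ) := by
        rw [← sum01 _ _ (fun k _ => hM.h_entries i b k),
          ← sum01 _ _ (fun k _ => hM.h_entries i v k)]
        exact hrow
      have hvne : (Finset.univ.filter fun k => M i v k = 1).Nonempty :=
        ⟨w, Finset.mem_filter.mpr ⟨Finset.mem_univ w, hione⟩⟩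
      have hbne : (Finset.univ.filter fun k => M i b k = 1).Nonempty := by
        have hc : (Finset.univ.filter fun k => M i b k = 1).card
            = (Finset.univ.filter fun k => M i v k = 1).card := by exact_mod_cast hbcard
        exact Finset.card_pos.mp (by rw [hc]; exact Finset.card_pos.mpr hvne)
      obtain ⟨w', hw'⟩ := hbne
      have hw'1 : M i b w' = 1 := (Finset.mem_filter.mp hw').2
      have hw'a : w' ≠ a := by
        intro h
        have h0 : M i b w' = 0 := by
          rw [h]; exact entry_eq_zero_of_ne hM hj0one hij
        rw [h0] at hw'1
        exact zero_ne_one hw'1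
      have hc := span_entry_const hM hUmem hione hw'1
      rw [Matrix.smul_apply, hMj0vw, smul_zero, hc, hrowb w' hw'a]
  have hlamne : lam ≠ 0 := by
    intro h
    rw [h] at hlam
    simp at hlam
  -- column a of M j0
  have hMcol : ∀ v, M j0 v a = if v = b then 1 else 0 := by
    intro v
    have h := hcol v
    rw [hUeq, Matrix.smul_apply, smul_eq_mul] at h
    by_cases hv : v = b
    · simp only [hv, if_pos rfl] at h ⊢
      exact mul_left_cancel₀ hlamne (h.trans (mul_one lam).symm)
    · simp only [hv, if_neg hv] at h ⊢
      exact (mul_eq_zero.mp h).resolve_left hlamne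
  have hrowsum : ∀ v, ∑ k, M j0 v k = 1 := by
    intro v
    rw [span_rowsum_eq_colsum hM (Submodule.subset_span ⟨j0, rfl⟩) v a]
    simp [hMcol]
  have hcolsum : ∀ w, ∑ k, M j0 k w = 1 := fun w => by
    rw [← span_rowsum_eq_colsum hM (Submodule.subset_span ⟨j0, rfl⟩) a w]
    exact hrowsum a
  -- unique 1 in each row and column
  have hexrow : ∀ v, ∃! w, M j0 v w = 1 := by
    intro v
    have h := hrowsum v
    rw [sum01 _ _ (fun k _ => hM.h_entries j0 v k)] at h
    have hc : (Finset.univ.filter fun k => M j0 v k = 1).card = 1 := by exact_mod_cast h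
    obtain ⟨w, hw⟩ := Finset.card_eq_one.mp hc
    have hwmem : w ∈ Finset.univ.filter fun k => M j0 v k = 1 := by
      rw [hw]; exact Finset.mem_singleton_self w
    refine ⟨w, (Finset.mem_filter.mp hwmem).2, fun y hy => ?_⟩
    have : y ∈ Finset.univ.filter fun k => M j0 v k = 1 :=
      Finset.mem_filter.mpr ⟨Finset.mem_univ y, hy⟩
    rw [hw, Finset.mem_singleton] at this
    exact this
  have hexcol : ∀ w, ∃! v, M j0 v w = 1 := by
    intro w
    have h := hcolsum w
    rw [sum01 _ _ (fun k _ => hM.h_entries j0 k w)] at h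
    have hc : (Finset.univ.filter fun k => M j0 k w = 1).card = 1 := by exact_mod_cast h
    obtain ⟨v, hv⟩ := Finset.card_eq_one.mp hc
    have hvmem : v ∈ Finset.univ.filter fun k => M j0 k w = 1 := by
      rw [hv]; exact Finset.mem_singleton_self v
    refine ⟨v, (Finset.mem_filter.mp hvmem).2, fun y hy => ?_⟩
    have : y ∈ Finset.univ.filter fun k => M j0 k w = 1 :=
      Finset.mem_filter.mpr ⟨Finset.mem_univ y, hy⟩
    rw [hv, Finset.mem_singleton] at this
    exact this
  -- the permutation
  let f : V → V := fun v => (hexrow v).choose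
  have hf1 : ∀ v, M j0 v (f v) = 1 := fun v => (hexrow v).choose_spec.1
  have hfu : ∀ v w, M j0 v w = 1 → w = f v := fun v w h => (hexrow v).choose_spec.2 w h
  have hinj : Function.Injective f := by
    intro u v huv
    have h1 : M j0 u (f u) = 1 := hf1 u
    have h2 : M j0 v (f u) = 1 := by rw [huv]; exact hf1 v
    obtain ⟨z, _, hzu⟩ := hexcol (f u)
    rw [hzu u h1, hzu v h2]
  let g : Equiv.Perm V := Equiv.ofBijective f (Finite.injective_iff_bijective.mp hinj)
  have hgf : ∀ v, g v = f v := fun v => rfl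
  have hperm : M j0 = g.permMatrix ℂ := by
    ext v w
    rw [Equiv.Perm.permMatrix, PEquiv.toMatrix_toPEquiv_eq, Matrix.submatrix_apply, id, hgf v]
    by_cases h : f v = w
    · rw [h, Matrix.one_apply_eq]
      rw [← h]
      exact hf1 v
    · rw [Matrix.one_apply_ne h]
      rcases hM.h_entries j0 v w with h0 | h1
      · exact h0
      · exact absurd (hfu v w h1).symm h
  have hfpf : ∀ v, g v ≠ v := by
    intro v hgv
    have h1 : M j0 v v = 1 := by
      have := hf1 v
      rwa [show f v = v from hgv] at this
    have h0 : M j0 v v = 0 := entry_eq_zero_of_ne hM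
      (show M 0 v v = 1 by rw [hM.h_zero]; exact Matrix.one_apply_eq v) hj0ne
    rw [h0] at h1
    exact zero_ne_one h1
  -- lam = 1
  have hA1 : A *ᵥ (fun _ => (1 : ℂ)) = 0 := by
    funext v
    have h3 : ∑ k, A k v = - ∑ k, A v k := by
      rw [← Finset.sum_neg_distrib]
      refine Finset.sum_congr rfl fun k _ => ?_
      have := congrFun (congrFun hA.1 v) k
      simpa using this
    have h4 : ∑ k, A v k = - ∑ k, A v k :=
      (span_rowsum_eq_colsum hM hAin v v).trans h3
    have h1 : ∑ k, A v k = 0 := by linear_combination h4 / 2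
    simpa [Matrix.mulVec, dotProduct] using h1
  have hx1 : ((τ : ℂ) • A) *ᵥ (fun _ => (1 : ℂ)) = 0 := by
    rw [Matrix.smul_mulVec, hA1, smul_zero]
  have hU1 : U *ᵥ (fun _ => (1 : ℂ)) = fun _ => (1 : ℂ) := exp_mulVec_ones hx1
  have hlam1 : lam = 1 := by
    have h2 : ((M j0) *ᵥ (fun _ => (1 : ℂ))) a = 1 := by
      simpa [Matrix.mulVec, dotProduct] using hrowsum a
    have h := congrFun hU1 a
    rw [hUeq, Matrix.smul_mulVec] at h
    rw [Pi.smul_apply, h2, smul_eq_mul, mul_one] at h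
    exact h
  have hUMj : transU A τ = M j0 := by
    rw [← hUdef, hUeq, hlam1, one_smul]
  refine ⟨j0, g, hj0ne, hperm, hfpf, hUMj, ?_, ?_⟩
  · exact span_comm hM (Submodule.subset_span ⟨j0, rfl⟩) hAin
  · rw [hvec, hlam1, one_smul]
end

section
/- Let X be an oriented graph on a finite vertex set V whose adjacency matrix A lies in the Bose–Mesner algebra of an association scheme 𝒜 on V, let a be a vertex of X, and let τ > 0 be the smallest time at which perfect state transfer occurs from a to another vertex of X. Then: (a) U(τ) is a permutation matrix commuting with A whose underlying permutation maps S_a to itself and acts on S_a as a single cycle of length |S_a|; (b) the multiplicative order of the matrix U(τ) equals |S_a|; (c) |S_a| = |S_b| for every vertex b of X at which perfect state transfer to another vertex occurs. -/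
open Matrix

/-- `S_a`: the set of vertices `b` such that PST occurs from `a` to `b` at some positive time. -/
def Sset {V : Type*} [Fintype V] [DecidableEq V]
    (A : Matrix V V ℂ) (a : V) : Set V :=
  {b | ∃ t : ℝ, 0 < t ∧ PST A a b t}

namespace Stmt1Aux

variable {V : Type*} [Fintype V] [DecidableEq V]

/-! ### sums of 0/1 values -/

lemma sum01_card {ι : Type*} [Fintype ι] {f : ι → ℂ} (h01 : ∀ i, f i = 0 ∨ f i = 1) :
    ∑ i, f i = ((Finset.univ.filter fun i => f i = 1).card : ℂ) := by
  rw [← Finset.sum_filter_of_ne (p := fun i => f i = 1)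
    (fun x _ hx => (h01 x).resolve_left hx)]
  rw [Finset.sum_congr rfl (fun i hi => (Finset.mem_filter.mp hi).2)]
  simp

lemma exists_unique_of_sum01 {ι : Type*} [Fintype ι] {f : ι → ℂ}
    (h01 : ∀ i, f i = 0 ∨ f i = 1) (hs : ∑ i, f i = 1) : ∃! i, f i = 1 := by
  rw [sum01_card h01] at hs
  norm_cast at hs
  obtain ⟨i, hi⟩ := Finset.card_eq_one.mp hs
  refine ⟨i, ?_, fun j hj => ?_⟩
  · have : i ∈ Finset.univ.filter fun i => f i = 1 := by rw [hi]; exact Finset.mem_singleton_self i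
    exact (Finset.mem_filter.mp this).2
  · have : j ∈ ({i} : Finset ι) := by
      rw [← hi]; exact Finset.mem_filter.mpr ⟨Finset.mem_univ _, hj⟩
    exact Finset.mem_singleton.mp this

lemma sum01_ne_zero {ι : Type*} [Fintype ι] {f : ι → ℂ}
    (h01 : ∀ i, f i = 0 ∨ f i = 1) {i0 : ι} (h1 : f i0 = 1) : ∑ i, f i ≠ 0 := by
  rw [sum01_card h01]
  have : i0 ∈ Finset.univ.filter fun i => f i = 1 :=
    Finset.mem_filter.mpr ⟨Finset.mem_univ _, h1⟩
  have hpos : 0 < (Finset.univ.filter fun i => f i = 1).card := Finset.card_pos.mpr ⟨i0, this⟩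
  exact_mod_cast hpos.ne'

section
variable {V : Type*} [Fintype V] [DecidableEq V] {d : ℕ} {M : Fin (d + 1) → Matrix V V ℂ}

lemma expand_prod {V : Type*} [Fintype V] [DecidableEq V] {d : ℕ} (M : Fin (d + 1) → Matrix V V ℂ)
    (c c' : Fin (d+1) → ℂ) :
    (∑ j, c j • M j) * (∑ j', c' j' • M j') = ∑ j, ∑ j', (c j * c' j') • (M j * M j') := by
  rw [Finset.sum_mul]
  refine Finset.sum_congr rfl fun j _ => ?_
  rw [smul_mul_assoc, Finset.mul_sum, Finset.smul_sum]
  refine Finset.sum_congr rfl fun j' _ => ?_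
  rw [mul_smul_comm, smul_smul]

lemma class_exists (hM : IsAssocScheme M) (i k : V) : ∃! j, M j i k = 1 := by
  have hsum : ∑ j, M j i k = 1 := by
    have := congrFun (congrFun hM.h_sum i) k
    simpa [Matrix.sum_apply] using this
  exact exists_unique_of_sum01 (fun j => hM.h_entries j i k) hsum

lemma entry_eq_of_class (hM : IsAssocScheme M) {j j' : Fin (d+1)} {i k : V}
    (hj : M j i k = 1) : M j' i k = if j' = j then 1 else 0 := by
  split_ifs with h
  · rw [h]; exact hj
  · rcases hM.h_entries j' i k with h0 | h1
    · exact h0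
    · exact absurd ((class_exists hM i k).unique h1 hj) h

lemma const_on_class (hM : IsAssocScheme M) {N : Matrix V V ℂ}
    (hN : N ∈ Submodule.span ℂ (Set.range M)) {j : Fin (d+1)} {i k i' k' : V}
    (h1 : M j i k = 1) (h2 : M j i' k' = 1) : N i k = N i' k' := by
  obtain ⟨c, rfl⟩ := (Submodule.mem_span_range_iff_exists_fun ℂ).mp hN
  have e1 : (∑ j', c j' • M j') i k = ∑ j', c j' • M j' i k := by
    simp [Matrix.sum_apply]
  have e2 : (∑ j', c j' • M j') i' k' = ∑ j', c j' • M j' i' k' := by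
    simp [Matrix.sum_apply]
  rw [e1, e2]
  refine Finset.sum_congr rfl fun j' _ => ?_
  rw [entry_eq_of_class hM h1, entry_eq_of_class hM h2]

lemma J_mem (hM : IsAssocScheme M) :
    (Matrix.of fun _ _ => (1:ℂ)) ∈ Submodule.span ℂ (Set.range M) := by
  rw [← hM.h_sum]
  exact Submodule.sum_mem _ fun j _ => Submodule.subset_span ⟨j, rfl⟩

lemma one_mem (hM : IsAssocScheme M) : (1 : Matrix V V ℂ) ∈ Submodule.span ℂ (Set.range M) :=
  hM.h_zero ▸ Submodule.subset_span ⟨0, rfl⟩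

lemma span_comm (hM : IsAssocScheme M) {N N' : Matrix V V ℂ}
    (hN : N ∈ Submodule.span ℂ (Set.range M)) (hN' : N' ∈ Submodule.span ℂ (Set.range M)) :
    N * N' = N' * N := by
  obtain ⟨c, rfl⟩ := (Submodule.mem_span_range_iff_exists_fun ℂ).mp hN
  obtain ⟨c', rfl⟩ := (Submodule.mem_span_range_iff_exists_fun ℂ).mp hN'
  rw [expand_prod, expand_prod, Finset.sum_comm]
  refine Finset.sum_congr rfl fun j' _ => Finset.sum_congr rfl fun j _ => ?_
  rw [hM.h_comm j j', mul_comm (c j)]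

lemma span_mul_mem (hM : IsAssocScheme M) {N N' : Matrix V V ℂ}
    (hN : N ∈ Submodule.span ℂ (Set.range M)) (hN' : N' ∈ Submodule.span ℂ (Set.range M)) :
    N * N' ∈ Submodule.span ℂ (Set.range M) := by
  obtain ⟨c, rfl⟩ := (Submodule.mem_span_range_iff_exists_fun ℂ).mp hN
  obtain ⟨c', rfl⟩ := (Submodule.mem_span_range_iff_exists_fun ℂ).mp hN'
  rw [expand_prod]
  exact Submodule.sum_mem _ fun j _ => Submodule.sum_mem _ fun j' _ =>
    Submodule.smul_mem _ _ (hM.h_closed j j')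

lemma span_pow_mem (hM : IsAssocScheme M) {N : Matrix V V ℂ}
    (hN : N ∈ Submodule.span ℂ (Set.range M)) (n : ℕ) :
    N ^ n ∈ Submodule.span ℂ (Set.range M) := by
  induction n with
  | zero => rw [pow_zero]; exact one_mem hM
  | succ n ih => rw [pow_succ]; exact span_mul_mem hM ih hN

lemma class_meets_col (hM : IsAssocScheme M) {j : Fin (d+1)} {i k : V}
    (hj : M j i k = 1) (v : V) : ∃ l, M j l v = 1 := by
  have hcomm := span_comm hM (Submodule.subset_span ⟨j, rfl⟩) (J_mem hM)
  have hkey : ∑ l, M j i l = ∑ l, M j l v := by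
    have := congrFun (congrFun hcomm i) v
    simpa [Matrix.mul_apply] using this
  by_contra hno
  push_neg at hno
  have hz : ∀ l, M j l v = 0 := fun l => (hM.h_entries j l v).resolve_right (hno l)
  have h0 : ∑ l, M j i l = 0 := by rw [hkey]; simp [hz]
  exact sum01_ne_zero (fun l => hM.h_entries j i l) hj h0

lemma diag_one (hM : IsAssocScheme M) (i : V) : M 0 i i = 1 := by
  rw [hM.h_zero]; exact Matrix.one_apply_eq i

lemma diag_const (hM : IsAssocScheme M) {N : Matrix V V ℂ}
    (hN : N ∈ Submodule.span ℂ (Set.range M)) (i i' : V) : N i i = N i' i' :=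
  const_on_class hM hN (diag_one hM i) (diag_one hM i')

end
section
variable {V : Type*} [Fintype V] [DecidableEq V] {d : ℕ} {M : Fin (d + 1) → Matrix V V ℂ}

lemma U_hasSum (A : Matrix V V ℂ) (t : ℝ) :
    HasSum (fun n : ℕ => ((n.factorial : ℂ)⁻¹) • ((t:ℂ) • A) ^ n) (transU A t) := by
  letI : SeminormedRing (Matrix V V ℂ) := Matrix.linftyOpSemiNormedRing
  letI : NormedRing (Matrix V V ℂ) := Matrix.linftyOpNormedRing
  letI : NormedAlgebra ℂ (Matrix V V ℂ) := Matrix.linftyOpNormedAlgebra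
  have := NormedSpace.expSeries_hasSum_exp (𝕂 := ℂ) ((t:ℂ) • A)
  simp only [NormedSpace.expSeries_apply_eq] at this; exact this

lemma U_mem (hM : IsAssocScheme M) {A : Matrix V V ℂ}
    (hAin : A ∈ Submodule.span ℂ (Set.range M)) (t : ℝ) :
    transU A t ∈ Submodule.span ℂ (Set.range M) := by
  have hx : (t:ℂ) • A ∈ Submodule.span ℂ (Set.range M) := Submodule.smul_mem _ _ hAin
  have hcl : IsClosed (Submodule.span ℂ (Set.range M) : Set (Matrix V V ℂ)) := by
    letI : SeminormedRing (Matrix V V ℂ) := Matrix.linftyOpSemiNormedRing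
    letI : NormedRing (Matrix V V ℂ) := Matrix.linftyOpNormedRing
    letI : NormedAlgebra ℂ (Matrix V V ℂ) := Matrix.linftyOpNormedAlgebra
    exact Submodule.closed_of_finiteDimensional _
  refine hcl.mem_of_tendsto (U_hasSum A t).tendsto_sum_nat
    (Filter.Eventually.of_forall fun n => ?_)
  exact Submodule.sum_mem _ fun i _ => Submodule.smul_mem _ _ (span_pow_mem hM hx i)

lemma U_add (A : Matrix V V ℂ) (s t : ℝ) :
    transU A (s + t) = transU A s * transU A t := by
  unfold transU
  rw [show ((s+t:ℝ):ℂ) • A = (s:ℂ)•A + (t:ℂ)•A by push_cast; rw [add_smul]]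
  exact Matrix.exp_add_of_commute _ _
    (Commute.smul_left (Commute.smul_right (Commute.refl A) _) _)

lemma U_zero (A : Matrix V V ℂ) : transU A 0 = 1 := by
  unfold transU; norm_num

lemma U_nat (A : Matrix V V ℂ) (τ : ℝ) (k : ℕ) :
    transU A ((k : ℝ) * τ) = (transU A τ) ^ k := by
  induction k with
  | zero => simpa using U_zero A
  | succ k ih =>
    have h : ((k + 1 : ℕ) : ℝ) * τ = (k : ℝ) * τ + τ := by push_cast; ring
    rw [h, U_add, ih, pow_succ]

lemma U_neg_mul (A : Matrix V V ℂ) (t : ℝ) : transU A (-t) * transU A t = 1 := by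
  rw [← U_add]; norm_num [U_zero]

/-- row sums and column sums of `A` vanish -/
lemma A_rowsum (hM : IsAssocScheme M) {A : Matrix V V ℂ} (hA : IsOrientedAdjMatrix A)
    (hAin : A ∈ Submodule.span ℂ (Set.range M)) (i : V) : ∑ k, A i k = 0 := by
  have hcomm := span_comm hM hAin (J_mem hM)
  have key : ∑ l, A i l = ∑ l, A l i := by
    have := congrFun (congrFun hcomm i) i
    simpa [Matrix.mul_apply] using this
  have hskew : ∀ l, A l i = -A i l := by
    intro l
    have := congrFun (congrFun hA.1 i) l
    simpa [Matrix.transpose_apply] using this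
  have h2 : ∑ l, A l i = -∑ l, A i l := by
    rw [Finset.sum_congr rfl fun l _ => hskew l, Finset.sum_neg_distrib]
  have h3 : ∑ l, A i l = -∑ l, A i l := key.trans h2
  linear_combination h3 / 2

lemma A_colsum (hM : IsAssocScheme M) {A : Matrix V V ℂ} (hA : IsOrientedAdjMatrix A)
    (hAin : A ∈ Submodule.span ℂ (Set.range M)) (k : V) : ∑ i, A i k = 0 := by
  have hskew : ∀ l, A l k = -A k l := by
    intro l
    have := congrFun (congrFun hA.1 k) l
    simpa [Matrix.transpose_apply] using this
  calc ∑ i, A i k = -∑ l, A k l := by simp [hskew]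
  _ = 0 := by rw [A_rowsum hM hA hAin k, neg_zero]

end
section
variable {V : Type*} [Fintype V] [DecidableEq V] {d : ℕ} {M : Fin (d + 1) → Matrix V V ℂ}

lemma U_mulVec_one (hM : IsAssocScheme M) {A : Matrix V V ℂ} (hA : IsOrientedAdjMatrix A)
    (hAin : A ∈ Submodule.span ℂ (Set.range M)) (t : ℝ) :
    transU A t *ᵥ (fun _ => (1:ℂ)) = fun _ => (1:ℂ) := by
  letI : SeminormedRing (Matrix V V ℂ) := Matrix.linftyOpSemiNormedRing
  letI : NormedRing (Matrix V V ℂ) := Matrix.linftyOpNormedRing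
  letI : NormedAlgebra ℂ (Matrix V V ℂ) := Matrix.linftyOpNormedAlgebra
  set w : V → ℂ := fun _ => 1 with hw
  let φ : Matrix V V ℂ →ₗ[ℂ] (V → ℂ) :=
    { toFun := fun X => X *ᵥ w
      map_add' := fun X Y => Matrix.add_mulVec X Y w
      map_smul' := fun c X => Matrix.smul_mulVec c X w }
  let φL : Matrix V V ℂ →L[ℂ] (V → ℂ) := ⟨φ, LinearMap.continuous_of_finiteDimensional φ⟩
  have h1 := (U_hasSum A t).mapL φL
  have hx : ((t:ℂ) • A) *ᵥ w = 0 := by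
    ext i
    have : (((t:ℂ) • A) *ᵥ w) i = (t:ℂ) * ∑ k, A i k := by
      simp [Matrix.mulVec, dotProduct, Matrix.smul_apply, Finset.mul_sum, hw]
    rw [this, A_rowsum hM hA hAin i, mul_zero]
    rfl
  have h2 : HasSum (fun n : ℕ => ((n.factorial : ℂ)⁻¹) • (((t:ℂ) • A) ^ n *ᵥ w))
      (transU A t *ᵥ w) := by
    have : ∀ n : ℕ, φL (((n.factorial : ℂ)⁻¹) • ((t:ℂ) • A) ^ n)
        = ((n.factorial : ℂ)⁻¹) • (((t:ℂ) • A) ^ n *ᵥ w) := by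
      intro n; exact φL.map_smul _ _
    simp only [this] at h1; exact h1
  have h3 : HasSum (fun n : ℕ => ((n.factorial : ℂ)⁻¹) • (((t:ℂ) • A) ^ n *ᵥ w)) w := by
    have hz : ∀ n : ℕ, n ≠ 0 → ((n.factorial : ℂ)⁻¹) • (((t:ℂ) • A) ^ n *ᵥ w) = 0 := by
      intro n hn
      obtain ⟨m, rfl⟩ := Nat.exists_eq_succ_of_ne_zero hn
      rw [pow_succ, ← Matrix.mulVec_mulVec, hx, Matrix.mulVec_zero, smul_zero]
    have := hasSum_single (f := fun n : ℕ => ((n.factorial : ℂ)⁻¹) • (((t:ℂ) • A) ^ n *ᵥ w))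
      0 (fun n hn => hz n hn)
    simpa [Matrix.one_mulVec] using this
  exact h2.unique h3

lemma U_vecMul_one (hM : IsAssocScheme M) {A : Matrix V V ℂ} (hA : IsOrientedAdjMatrix A)
    (hAin : A ∈ Submodule.span ℂ (Set.range M)) (t : ℝ) :
    (fun _ => (1:ℂ)) ᵥ* transU A t = fun _ => (1:ℂ) := by
  letI : SeminormedRing (Matrix V V ℂ) := Matrix.linftyOpSemiNormedRing
  letI : NormedRing (Matrix V V ℂ) := Matrix.linftyOpNormedRing
  letI : NormedAlgebra ℂ (Matrix V V ℂ) := Matrix.linftyOpNormedAlgebra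
  set w : V → ℂ := fun _ => 1 with hw
  let φ : Matrix V V ℂ →ₗ[ℂ] (V → ℂ) :=
    { toFun := fun X => w ᵥ* X
      map_add' := fun X Y => Matrix.vecMul_add X Y w
      map_smul' := fun c X => by
        ext j
        simp [Matrix.vecMul, dotProduct, Matrix.smul_apply, Finset.mul_sum, mul_left_comm] }
  let φL : Matrix V V ℂ →L[ℂ] (V → ℂ) := ⟨φ, LinearMap.continuous_of_finiteDimensional φ⟩
  have h1 := (U_hasSum A t).mapL φL
  have hx : w ᵥ* ((t:ℂ) • A) = 0 := by
    ext k
    have : (w ᵥ* ((t:ℂ) • A)) k = (t:ℂ) * ∑ i, A i k := by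
      simp [Matrix.vecMul, dotProduct, Matrix.smul_apply, Finset.mul_sum, hw]
    rw [this, A_colsum hM hA hAin k, mul_zero]
    rfl
  have h2 : HasSum (fun n : ℕ => ((n.factorial : ℂ)⁻¹) • (w ᵥ* ((t:ℂ) • A) ^ n))
      (w ᵥ* transU A t) := by
    have : ∀ n : ℕ, φL (((n.factorial : ℂ)⁻¹) • ((t:ℂ) • A) ^ n)
        = ((n.factorial : ℂ)⁻¹) • (w ᵥ* ((t:ℂ) • A) ^ n) := by
      intro n; exact φL.map_smul _ _
    simp only [this] at h1; exact h1
  have h3 : HasSum (fun n : ℕ => ((n.factorial : ℂ)⁻¹) • (w ᵥ* ((t:ℂ) • A) ^ n)) w := by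
    have hz : ∀ n : ℕ, n ≠ 0 → ((n.factorial : ℂ)⁻¹) • (w ᵥ* ((t:ℂ) • A) ^ n) = 0 := by
      intro n hn
      obtain ⟨m, rfl⟩ := Nat.exists_eq_succ_of_ne_zero hn
      rw [pow_succ']
      rw [← Matrix.vecMul_vecMul, hx, Matrix.zero_vecMul, smul_zero]
    have := hasSum_single (f := fun n : ℕ => ((n.factorial : ℂ)⁻¹) • (w ᵥ* ((t:ℂ) • A) ^ n))
      0 (fun n hn => hz n hn)
    simpa [Matrix.vecMul_one] using this
  exact h2.unique h3

end
section
variable {V : Type*} [Fintype V] [DecidableEq V]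

lemma permMatrix_apply (g : Equiv.Perm V) (i j : V) :
    g.permMatrix ℂ i j = if g i = j then 1 else 0 := by
  simp [Equiv.Perm.permMatrix, PEquiv.toMatrix, Equiv.toPEquiv]

lemma permMatrix_mul (g h : Equiv.Perm V) :
    g.permMatrix ℂ * h.permMatrix ℂ = (h * g).permMatrix ℂ := by
  ext i j
  rw [Matrix.mul_apply]
  rw [Finset.sum_eq_single (g i)]
  · rw [permMatrix_apply, if_pos rfl, one_mul, permMatrix_apply, permMatrix_apply,
      Equiv.Perm.mul_apply]
  · intro k _ hk
    rw [permMatrix_apply, if_neg (fun h' => hk h'.symm), zero_mul]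
  · intro h'; exact absurd (Finset.mem_univ _) h'

lemma permMatrix_one : ((1 : Equiv.Perm V).permMatrix ℂ) = 1 := by
  ext i j
  rw [permMatrix_apply, Matrix.one_apply]
  by_cases h : i = j <;> simp [h]

lemma permMatrix_pow (g : Equiv.Perm V) (n : ℕ) :
    (g.permMatrix ℂ) ^ n = (g ^ n).permMatrix ℂ := by
  induction n with
  | zero => rw [pow_zero, pow_zero, permMatrix_one]
  | succ n ih => rw [pow_succ, ih, permMatrix_mul, ← pow_succ']

lemma permMatrix_injective {g h : Equiv.Perm V} (hgh : g.permMatrix ℂ = h.permMatrix ℂ) :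
    g = h := by
  ext i
  have := congrFun (congrFun hgh i) (g i)
  rw [permMatrix_apply, permMatrix_apply, if_pos rfl] at this
  by_cases hc : h i = g i
  · exact hc.symm
  · rw [if_neg hc] at this; exact absurd this one_ne_zero

lemma permMatrix_mulVec_single (g : Equiv.Perm V) (v : V) :
    g.permMatrix ℂ *ᵥ Pi.single v 1 = Pi.single (g.symm v) 1 := by
  ext i
  simp only [Matrix.mulVec_single_one, Matrix.col_apply]
  rw [permMatrix_apply, Pi.single_apply]
  by_cases hgi : g i = v
  · rw [if_pos hgi, if_pos (by rw [← hgi, Equiv.symm_apply_apply])]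
  · rw [if_neg hgi, if_neg (fun h => hgi (by rw [h, Equiv.apply_symm_apply]))]

end
section
variable {V : Type*} [Fintype V] [DecidableEq V] {d : ℕ} {M : Fin (d + 1) → Matrix V V ℂ}

lemma U_colsum (hM : IsAssocScheme M) {A : Matrix V V ℂ} (hA : IsOrientedAdjMatrix A)
    (hAin : A ∈ Submodule.span ℂ (Set.range M)) (t : ℝ) (k : V) :
    ∑ l, transU A t l k = 1 := by
  have := congrFun (U_vecMul_one hM hA hAin t) k
  simpa [Matrix.vecMul, dotProduct] using this

lemma U_rowsum (hM : IsAssocScheme M) {A : Matrix V V ℂ} (hA : IsOrientedAdjMatrix A)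
    (hAin : A ∈ Submodule.span ℂ (Set.range M)) (t : ℝ) (i : V) :
    ∑ k, transU A t i k = 1 := by
  have := congrFun (U_mulVec_one hM hA hAin t) i
  simpa [Matrix.mulVec, dotProduct] using this

/-- Core lemma: if at time `t` the column of `v` of `U(t)` is a unimodular multiple of a
standard basis vector, then `U(t)` is a permutation matrix (with scalar exactly 1). -/
lemma transfer_perm (hM : IsAssocScheme M) {A : Matrix V V ℂ} (hA : IsOrientedAdjMatrix A)
    (hAin : A ∈ Submodule.span ℂ (Set.range M)) {t : ℝ} {v c : V} {lam : ℂ}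
    (hcol : transU A t *ᵥ Pi.single v 1 = lam • (Pi.single c 1 : V → ℂ)) :
    ∃ g : Equiv.Perm V, transU A t = g.permMatrix ℂ ∧ lam = 1 ∧ g.symm v = c := by
  set U := transU A t with hUdef
  have hUmem : U ∈ Submodule.span ℂ (Set.range M) := U_mem hM hAin t
  have colsum : ∀ k, ∑ l, U l k = 1 := U_colsum hM hA hAin t
  have rowsum : ∀ i, ∑ k, U i k = 1 := U_rowsum hM hA hAin t
  have hcole : ∀ l, U l v = lam * (if l = c then 1 else 0) := by
    intro l
    have := congrFun hcol l
    simpa [Matrix.mulVec_single, Pi.single_apply, Pi.smul_apply, smul_eq_mul] using this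
  have hlam : lam = 1 := by
    have h1 : ∑ l, U l v = lam := by
      rw [Finset.sum_congr rfl fun l _ => hcole l, ← Finset.mul_sum]
      simp
    rw [colsum v] at h1
    exact h1.symm
  have hcole1 : ∀ l, U l v = if l = c then 1 else 0 := by
    intro l; rw [hcole l, hlam, one_mul]
  have h01 : ∀ i k, U i k = 0 ∨ U i k = 1 := by
    intro i k
    obtain ⟨j, hj, -⟩ := class_exists hM i k
    obtain ⟨l, hl⟩ := class_meets_col hM hj v
    have heq : U i k = U l v := const_on_class hM hUmem hj hl
    rw [heq, hcole1 l]
    split_ifs <;> simp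
  have hcolunique : ∀ k, ∃! l, U l k = 1 := fun k =>
    exists_unique_of_sum01 (fun l => h01 l k) (colsum k)
  choose σ hσ using hcolunique
  have hinj : Function.Injective σ := by
    intro k k' he
    have hrow : ∃! m, U (σ k) m = 1 :=
      exists_unique_of_sum01 (fun m => h01 (σ k) m) (rowsum (σ k))
    exact (hrow.unique (hσ k).1 (by rw [he]; exact (hσ k').1))
  let e : Equiv.Perm V := Equiv.ofBijective σ (Finite.injective_iff_bijective.mp hinj)
  have he_app : ∀ k, e k = σ k := fun k => rfl
  refine ⟨e.symm, ?_, hlam, ?_⟩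
  · ext i k
    rw [permMatrix_apply]
    by_cases hik : σ k = i
    · rw [if_pos (by rw [Equiv.symm_apply_eq, he_app, hik]), ← hik]
      exact (hσ k).1
    · rw [if_neg (fun hh => hik (by rw [← he_app, ← (Equiv.symm_apply_eq e).mp hh]))]
      rcases h01 i k with h0 | h1
      · exact h0
      · exact absurd ((hσ k).2 i h1).symm hik
  · rw [Equiv.symm_symm, he_app]
    have h1 : U (σ v) v = 1 := (hσ v).1
    rw [hcole1] at h1
    by_cases hc : σ v = c
    · exact hc
    · rw [if_neg hc] at h1; exact absurd h1 zero_ne_one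

/-- if `U(s)` is a permutation matrix fixing some vertex, the permutation is the identity -/
lemma perm_id_of_fixed (hM : IsAssocScheme M) {A : Matrix V V ℂ}
    (hAin : A ∈ Submodule.span ℂ (Set.range M)) {s : ℝ} {h : Equiv.Perm V}
    (hUs : transU A s = h.permMatrix ℂ) {v : V} (hv : h v = v) : h = 1 := by
  have hmem : transU A s ∈ Submodule.span ℂ (Set.range M) := U_mem hM hAin s
  rw [hUs] at hmem
  have hvv : h.permMatrix ℂ v v = 1 := by rw [permMatrix_apply, if_pos hv]
  have hall : ∀ i, h.permMatrix ℂ i i = 1 := by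
    intro i
    have := diag_const hM hmem i v
    rw [hvv] at this
    exact this
  ext i
  have := hall i
  rw [permMatrix_apply] at this
  by_cases hc : h i = i
  · simpa using hc
  · rw [if_neg hc] at this; exact absurd this zero_ne_one

end
end Stmt1Aux
open Stmt1Aux

/-- if `τ > 0` is the smallest time at which PST occurs from `a` to another
vertex, then (a) `U(τ)` is a permutation matrix commuting with `A` whose permutation maps `S_a`
to itself and acts on it as a single cycle of length `|S_a|`; (b) the multiplicative order of
`U(τ)` is `|S_a|`; (c) `|S_b| = |S_a|` for every vertex `b` at which PST to another vertex
occurs. -/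
theorem stmt1 {V : Type*} [Fintype V] [DecidableEq V] {d : ℕ}
    (M : Fin (d + 1) → Matrix V V ℂ) (hM : IsAssocScheme M)
    (A : Matrix V V ℂ) (hA : IsOrientedAdjMatrix A)
    (hAin : A ∈ Submodule.span ℂ (Set.range M))
    (a : V) (τ : ℝ) (hτ : 0 < τ)
    (hpst : ∃ b, b ≠ a ∧ PST A a b τ)
    (hmin : ∀ t : ℝ, 0 < t → (∃ b, b ≠ a ∧ PST A a b t) → τ ≤ t) :
    (∃ g : Equiv.Perm V,
        transU A τ = g.permMatrix ℂ ∧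
        transU A τ * A = A * transU A τ ∧
        Set.MapsTo g (Sset A a) (Sset A a) ∧
        (∀ b ∈ Sset A a, ∀ c ∈ Sset A a, ∃ k : ℕ, g^[k] b = c)) ∧
    orderOf (transU A τ) = (Sset A a).ncard ∧
    (∀ b : V, (∃ c, c ≠ b ∧ ∃ t : ℝ, 0 < t ∧ PST A b c t) →
      (Sset A b).ncard = (Sset A a).ncard) := by
  classical
  obtain ⟨b0, hb0ne, hpst0⟩ := hpst
  obtain ⟨lam0, hlam0, hcol0⟩ := hpst0
  obtain ⟨g, hUg, hlam01, hgb0⟩ := transfer_perm hM hA hAin hcol0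
  set q : Equiv.Perm V := g⁻¹ with hqdef
  set m : ℕ := orderOf q with hmdef
  have hm : 0 < m := orderOf_pos q
  have hqm : q ^ m = 1 := by rw [hmdef]; exact pow_orderOf_eq_one q
  have hsymm_pow : ∀ (n : ℕ) (v : V), (g ^ n).symm v = (q ^ n) v := by
    intro n v
    rw [hqdef, inv_pow]
    rfl
  have hUk : ∀ k : ℕ, transU A ((k : ℝ) * τ) = (g ^ k).permMatrix ℂ := by
    intro k; rw [U_nat, hUg, permMatrix_pow]
  have diag_key : ∀ (k : ℕ) (v : V), (q ^ k) v = v → g ^ k = 1 := by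
    intro k v hv
    rw [hqdef, inv_pow] at hv
    have hgv : (g ^ k) v = v := by
      calc (g ^ k) v = (g ^ k) ((g ^ k)⁻¹ v) := by rw [hv]
        _ = v := Equiv.apply_symm_apply _ _
    exact perm_id_of_fixed hM hAin (hUk k) hgv
  have no_small : ∀ s : ℝ, 0 < s → s < τ →
      ∀ h : Equiv.Perm V, transU A s = h.permMatrix ℂ → False := by
    intro s hs hsτ h hUs
    by_cases hfix : h a = a
    · have h1 : h = 1 := perm_id_of_fixed hM hAin hUs hfix
      have hUs1 : transU A s = 1 := by rw [hUs, h1, Stmt1Aux.permMatrix_one]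
      have hτs : transU A (τ - s) = transU A τ := by
        have h2 := U_add A (τ - s) s
        rw [show τ - s + s = τ by ring] at h2
        rw [h2, hUs1, mul_one]
      have hp : PST A a b0 (τ - s) := ⟨lam0, hlam0, by rw [hτs]; exact hcol0⟩
      have := hmin (τ - s) (by linarith) ⟨b0, hb0ne, hp⟩
      linarith
    · have hne : h.symm a ≠ a := by
        intro hh
        exact hfix (by conv_lhs => rw [← hh, Equiv.apply_symm_apply])
      have hp : PST A a (h.symm a) s :=
        ⟨1, by simp, by rw [hUs, permMatrix_mulVec_single, one_smul]⟩
      have := hmin s hs ⟨h.symm a, hne, hp⟩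
      linarith
  have hUτinv : transU A (-τ) = (g⁻¹).permMatrix ℂ := by
    have h1 : transU A (-τ) * transU A τ = 1 := U_neg_mul A τ
    have h2 : transU A τ * (g⁻¹).permMatrix ℂ = 1 := by
      rw [hUg, Stmt1Aux.permMatrix_mul, inv_mul_cancel, Stmt1Aux.permMatrix_one]
    calc transU A (-τ) = transU A (-τ) * (transU A τ * (g⁻¹).permMatrix ℂ) := by
          rw [h2, mul_one]
      _ = (transU A (-τ) * transU A τ) * (g⁻¹).permMatrix ℂ := by rw [mul_assoc]
      _ = (g⁻¹).permMatrix ℂ := by rw [h1, one_mul]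
  have hUnegk : ∀ k : ℕ, transU A (-((k:ℝ) * τ)) = ((g⁻¹) ^ k).permMatrix ℂ := by
    intro k
    rw [show (-((k:ℝ) * τ)) = (k:ℝ) * (-τ) by ring, U_nat, hUτinv, permMatrix_pow]
  have perm_times : ∀ t : ℝ, 0 < t → ∀ h : Equiv.Perm V, transU A t = h.permMatrix ℂ →
      ∃ k : ℕ, t = (k:ℝ) * τ := by
    intro t ht h hUt
    set n : ℕ := ⌊t / τ⌋₊ with hn
    have hfl1 : (n : ℝ) ≤ t / τ := Nat.floor_le (le_of_lt (div_pos ht hτ))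
    have hfl2 : t / τ < (n:ℝ) + 1 := Nat.lt_floor_add_one _
    have h0r : 0 ≤ t - n * τ := by
      have := (le_div_iff₀ hτ).mp hfl1
      linarith
    have hrτ : t - n * τ < τ := by
      have h3 := (div_lt_iff₀ hτ).mp hfl2
      have h4 : ((n:ℝ) + 1) * τ = n * τ + τ := by ring
      linarith
    rcases eq_or_lt_of_le h0r with heq | hlt
    · exact ⟨n, by linarith⟩
    · exfalso
      have hU' : transU A (t - n * τ) = (((g⁻¹) ^ n) * h).permMatrix ℂ := by
        have h3 := U_add A t (-((n:ℝ) * τ))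
        rw [show t + -((n:ℝ)*τ) = t - n*τ by ring] at h3
        rw [h3, hUt, hUnegk, Stmt1Aux.permMatrix_mul]
      exact no_small _ hlt hrτ _ hU'
  have pst_struct : ∀ (v b : V) (t : ℝ), 0 < t → PST A v b t → ∃ k : ℕ, b = (q ^ k) v := by
    intro v b t ht hp
    obtain ⟨lam, hlam, hcol⟩ := hp
    obtain ⟨h, hUh, -, hhb⟩ := transfer_perm hM hA hAin hcol
    obtain ⟨k, hk⟩ := perm_times t ht h hUh
    have hhg : h = g ^ k := permMatrix_injective (by rw [← hUh, hk, hUk])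
    exact ⟨k, by rw [← hhb, hhg, hsymm_pow]⟩
  have pst_exists : ∀ (v : V) (k : ℕ),
      0 < (((k + m : ℕ)):ℝ) * τ ∧ PST A v ((q ^ k) v) (((k + m : ℕ):ℝ) * τ) := by
    intro v k
    constructor
    · have hkm : 0 < k + m := Nat.lt_of_lt_of_le hm (Nat.le_add_left m k)
      have h5 : (0:ℝ) < ((k + m : ℕ):ℝ) := by exact_mod_cast hkm
      exact mul_pos h5 hτ
    · refine ⟨1, by simp, ?_⟩
      rw [hUk, permMatrix_mulVec_single, one_smul, hsymm_pow]
      congr 1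
      rw [pow_add, hqm, mul_one]
  have hSset : ∀ v : V,
      Sset A v = (((Finset.range m).image fun k => (q ^ k) v : Finset V) : Set V) := by
    intro v
    ext b
    constructor
    · rintro ⟨t, ht, hp⟩
      obtain ⟨k, rfl⟩ := pst_struct v b t ht hp
      refine Finset.mem_coe.mpr (Finset.mem_image.mpr
        ⟨k % m, Finset.mem_range.mpr (Nat.mod_lt _ hm), ?_⟩)
      rw [hmdef, pow_mod_orderOf]
    · intro hb
      obtain ⟨k, hk, rfl⟩ := Finset.mem_image.mp (Finset.mem_coe.mp hb)
      exact ⟨_, (pst_exists v k).1, (pst_exists v k).2⟩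
  have orbit_inj : ∀ v : V, Set.InjOn (fun k => (q ^ k) v) ↑(Finset.range m) := by
    intro v i hi j hj hij
    rw [Finset.mem_coe, Finset.mem_range] at hi hj
    have key : ∀ i j : ℕ, i < m → j < m → i ≤ j → (q ^ i) v = (q ^ j) v → i = j := by
      intro i j hi hj hij hqe
      have h1 : (q ^ (j - i)) ((q ^ i) v) = (q ^ i) v := by
        rw [← Equiv.Perm.mul_apply, ← pow_add, Nat.sub_add_cancel hij, ← hqe]
      have h2 : g ^ (j - i) = 1 := diag_key _ _ h1
      have h3 : q ^ (j - i) = 1 := by rw [hqdef, inv_pow, h2, inv_one]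
      have h4 : m ∣ (j - i) := by rw [hmdef]; exact orderOf_dvd_of_pow_eq_one h3
      have h5 : j - i = 0 := by
        by_contra hne
        exact absurd (Nat.le_of_dvd (Nat.pos_of_ne_zero hne) h4) (by omega)
      omega
    rcases le_total i j with h | h
    · exact key i j hi hj h hij
    · exact (key j i hj hi h hij.symm).symm
  have hncard : ∀ v : V, (Sset A v).ncard = m := by
    intro v
    rw [hSset v, Set.ncard_coe_finset, Finset.card_image_of_injOn (orbit_inj v),
      Finset.card_range]
  have hPk : ∀ k : ℕ, (transU A τ) ^ k = 1 ↔ q ^ k = 1 := by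
    intro k
    constructor
    · intro hk
      have hp : (g ^ k).permMatrix ℂ = ((1 : Equiv.Perm V)).permMatrix ℂ := by
        rw [← permMatrix_pow, ← hUg, hk, Stmt1Aux.permMatrix_one]
      have h6 := permMatrix_injective hp
      rw [hqdef, inv_pow, h6, inv_one]
    · intro hk
      have hgk : g ^ k = 1 := by
        have h7 : (g ^ k)⁻¹ = 1 := by rw [← inv_pow, ← hqdef]; exact hk
        rwa [inv_eq_one] at h7
      rw [hUg, permMatrix_pow, hgk, Stmt1Aux.permMatrix_one]
  have horder : orderOf (transU A τ) = m := by
    rw [hmdef]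
    exact orderOf_eq_orderOf_iff.mpr hPk
  have hgq : g = q ^ (m - 1) := by
    have h8 : q ^ (m - 1) * q = 1 := by rw [← pow_succ, Nat.sub_add_cancel hm, hqm]
    have h9 : q ^ (m-1) = q⁻¹ := eq_inv_of_mul_eq_one_left h8
    rw [h9, hqdef, inv_inv]
  refine ⟨⟨g, hUg, ?_, ?_, ?_⟩, by rw [horder, hncard a], fun b _ => by rw [hncard, hncard]⟩
  · exact ((Commute.smul_left (Commute.refl A) ((τ:ℝ):ℂ)).exp_left)
  · intro b hb
    rw [hSset a] at hb ⊢
    obtain ⟨k, hk, rfl⟩ := Finset.mem_image.mp (Finset.mem_coe.mp hb)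
    have h10 : g ((q ^ k) a) = (q ^ ((m - 1) + k)) a := by
      rw [pow_add, Equiv.Perm.mul_apply, ← hgq]
    rw [h10]
    refine Finset.mem_coe.mpr (Finset.mem_image.mpr
      ⟨((m-1)+k) % m, Finset.mem_range.mpr (Nat.mod_lt _ hm), ?_⟩)
    rw [hmdef, pow_mod_orderOf]
  · intro b hb c hc
    rw [hSset a] at hb hc
    obtain ⟨i, hi, rfl⟩ := Finset.mem_image.mp (Finset.mem_coe.mp hb)
    obtain ⟨j, hj, rfl⟩ := Finset.mem_image.mp (Finset.mem_coe.mp hc)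
    obtain ⟨m', hm'⟩ := Nat.exists_eq_succ_of_ne_zero hm.ne'
    refine ⟨i + m' * j, ?_⟩
    rw [Equiv.Perm.iterate_eq_pow]
    have hg_pow : g ^ (i + m' * j) = q ^ (m' * (i + m' * j)) := by
      rw [hgq, show m - 1 = m' by omega, ← pow_mul]
    rw [hg_pow, ← Equiv.Perm.mul_apply, ← pow_add]
    have hmod : q ^ (m' * (i + m' * j) + i) = q ^ j := by
      apply pow_eq_pow_iff_modEq.mpr
      rw [← hmdef]
      rw [Nat.modEq_iff_dvd]
      refine ⟨(j:ℤ) * (1 - m') - i, ?_⟩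
      push_cast [hm']
      ring
    rw [hmod]
end

section
/- Let X be an oriented graph on a finite vertex set V whose adjacency matrix A lies in the Bose–Mesner algebra of an association scheme 𝒜 on V. If perfect state transfer occurs between some pair of distinct vertices of X at time τ > 0, then there exist vertices a_1, …, a_s such that V is the disjoint union of the sets S_{a_1}, …, S_{a_s}, and |S_{a_j}| = |V|/s for every j = 1, …, s. -/
open Matrix

section Aux
variable {V : Type*} [Fintype V] [DecidableEq V] {d : ℕ}

/-- sum of 0/1 complex values equals the cardinality of the set of 1s. -/
lemma sum01_card {ι : Type*} [Fintype ι] (f : ι → ℂ) (h : ∀ i, f i = 0 ∨ f i = 1) :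
    ∑ i, f i = ((Finset.univ.filter (fun i => f i = 1)).card : ℂ) := by
  classical
  rw [Finset.card_filter, Nat.cast_sum]
  refine Finset.sum_congr rfl fun i _ => ?_
  rcases h i with h' | h' <;> simp [h']

lemma sum01_eq_one {ι : Type*} [Fintype ι] (f : ι → ℂ) (h : ∀ i, f i = 0 ∨ f i = 1)
    (hs : ∑ i, f i = 1) : ∃! i, f i = 1 := by
  classical
  rw [sum01_card f h] at hs
  have : (Finset.univ.filter (fun i => f i = 1)).card = 1 := by exact_mod_cast hs
  obtain ⟨a, ha⟩ := Finset.card_eq_one.mp this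
  refine ⟨a, ?_, fun b hb => ?_⟩
  · have := Finset.mem_singleton_self a
    rw [← ha] at this
    exact (Finset.mem_filter.mp this).2
  · have : b ∈ Finset.univ.filter (fun i => f i = 1) := Finset.mem_filter.mpr ⟨Finset.mem_univ _, hb⟩
    rw [ha, Finset.mem_singleton] at this
    exact this
end Aux
section Scheme
variable {V : Type*} [Fintype V] [DecidableEq V] {d : ℕ}
variable {M : Fin (d + 1) → Matrix V V ℂ}

lemma uniqueClass (hM : IsAssocScheme M) (x y : V) : ∃! j, M j x y = 1 := by
  have hs : ∑ j, M j x y = 1 := by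
    have := congrFun (congrFun hM.h_sum x) y
    simpa [Matrix.sum_apply] using this
  exact sum01_eq_one _ (fun j => hM.h_entries j x y) hs

/-- the unique class containing the pair (x,y). -/
noncomputable def classOf (M : Fin (d + 1) → Matrix V V ℂ) (x y : V) : Fin (d + 1) :=
  if h : ∃ j, M j x y = 1 then h.choose else 0

lemma classOf_spec (hM : IsAssocScheme M) (x y : V) : M (classOf M x y) x y = 1 := by
  have h : ∃ j, M j x y = 1 := (uniqueClass hM x y).exists
  rw [classOf, dif_pos h]
  exact h.choose_spec

lemma classOf_eq (hM : IsAssocScheme M) {j : Fin (d+1)} {x y : V} (h : M j x y = 1) :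
    j = classOf M x y :=
  (uniqueClass hM x y).unique h (classOf_spec hM x y)

lemma apply_ne_classOf (hM : IsAssocScheme M) {j : Fin (d+1)} {x y : V}
    (h : j ≠ classOf M x y) : M j x y = 0 := by
  rcases hM.h_entries j x y with h' | h'
  · exact h'
  · exact absurd (classOf_eq hM h') h

/-- entries of an element of the Bose-Mesner algebra depend only on the class. -/
lemma entry_of_mem_span (hM : IsAssocScheme M) {N : Matrix V V ℂ}
    (hN : N ∈ Submodule.span ℂ (Set.range M)) :
    ∃ c : Fin (d + 1) → ℂ, ∀ x y, N x y = c (classOf M x y) := by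
  rw [Submodule.mem_span_range_iff_exists_fun] at hN
  obtain ⟨c, hc⟩ := hN
  refine ⟨c, fun x y => ?_⟩
  have : N x y = ∑ j, c j * M j x y := by
    rw [← hc]
    simp [Matrix.sum_apply]
  rw [this, Finset.sum_eq_single (classOf M x y)]
  · rw [classOf_spec hM x y, mul_one]
  · intro j _ hj
    rw [apply_ne_classOf hM hj, mul_zero]
  · intro h; exact absurd (Finset.mem_univ _) h

end Scheme
section Scheme2
variable {V : Type*} [Fintype V] [DecidableEq V] {d : ℕ}
variable {M : Fin (d + 1) → Matrix V V ℂ}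

lemma span_mul_closed (hM : IsAssocScheme M) {N₁ N₂ : Matrix V V ℂ}
    (h1 : N₁ ∈ Submodule.span ℂ (Set.range M)) (h2 : N₂ ∈ Submodule.span ℂ (Set.range M)) :
    N₁ * N₂ ∈ Submodule.span ℂ (Set.range M) := by
  induction h1 using Submodule.span_induction with
  | mem x hx =>
    induction h2 using Submodule.span_induction with
    | mem y hy =>
      obtain ⟨i, rfl⟩ := hx; obtain ⟨j, rfl⟩ := hy
      exact hM.h_closed i j
    | zero => simpa using Submodule.zero_mem _
    | add y z _ _ hy hz => rw [mul_add]; exact Submodule.add_mem _ hy hz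
    | smul a y _ hy => rw [mul_smul_comm]; exact Submodule.smul_mem _ a hy
  | zero => simpa using Submodule.zero_mem _
  | add x y _ _ hx hy => rw [add_mul]; exact Submodule.add_mem _ hx hy
  | smul a x _ hx => rw [smul_mul_assoc]; exact Submodule.smul_mem _ a hx

lemma col_nonempty (hM : IsAssocScheme M) (i : Fin (d+1)) {y : V} (y' : V)
    (h : ∃ x, M i x y = 1) : ∃ x, M i x y' = 1 := by
  classical
  set J : Matrix V V ℂ := Matrix.of (fun _ _ => (1:ℂ)) with hJ
  have hJmem : J ∈ Submodule.span ℂ (Set.range M) := by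
    rw [hJ, ← hM.h_sum]
    exact Submodule.sum_mem _ (fun j _ => Submodule.subset_span ⟨j, rfl⟩)
  have hNmem : J * M i ∈ Submodule.span ℂ (Set.range M) :=
    span_mul_closed hM hJmem (Submodule.subset_span ⟨i, rfl⟩)
  obtain ⟨c, hc⟩ := entry_of_mem_span hM hNmem
  have hentry : ∀ z : V, (J * M i) z z = ∑ x, M i x z := by
    intro z
    simp [Matrix.mul_apply, hJ]
  have hcls : ∀ z : V, (J * M i) z z = c 0 := by
    intro z
    rw [hc z z]
    congr 1
    refine ((uniqueClass hM z z).unique (classOf_spec hM z z) ?_)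
    simp [hM.h_zero, Matrix.one_apply_eq]
  have hsum : ∑ x, M i x y = ∑ x, M i x y' := by
    rw [← hentry y, ← hentry y', hcls y, hcls y']
  -- transfer existence via cardinalities
  have h1 := sum01_card (fun x => M i x y) (fun x => hM.h_entries i x y)
  have h2 := sum01_card (fun x => M i x y') (fun x => hM.h_entries i x y')
  rw [h1, h2] at hsum
  have hcard : (Finset.univ.filter (fun x => M i x y = 1)).card
      = (Finset.univ.filter (fun x => M i x y' = 1)).card := by exact_mod_cast hsum
  obtain ⟨x, hx⟩ := h
  have : x ∈ Finset.univ.filter (fun x => M i x y = 1) := Finset.mem_filter.mpr ⟨Finset.mem_univ _, hx⟩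
  have hpos : 0 < (Finset.univ.filter (fun x => M i x y' = 1)).card := by
    rw [← hcard]
    exact Finset.card_pos.mpr ⟨x, this⟩
  obtain ⟨x', hx'⟩ := Finset.card_pos.mp hpos
  exact ⟨x', (Finset.mem_filter.mp hx').2⟩

lemma span_col_zero (hM : IsAssocScheme M) {N : Matrix V V ℂ}
    (hN : N ∈ Submodule.span ℂ (Set.range M)) (a : V) (h : ∀ x, N x a = 0) : N = 0 := by
  obtain ⟨c, hc⟩ := entry_of_mem_span hM hN
  ext x y
  have hex : ∃ x0, M (classOf M x y) x0 a = 1 :=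
    col_nonempty hM _ a ⟨x, classOf_spec hM x y⟩
  obtain ⟨x0, hx0⟩ := hex
  have : c (classOf M x y) = 0 := by
    have h1 := hc x0 a
    rw [← classOf_eq hM hx0] at h1
    rw [← h1]; exact h x0
  rw [hc x y, this]; rfl

end Scheme2
section TransU
variable {V : Type*} [Fintype V] [DecidableEq V] {d : ℕ}
variable {M : Fin (d + 1) → Matrix V V ℂ} {A : Matrix V V ℂ}

lemma transU_add (A : Matrix V V ℂ) (s t : ℝ) :
    transU A (s + t) = transU A s * transU A t := by
  rw [transU, transU, transU]
  have h1 : ((s + t : ℝ) : ℂ) • A = (s : ℂ) • A + (t : ℂ) • A := by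
    push_cast
    rw [add_smul]
  rw [h1]
  exact Matrix.exp_add_of_commute _ _ (by
    apply Commute.smul_left
    apply Commute.smul_right
    exact Commute.refl A)

lemma transU_zero (A : Matrix V V ℂ) : transU A 0 = 1 := by
  rw [transU]
  norm_num

lemma transU_neg_mul (A : Matrix V V ℂ) (t : ℝ) : transU A (-t) * transU A t = 1 := by
  rw [← transU_add, neg_add_cancel, transU_zero]

lemma transU_star (hA : IsOrientedAdjMatrix A) (t : ℝ) :
    star (transU A t) = transU A (-t) := by
  have hAH : Aᴴ = -A := by
    have h2 := hA.2
    rw [← hA.1]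
    ext x y
    rcases h2 y x with h | h | h <;> simp [Matrix.conjTranspose_apply, Matrix.transpose_apply, h]
  show (transU A t)ᴴ = _
  rw [transU, transU, ← Matrix.exp_conjTranspose]
  congr 1
  rw [Matrix.conjTranspose_smul, hAH]
  simp only [Complex.star_def, Complex.conj_ofReal]
  push_cast
  module

lemma transU_transpose (hA : IsOrientedAdjMatrix A) (t : ℝ) :
    (transU A t)ᵀ = transU A (-t) := by
  rw [transU, transU, ← Matrix.exp_transpose]
  congr 1
  rw [Matrix.transpose_smul, hA.1]
  push_cast
  module

/-- entries of the transition matrix are real. -/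
lemma transU_conj_entry (hA : IsOrientedAdjMatrix A) (t : ℝ) (x y : V) :
    (starRingEnd ℂ) (transU A t x y) = transU A t x y := by
  have h1 : star (transU A t) y x = (transU A t)ᵀ y x := by
    rw [transU_star hA, transU_transpose hA]
  simpa [Matrix.conjTranspose_apply, Matrix.transpose_apply] using h1

lemma transU_mem_span (hM : IsAssocScheme M)
    (hAin : A ∈ Submodule.span ℂ (Set.range M)) (t : ℝ) :
    transU A t ∈ Submodule.span ℂ (Set.range M) := by
  letI : SeminormedRing (Matrix V V ℂ) := Matrix.linftyOpSemiNormedRing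
  letI : NormedRing (Matrix V V ℂ) := Matrix.linftyOpNormedRing
  letI : NormedAlgebra ℂ (Matrix V V ℂ) := Matrix.linftyOpNormedAlgebra
  set B := Submodule.span ℂ (Set.range M) with hB
  have hone : (1 : Matrix V V ℂ) ∈ B := by
    rw [← hM.h_zero]
    exact Submodule.subset_span ⟨0, rfl⟩
  have hxB : (t : ℂ) • A ∈ B := Submodule.smul_mem _ _ hAin
  have hpow : ∀ n : ℕ, ((t : ℂ) • A) ^ n ∈ B := by
    intro n
    induction n with
    | zero => simpa using hone
    | succ n ih => rw [pow_succ]; exact span_mul_closed hM ih hxB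
  have hclosed : IsClosed (B : Set (Matrix V V ℂ)) := Submodule.closed_of_finiteDimensional B
  have hsum := NormedSpace.exp_series_hasSum_exp' (𝕂 := ℂ) ((t : ℂ) • A)
  rw [transU]
  exact hclosed.mem_of_tendsto hsum (Filter.Eventually.of_forall fun s =>
    Submodule.sum_mem _ fun n _ => Submodule.smul_mem _ _ (hpow n))

end TransU
section Key
variable {V : Type*} [Fintype V] [DecidableEq V] {d : ℕ}
variable {M : Fin (d + 1) → Matrix V V ℂ} {A : Matrix V V ℂ}

lemma key (hM : IsAssocScheme M) (hA : IsOrientedAdjMatrix A)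
    (hAin : A ∈ Submodule.span ℂ (Set.range M)) {t : ℝ} {μ : ℂ} {a b : V}
    (hμ : ‖μ‖ = 1)
    (hW : transU A t *ᵥ Pi.single a 1 = μ • (Pi.single b 1 : V → ℂ)) :
    transU A t = μ • M (classOf M b a) ∧
    (∀ y, ∃! x, M (classOf M b a) x y = 1) ∧
    (∀ x, ∃! y, M (classOf M b a) x y = 1) := by
  classical
  set W := transU A t with hWdef
  set i := classOf M b a with hi
  have hμ0 : μ ≠ 0 := by intro h; rw [h] at hμ; simp at hμ
  have hμ1 : (starRingEnd ℂ) μ * μ = 1 := by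
    have h1 : Complex.normSq μ = 1 := by
      have := Complex.sq_norm μ
      rw [hμ] at this
      simpa using this.symm
    have h2 := Complex.mul_conj μ
    rw [h1] at h2
    rw [mul_comm]
    simpa using h2
  have hcol : ∀ x, W x a = μ * (if x = b then 1 else 0) := by
    intro x
    have h1 := congrFun hW x
    have h2 : (W *ᵥ Pi.single a 1) x = W x a := by
      simp [Matrix.mulVec, dotProduct, Pi.single_apply]
    rw [h2] at h1
    rw [h1]
    simp [Pi.single_apply]
  have hWmem : W ∈ Submodule.span ℂ (Set.range M) := transU_mem_span hM hAin t
  obtain ⟨c, hc⟩ := entry_of_mem_span hM hWmem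
  have hWba : W b a = μ := by rw [hcol b]; simp
  have hci : c i = μ := by rw [hi, ← hc b a, hWba]
  -- the matrix W - μ • M i has zero column a
  have hzero : ∀ x, (W - μ • M i) x a = 0 := by
    intro x
    by_cases hxb : x = b
    · rw [Matrix.sub_apply, Matrix.smul_apply, hxb, hWba, hi, classOf_spec hM b a]
      simp
    · have hWxa : W x a = 0 := by rw [hcol x, if_neg hxb, mul_zero]
      have hMix : M i x a = 0 := by
        rcases hM.h_entries i x a with h | h
        · exact h
        · exfalso
          have hca := classOf_eq hM h
          have : W x a = c i := by rw [hc x a, ← hca]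
          rw [hWxa, hci] at this
          exact hμ0 this.symm
      simp [Matrix.sub_apply, hWxa, hMix]
  have hsub : W - μ • M i ∈ Submodule.span ℂ (Set.range M) :=
    Submodule.sub_mem _ hWmem (Submodule.smul_mem _ _ (Submodule.subset_span ⟨i, rfl⟩))
  have Weq : W = μ • M i := by
    have := span_col_zero hM hsub a hzero
    rwa [sub_eq_zero] at this
  refine ⟨Weq, ?_, ?_⟩
  · -- column uniqueness
    intro y
    have hunit : star W * W = 1 := by
      rw [hWdef, transU_star hA, transU_neg_mul]
    have hsum1 : ∑ x, (starRingEnd ℂ) (W x y) * W x y = 1 := by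
      have h1 := congrFun (congrFun hunit y) y
      simpa [Matrix.mul_apply, Matrix.star_apply, Matrix.one_apply_eq] using h1
    have hterm : ∀ x, (starRingEnd ℂ) (W x y) * W x y = M i x y := by
      intro x
      have hWxy : W x y = μ * M i x y := by rw [Weq]; simp
      rw [hWxy]
      rcases hM.h_entries i x y with h | h
      · simp [h]
      · simp only [h, mul_one]
        exact hμ1
    rw [Finset.sum_congr rfl (fun x _ => hterm x)] at hsum1
    exact sum01_eq_one _ (fun x => hM.h_entries i x y) hsum1
  · -- row uniqueness
    intro x
    have hunit : W * star W = 1 := by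
      rw [hWdef, transU_star hA, ← transU_add, add_neg_cancel, transU_zero]
    have hsum1 : ∑ y, W x y * (starRingEnd ℂ) (W x y) = 1 := by
      have h1 := congrFun (congrFun hunit x) x
      simpa [Matrix.mul_apply, Matrix.star_apply, Matrix.one_apply_eq] using h1
    have hterm : ∀ y, W x y * (starRingEnd ℂ) (W x y) = M i x y := by
      intro y
      have hWxy : W x y = μ * M i x y := by rw [Weq]; simp
      rw [hWxy]
      rcases hM.h_entries i x y with h | h
      · simp [h]
      · simp only [h, mul_one]
        rw [mul_comm]
        exact hμ1
    rw [Finset.sum_congr rfl (fun y _ => hterm y)] at hsum1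
    exact sum01_eq_one _ (fun y => hM.h_entries i x y) hsum1

end Key
section Dyn
variable {V : Type*} [Fintype V] [DecidableEq V] {d : ℕ}
variable {M : Fin (d + 1) → Matrix V V ℂ} {A : Matrix V V ℂ}

lemma mulVec_single_entry (W : Matrix V V ℂ) (a x : V) :
    (W *ᵥ Pi.single a 1) x = W x a := by
  simp [Matrix.mulVec, dotProduct, Pi.single_apply]

/-- if PST occurs from `a` to `b` at time `t`, then from any vertex `a'` PST occurs
to the unique `b'` in class `classOf b a` over `a'`. -/
lemma step (hM : IsAssocScheme M) (hA : IsOrientedAdjMatrix A)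
    (hAin : A ∈ Submodule.span ℂ (Set.range M)) {t : ℝ} {μ : ℂ} {a b : V}
    (hμ : ‖μ‖ = 1)
    (hW : transU A t *ᵥ Pi.single a 1 = μ • (Pi.single b 1 : V → ℂ)) (a' : V) :
    ∃ b', transU A t *ᵥ Pi.single a' 1 = μ • (Pi.single b' 1 : V → ℂ) ∧
      M (classOf M b a) b' a' = 1 := by
  obtain ⟨Weq, hcolu, _⟩ := key hM hA hAin hμ hW
  obtain ⟨b', hb', hb'u⟩ := hcolu a'
  refine ⟨b', ?_, hb'⟩
  funext x
  rw [mulVec_single_entry, Weq]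
  by_cases hx : x = b'
  · subst hx
    simp [hb', Pi.single_apply]
  · have : M (classOf M b a) x a' = 0 := by
      rcases hM.h_entries (classOf M b a) x a' with h | h
      · exact h
      · exact absurd (hb'u x h) hx
    simp [this, Pi.single_apply, hx]

lemma conj_mu (hA : IsOrientedAdjMatrix A) {t : ℝ} {μ : ℂ} {a b : V}
    (hW : transU A t *ᵥ Pi.single a 1 = μ • (Pi.single b 1 : V → ℂ)) :
    (starRingEnd ℂ) μ = μ := by
  have h1 : transU A t b a = μ := by
    have := congrFun hW b
    rw [mulVec_single_entry] at this
    rw [this]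
    simp
  rw [← h1]
  exact transU_conj_entry hA t b a

lemma period_exists (hM : IsAssocScheme M) (hA : IsOrientedAdjMatrix A)
    (hAin : A ∈ Submodule.span ℂ (Set.range M)) {τ : ℝ} (hτ : 0 < τ)
    (hpst : ∃ a b : V, a ≠ b ∧ PST A a b τ) :
    ∃ T : ℝ, 0 < T ∧ ∀ x : V, transU A T *ᵥ Pi.single x 1 = Pi.single x 1 := by
  classical
  obtain ⟨a, b, _, μ, hμ, hW⟩ := hpst
  have hstep := step hM hA hAin hμ hW
  choose g hg hgM using hstep
  have ginj : Function.Injective g := by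
    intro a1 a2 h12
    obtain ⟨_, hcolu, hrowu⟩ := key hM hA hAin hμ hW
    obtain ⟨y0, hy0, hy0u⟩ := hrowu (g a1)
    have e1 := hy0u a1 (hgM a1)
    have e2 := hy0u a2 (by rw [h12]; exact hgM a2)
    rw [e1, e2]
  have gbij : Function.Bijective g := Finite.injective_iff_bijective.mp ginj
  set e : Equiv.Perm V := Equiv.ofBijective g gbij with he
  have hge : ∀ x, e x = g x := fun x => rfl
  set m := orderOf e with hm
  have hmpos : 0 < m := orderOf_pos e
  have iter : ∀ (k : ℕ) (x : V),
      transU A (k * τ) *ᵥ Pi.single x 1 = (μ ^ k) • (Pi.single ((e ^ k) x) 1 : V → ℂ) := by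
    intro k
    induction k with
    | zero =>
      intro x
      have h0 : ((0:ℕ):ℝ) * τ = 0 := by norm_num
      rw [h0, transU_zero, Matrix.one_mulVec, pow_zero, pow_zero, one_smul]
      simp
    | succ k ih =>
      intro x
      have h1 : ((k + 1 : ℕ) : ℝ) * τ = (k : ℕ) * τ + τ := by push_cast; ring
      rw [h1, transU_add, ← Matrix.mulVec_mulVec, hg x, Matrix.mulVec_smul, ih (g x),
        smul_smul]
      have hx : (e ^ (k+1)) x = (e ^ k) (g x) := by
        rw [pow_succ, Equiv.Perm.mul_apply, hge]
      rw [hx, pow_succ, mul_comm (μ ^ k) μ]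
  have hμ2 : μ ^ 2 = 1 := by
    have h1 : (starRingEnd ℂ) μ * μ = 1 := by
      have hn : Complex.normSq μ = 1 := by
        have := Complex.sq_norm μ
        rw [hμ] at this
        simpa using this.symm
      have h2 := Complex.mul_conj μ
      rw [hn] at h2
      rw [mul_comm]
      simpa using h2
    rw [conj_mu hA hW] at h1
    rw [sq]
    exact h1
  refine ⟨((2 * m : ℕ) : ℝ) * τ, by positivity, fun x => ?_⟩
  have h2 := iter (2 * m) x
  have hμm : μ ^ (2 * m) = 1 := by rw [pow_mul, hμ2, one_pow]
  have hem : (e ^ (2 * m)) x = x := by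
    rw [mul_comm 2 m, pow_mul, hm, pow_orderOf_eq_one, one_pow, Equiv.Perm.one_apply]
  rw [h2, hμm, hem, one_smul]

end Dyn
section EquivRel
variable {V : Type*} [Fintype V] [DecidableEq V] {d : ℕ}
variable {M : Fin (d + 1) → Matrix V V ℂ} {A : Matrix V V ℂ}

lemma Sset_trans {a b c : V} (hb : b ∈ Sset A a) (hc : c ∈ Sset A b) : c ∈ Sset A a := by
  obtain ⟨t1, h1, ν1, hν1, hw1⟩ := hb
  obtain ⟨t2, h2, ν2, hν2, hw2⟩ := hc
  refine ⟨t2 + t1, by linarith, ν2 * ν1, by rw [norm_mul, hν1, hν2, one_mul], ?_⟩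
  rw [transU_add, ← Matrix.mulVec_mulVec, hw1, Matrix.mulVec_smul, hw2, smul_smul,
    mul_comm ν1 ν2]

lemma periodic_mult (hT : ∀ x : V, transU A T *ᵥ Pi.single x 1 = Pi.single x 1) :
    ∀ (k : ℕ) (x : V), transU A (k * T) *ᵥ Pi.single x 1 = Pi.single x 1 := by
  intro k
  induction k with
  | zero =>
    intro x
    have h0 : ((0:ℕ):ℝ) * T = 0 := by norm_num
    rw [h0, transU_zero, Matrix.one_mulVec]
  | succ k ih =>
    intro x
    have h1 : ((k + 1 : ℕ) : ℝ) * T = (k : ℕ) * T + T := by push_cast; ring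
    rw [h1, transU_add, ← Matrix.mulVec_mulVec, hT x, ih x]

lemma Sset_refl {T : ℝ} (hTpos : 0 < T)
    (hT : ∀ x : V, transU A T *ᵥ Pi.single x 1 = Pi.single x 1) (a : V) : a ∈ Sset A a :=
  ⟨T, hTpos, 1, by simp, by rw [hT a, one_smul]⟩

lemma Sset_symm {T : ℝ} (hTpos : 0 < T)
    (hT : ∀ x : V, transU A T *ᵥ Pi.single x 1 = Pi.single x 1) {a b : V}
    (hb : b ∈ Sset A a) : a ∈ Sset A b := by
  obtain ⟨t, ht, ν, hν, hw⟩ := hb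
  have hν0 : ν ≠ 0 := by intro h; rw [h] at hν; simp at hν
  obtain ⟨k, hk⟩ := Archimedean.arch t hTpos
  have hk' : t < (k + 1 : ℕ) * T := by
    have : (k : ℝ) * T = k • T := by simp
    push_cast
    calc t ≤ k * T := by rw [this]; exact hk
    _ < (k+1) * T := by nlinarith
  set s := ((k + 1 : ℕ) : ℝ) * T - t with hs
  have hspos : 0 < s := by simp only [hs]; linarith
  have hkey : transU A s *ᵥ (ν • (Pi.single b 1 : V → ℂ)) = Pi.single a 1 := by
    rw [← hw, Matrix.mulVec_mulVec, ← transU_add]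
    have : s + t = ((k + 1 : ℕ) : ℝ) * T := by rw [hs]; ring
    rw [this]
    exact periodic_mult hT (k+1) a
  refine ⟨s, hspos, ν⁻¹, by rw [norm_inv, hν]; norm_num, ?_⟩
  rw [Matrix.mulVec_smul] at hkey
  rw [← hkey, smul_smul, inv_mul_cancel₀ hν0, one_smul]

lemma Sset_card_le (hM : IsAssocScheme M) (hA : IsOrientedAdjMatrix A)
    (hAin : A ∈ Submodule.span ℂ (Set.range M)) (a a' : V) :
    (Sset A a).ncard ≤ (Sset A a').ncard := by
  classical
  set φ : V → V := fun b => if h : ∃ x, M (classOf M b a) x a' = 1 then h.choose else b with hφ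
  have main : ∀ b ∈ Sset A a, M (classOf M b a) (φ b) a' = 1 ∧ φ b ∈ Sset A a' := by
    intro b hb
    obtain ⟨t, ht, ν, hν, hw⟩ := hb
    obtain ⟨Weq, hcolu, _⟩ := key hM hA hAin hν hw
    obtain ⟨x0, hx0, hx0u⟩ := hcolu a'
    have hex : ∃ x, M (classOf M b a) x a' = 1 := ⟨x0, hx0⟩
    have hM1 : M (classOf M b a) (φ b) a' = 1 := by
      simp only [hφ, dif_pos hex]
      exact hex.choose_spec
    refine ⟨hM1, t, ht, ν, hν, ?_⟩
    funext x
    rw [mulVec_single_entry, Weq]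
    by_cases hx : x = φ b
    · subst hx
      simp [hM1, Pi.single_apply]
    · have hx0' : M (classOf M b a) x a' = 0 := by
        rcases hM.h_entries (classOf M b a) x a' with h | h
        · exact h
        · exact absurd ((hx0u x h).trans (hx0u (φ b) hM1).symm) hx
      simp [hx0', Pi.single_apply, hx]
  refine Set.ncard_le_ncard_of_injOn φ (fun b hb => (main b hb).2) ?_ (Set.toFinite _)
  intro b1 hb1 b2 hb2 heq
  have h1 := (main b1 hb1).1
  have h2 := (main b2 hb2).1
  rw [heq] at h1
  have hI : classOf M b1 a = classOf M b2 a :=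
    (classOf_eq hM h1).trans (classOf_eq hM h2).symm
  obtain ⟨t, ht, ν, hν, hw⟩ := hb1
  obtain ⟨_, hcolu, _⟩ := key hM hA hAin hν hw
  obtain ⟨x0, _, hx0u⟩ := hcolu a
  have e1 : b1 = x0 := hx0u b1 (classOf_spec hM b1 a)
  have e2 : b2 = x0 := hx0u b2 (by rw [hI]; exact classOf_spec hM b2 a)
  rw [e1, e2]

lemma Sset_card_eq (hM : IsAssocScheme M) (hA : IsOrientedAdjMatrix A)
    (hAin : A ∈ Submodule.span ℂ (Set.range M)) (a a' : V) :
    (Sset A a).ncard = (Sset A a').ncard :=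
  le_antisymm (Sset_card_le hM hA hAin a a') (Sset_card_le hM hA hAin a' a)

end EquivRel

/-- if PST occurs between some pair of distinct vertices at time `τ > 0`,
then `V` is the disjoint union of sets `S_{a_1}, …, S_{a_s}`, each of size `|V|/s`. -/
theorem stmt3 {V : Type*} [Fintype V] [DecidableEq V] {d : ℕ}
    (M : Fin (d + 1) → Matrix V V ℂ) (hM : IsAssocScheme M)
    (A : Matrix V V ℂ) (hA : IsOrientedAdjMatrix A)
    (hAin : A ∈ Submodule.span ℂ (Set.range M))
    (τ : ℝ) (hτ : 0 < τ)
    (hpst : ∃ a b : V, a ≠ b ∧ PST A a b τ) :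
    ∃ (s : ℕ) (vert : Fin s → V),
      (Set.univ : Set V) = ⋃ j : Fin s, Sset A (vert j) ∧
      (Pairwise fun i j : Fin s => Disjoint (Sset A (vert i)) (Sset A (vert j))) ∧
      (∀ j : Fin s, s * (Sset A (vert j)).ncard = Fintype.card V) := by
  classical
  obtain ⟨T, hTpos, hT⟩ := period_exists hM hA hAin hτ hpst
  -- the PST relation is an equivalence relation
  have requiv : Equivalence (fun a b : V => b ∈ Sset A a) :=
    ⟨fun a => Sset_refl hTpos hT a,
     fun {a b} h => Sset_symm hTpos hT h,
     fun {a b c} h1 h2 => Sset_trans h1 h2⟩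
  set St : Setoid V := ⟨fun a b => b ∈ Sset A a, requiv⟩ with hSt
  haveI : DecidableRel St.r := fun _ _ => Classical.dec _
  haveI : Fintype (Quotient St) := Quotient.fintype St
  set s := Fintype.card (Quotient St) with hs
  set e : Fin s ≃ Quotient St := (Fintype.equivFin (Quotient St)).symm with he
  set vert : Fin s → V := fun j => (e j).out with hvert
  have hmem : ∀ (j : Fin s) (v : V), v ∈ Sset A (vert j) ↔ Quotient.mk St v = e j := by
    intro j v
    constructor
    · intro h
      have h1 : Quotient.mk St (vert j) = Quotient.mk St v := Quotient.sound h
      rw [← h1, hvert]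
      exact Quotient.out_eq _
    · intro h
      have h1 : Quotient.mk St (vert j) = Quotient.mk St v := by
        rw [h, hvert]
        exact (Quotient.out_eq _).symm ▸ rfl
      exact Quotient.exact h1
  refine ⟨s, vert, ?_, ?_, ?_⟩
  · ext v
    simp only [Set.mem_univ, true_iff, Set.mem_iUnion]
    exact ⟨e.symm (Quotient.mk St v), (hmem _ v).mpr (e.apply_symm_apply _).symm⟩
  · intro i j hij
    rw [Set.disjoint_left]
    intro v hvi hvj
    rw [hmem i v] at hvi
    rw [hmem j v] at hvj
    exact hij (e.injective (hvi.symm.trans hvj))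
  · intro j
    have hfib : ∀ j' : Fin s, Sset A (vert j')
        = ↑(Finset.univ.filter (fun v => Quotient.mk St v = e j')) := by
      intro j'
      ext v
      simp [hmem j' v]
    have hcardV : Fintype.card V = ∑ j' : Fin s, (Sset A (vert j')).ncard := by
      have h1 := Finset.card_eq_sum_card_fiberwise
        (f := fun v : V => e.symm (Quotient.mk St v)) (s := Finset.univ) (t := Finset.univ)
        (fun v _ => Finset.mem_univ _)
      rw [Finset.card_univ] at h1
      rw [h1]
      refine Finset.sum_congr rfl fun j' _ => ?_
      rw [hfib j', Set.ncard_coe_finset]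
      congr 1
      apply Finset.filter_congr
      intro v _
      exact ⟨fun h => by rw [← h]; exact (e.apply_symm_apply _).symm, fun h => by rw [h]; simp⟩
    have hconst : ∀ j' : Fin s, (Sset A (vert j')).ncard = (Sset A (vert j)).ncard :=
      fun j' => Sset_card_eq hM hA hAin (vert j') (vert j)
    rw [hcardV, Finset.sum_congr rfl (fun j' _ => hconst j'), Finset.sum_const,
      Finset.card_univ, Fintype.card_fin, smul_eq_mul]
end

section
/- Let G be a finite group and let Cay(G, C) be an oriented normal Cayley graph on G (so C is a union of conjugacy classes of G with C ∩ C^{−1} = ∅). For vertices a, b ∈ G and τ > 0, perfect state transfer occurs from a to b at time τ if and only if perfect state transfer occurs from the identity e to ba^{−1} at time τ. Moreover, if perfect state transfer occurs from a to b, then ba^{−1} is a central element of G. -/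
open Matrix

/-- Adjacency matrix of the oriented Cayley digraph `Cay(G, C)`: entry `(g, h)` is `1` if
`h * g⁻¹ ∈ C`, `-1` if `h * g⁻¹ ∈ C⁻¹`, and `0` otherwise (assuming `C ∩ C⁻¹ = ∅`). -/
noncomputable def cayAdj (G : Type*) [Group G] (C : Set G) : Matrix G G ℂ :=
  Matrix.of fun g h =>
    (C.indicator (fun _ => (1 : ℂ)) (h * g⁻¹)) - (C.indicator (fun _ => (1 : ℂ)) ((h * g⁻¹)⁻¹))

/-- `C` is a union of conjugacy classes of `G`. -/
def IsConjClosed {G : Type*} [Group G] (C : Set G) : Prop :=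
  ∀ c ∈ C, ∀ g : G, g * c * g⁻¹ ∈ C

/-- `C ∩ C⁻¹ = ∅`, i.e. the Cayley digraph `Cay(G, C)` is oriented. -/
def IsOrientedSet {G : Type*} [Group G] (C : Set G) : Prop :=
  ∀ c ∈ C, c⁻¹ ∉ C

/-- If a matrix is invariant under simultaneous row/column permutation, so is its exponential. -/
lemma exp_perm_invariant {n : Type*} [Fintype n] [DecidableEq n]
    (B : Matrix n n ℂ) (σ : Equiv.Perm n) (hB : ∀ g h, B (σ g) (σ h) = B g h)
    (g h : n) : NormedSpace.exp B (σ g) (σ h) = NormedSpace.exp B g h := by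
  letI : SeminormedRing (Matrix n n ℂ) := Matrix.linftyOpSemiNormedRing
  letI : NormedRing (Matrix n n ℂ) := Matrix.linftyOpNormedRing
  letI : NormedAlgebra ℂ (Matrix n n ℂ) := Matrix.linftyOpNormedAlgebra
  letI : NormedAlgebra ℚ (Matrix n n ℂ) := Matrix.linftyOpNormedAlgebra
  have hfix : (Matrix.reindexAlgEquiv ℂ ℂ σ.symm) B = B := by
    ext i j
    simp [Matrix.reindexAlgEquiv_apply, Matrix.reindex_apply, Matrix.submatrix_apply, hB]
  have hcont : Continuous (Matrix.reindexAlgEquiv ℂ ℂ σ.symm : Matrix n n ℂ → Matrix n n ℂ) :=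
    (Matrix.reindexAlgEquiv ℂ ℂ σ.symm).toLinearMap.continuous_of_finiteDimensional
  have hmap := NormedSpace.map_exp (Matrix.reindexAlgEquiv ℂ ℂ σ.symm) hcont B
  rw [hfix] at hmap
  have h2 := congrArg (fun M : Matrix n n ℂ => M g h) hmap
  simp only [Matrix.reindexAlgEquiv_apply, Matrix.reindex_apply, Matrix.submatrix_apply] at h2
  exact h2

lemma pst_iff_col {V : Type*} [Fintype V] [DecidableEq V]
    (A : Matrix V V ℂ) (u v : V) (τ : ℝ) :
    PST A u v τ ↔ ∃ lam : ℂ, ‖lam‖ = 1 ∧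
      ∀ g, transU A τ g u = lam * (if g = v then 1 else 0) := by
  unfold PST
  refine exists_congr fun lam => and_congr_right fun _ => ?_
  rw [funext_iff]
  refine forall_congr' fun g => ?_
  simp [Matrix.mulVec_single, Pi.single_apply, mul_comm]

/-- in an oriented normal Cayley graph, PST occurs from `a` to `b` at time
`τ` iff PST occurs from `e` to `b * a⁻¹` at time `τ`; moreover if PST occurs from `a` to `b`
then `b * a⁻¹` is central. -/
theorem stmt5 {G : Type*} [Group G] [Fintype G] [DecidableEq G]
    (C : Set G) (hnormal : IsConjClosed C) (horient : IsOrientedSet C)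
    (a b : G) :
    (∀ τ : ℝ, 0 < τ →
      (PST (cayAdj G C) a b τ ↔ PST (cayAdj G C) 1 (b * a⁻¹) τ)) ∧
    ((∃ τ : ℝ, 0 < τ ∧ PST (cayAdj G C) a b τ) → b * a⁻¹ ∈ Subgroup.center G) := by
  classical
  set A := cayAdj G C with hA
  -- membership in `C` is conjugation-invariant
  have hmemC : ∀ (k x : G), x ∈ C ↔ k * x * k⁻¹ ∈ C := by
    intro k x
    constructor
    · intro hx; exact hnormal x hx k
    · intro hx
      have := hnormal _ hx k⁻¹
      simpa [mul_assoc] using this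
  have hind : ∀ (k x : G), C.indicator (fun _ => (1 : ℂ)) (k * x * k⁻¹)
      = C.indicator (fun _ => (1 : ℂ)) x := by
    intro k x
    by_cases hx : x ∈ C
    · rw [Set.indicator_of_mem hx, Set.indicator_of_mem ((hmemC k x).1 hx)]
    · rw [Set.indicator_of_notMem hx,
        Set.indicator_of_notMem (fun h => hx ((hmemC k x).2 h))]
  -- right invariance of the adjacency matrix
  have hR : ∀ (k g h : G), A (g * k) (h * k) = A g h := by
    intro k g h
    have e : (h * k) * (g * k)⁻¹ = h * g⁻¹ := by group
    simp only [hA, cayAdj, Matrix.of_apply]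
    rw [e]
  -- left invariance of the adjacency matrix
  have hL : ∀ (k g h : G), A (k * g) (k * h) = A g h := by
    intro k g h
    have e1 : (k * h) * (k * g)⁻¹ = k * (h * g⁻¹) * k⁻¹ := by group
    have e2 : (k * (h * g⁻¹) * k⁻¹)⁻¹ = k * (h * g⁻¹)⁻¹ * k⁻¹ := by group
    simp only [hA, cayAdj, Matrix.of_apply]
    rw [e1, e2, hind, hind]
  -- invariance of the transition matrix
  have hUR : ∀ (τ : ℝ) (k g h : G), transU A τ (g * k) (h * k) = transU A τ g h := by
    intro τ k g h
    exact exp_perm_invariant ((τ : ℂ) • A) (Equiv.mulRight k)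
      (by intro g h; simp [Equiv.coe_mulRight, hR k g h]) g h
  have hUL : ∀ (τ : ℝ) (k g h : G), transU A τ (k * g) (k * h) = transU A τ g h := by
    intro τ k g h
    exact exp_perm_invariant ((τ : ℂ) • A) (Equiv.mulLeft k)
      (by intro g h; simp [Equiv.coe_mulLeft, hL k g h]) g h
  have main : ∀ τ : ℝ, PST A a b τ ↔ PST A 1 (b * a⁻¹) τ := by
    intro τ
    rw [pst_iff_col, pst_iff_col]
    refine exists_congr fun lam => and_congr_right fun _ => ?_
    constructor
    · intro hcol g
      have h1 : transU A τ g 1 = transU A τ (g * a) a := by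
        have := hUR τ a g 1
        simpa using this.symm
      rw [h1, hcol (g * a)]
      congr 1
      simp [eq_comm, eq_mul_inv_iff_mul_eq]
    · intro hcol g
      have h1 : transU A τ g a = transU A τ (g * a⁻¹) 1 := by
        have := hUR τ a (g * a⁻¹) 1
        simpa [mul_assoc] using this
      rw [h1, hcol (g * a⁻¹)]
      congr 1
      simp [mul_left_inj]
  refine ⟨fun τ _ => main τ, ?_⟩
  rintro ⟨τ, hτ, hpst⟩
  obtain ⟨lam, hlam, hcol⟩ := (pst_iff_col A 1 (b * a⁻¹) τ).1 ((main τ).1 hpst)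
  set c := b * a⁻¹ with hc
  have hlamne : lam ≠ 0 := by
    intro h0; rw [h0] at hlam; simpa using hlam
  rw [Subgroup.mem_center_iff]
  intro k
  have hconj : transU A τ (k * c * k⁻¹) 1 = transU A τ c 1 := by
    calc transU A τ (k * c * k⁻¹) 1 = transU A τ (k * c * k⁻¹ * k) (1 * k) := (hUR τ k _ _).symm
      _ = transU A τ (k * c) (k * 1) := by rw [inv_mul_cancel_right, one_mul, mul_one]
      _ = transU A τ c 1 := hUL τ k c 1
  have hkc : k * c * k⁻¹ = c := by
    by_contra hne
    rw [hcol, hcol, if_neg hne, if_pos rfl, mul_zero, mul_one] at hconj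
    exact hlamne hconj.symm
  have h3 := congrArg (· * k) hkc
  simpa [mul_assoc] using h3
end

section
/- Let G be a finite group and z ∈ Z(G), and suppose there is a set Y of irreducible complex characters of G such that: (i) z ∉ ker(χ) for all χ ∈ Y (i.e., χ(z) ≠ χ(e) for all χ ∈ Y), and (ii) the intersection over χ ∈ Y of the subfields ℚ(χ) of ℂ generated over ℚ by the values of χ equals ℚ. Then for every subset C of G that is a union of conjugacy classes with C ∩ C^{−1} = ∅, perfect state transfer does not occur from the identity e to z in Cay(G, C) at any time τ > 0; in particular no oriented normal Cayley graph on G admits multiple state transfer on ⟨z⟩. -/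
open Matrix

namespace Stmt8Aux

set_option linter.unusedSectionVars false

section ExpLemmas

variable {V : Type*} [Fintype V] [DecidableEq V]

/-- `B ↦ B *ᵥ v` as a continuous linear map. -/
noncomputable def mulVecCLM (v : V → ℂ) : Matrix V V ℂ →L[ℂ] (V → ℂ) :=
  LinearMap.toContinuousLinearMap
    { toFun := fun B => B *ᵥ v
      map_add' := fun A B => Matrix.add_mulVec A B v
      map_smul' := fun c B => Matrix.smul_mulVec c B v }

@[simp] lemma mulVecCLM_apply (v : V → ℂ) (B : Matrix V V ℂ) : mulVecCLM v B = B *ᵥ v := rfl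

lemma summable_exp_series (M : Matrix V V ℂ) :
    Summable fun n : ℕ => ((n.factorial : ℂ))⁻¹ • M ^ n := by
  letI : SeminormedRing (Matrix V V ℂ) := Matrix.linftyOpSemiNormedRing
  letI : NormedRing (Matrix V V ℂ) := Matrix.linftyOpNormedRing
  letI : NormedAlgebra ℂ (Matrix V V ℂ) := Matrix.linftyOpNormedAlgebra
  exact NormedSpace.expSeries_summable' M

lemma exp_mulVec_tsum (M : Matrix V V ℂ) (v : V → ℂ) :
    NormedSpace.exp M *ᵥ v = ∑' n : ℕ, ((n.factorial : ℂ))⁻¹ • (M ^ n *ᵥ v) := by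
  have h := (mulVecCLM v).map_tsum (summable_exp_series M)
  simpa [NormedSpace.exp_eq_tsum ℂ] using h

lemma pow_mulVec_eigen (M : Matrix V V ℂ) (v : V → ℂ) (μ : ℂ) (h : M *ᵥ v = μ • v) (n : ℕ) :
    M ^ n *ᵥ v = μ ^ n • v := by
  induction n with
  | zero => simp [Matrix.one_mulVec]
  | succ n ih =>
      rw [pow_succ, ← Matrix.mulVec_mulVec, h, Matrix.mulVec_smul, ih, smul_smul, pow_succ]
      ring_nf

lemma exp_mulVec_eigen (M : Matrix V V ℂ) (v : V → ℂ) (μ : ℂ) (h : M *ᵥ v = μ • v) :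
    NormedSpace.exp M *ᵥ v = Complex.exp μ • v := by
  rw [exp_mulVec_tsum]
  have hsum : Summable fun n : ℕ => ((n.factorial : ℂ))⁻¹ * μ ^ n := by
    simpa [smul_eq_mul] using NormedSpace.expSeries_summable' (𝕂 := ℂ) μ
  calc (∑' n : ℕ, ((n.factorial : ℂ))⁻¹ • (M ^ n *ᵥ v))
      = ∑' n : ℕ, (((n.factorial : ℂ))⁻¹ * μ ^ n) • v := by
        refine tsum_congr fun n => ?_
        rw [pow_mulVec_eigen M v μ h n, smul_smul]
    _ = (∑' n : ℕ, ((n.factorial : ℂ))⁻¹ * μ ^ n) • v := hsum.tsum_smul_const v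
    _ = Complex.exp μ • v := by
        congr 1
        rw [Complex.exp_eq_exp_ℂ, NormedSpace.exp_eq_tsum ℂ]
        simp [smul_eq_mul]

lemma vecMul_smul_matrix (v : V → ℂ) (c : ℂ) (M : Matrix V V ℂ) :
    v ᵥ* (c • M) = c • (v ᵥ* M) := by
  ext i
  simp [Matrix.vecMul, dotProduct, Finset.mul_sum]
  refine Finset.sum_congr rfl fun x _ => by ring

lemma exp_vecMul_eigen (M : Matrix V V ℂ) (v : V → ℂ) (μ : ℂ) (h : v ᵥ* M = μ • v) :
    v ᵥ* NormedSpace.exp M = Complex.exp μ • v := by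
  have h' : Mᵀ *ᵥ v = μ • v := by rw [Matrix.mulVec_transpose, h]
  rw [← Matrix.mulVec_transpose, ← Matrix.exp_transpose, exp_mulVec_eigen Mᵀ v μ h']

/-- if `mulVec M` commutes with a linear operation `L` on vectors, so does `mulVec (exp M)`. -/
lemma exp_mulVec_comm (M : Matrix V V ℂ) (L : (V → ℂ) →ₗ[ℂ] (V → ℂ))
    (hM : ∀ w, M *ᵥ (L w) = L (M *ᵥ w)) (w : V → ℂ) :
    NormedSpace.exp M *ᵥ (L w) = L (NormedSpace.exp M *ᵥ w) := by
  have hpow : ∀ n : ℕ, ∀ u, M ^ n *ᵥ (L u) = L (M ^ n *ᵥ u) := by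
    intro n
    induction n with
    | zero => intro u; simp [Matrix.one_mulVec]
    | succ n ih =>
        intro u
        rw [pow_succ, ← Matrix.mulVec_mulVec, hM, ih, ← Matrix.mulVec_mulVec]
  rw [exp_mulVec_tsum, exp_mulVec_tsum]
  have hsum : Summable fun n : ℕ => ((n.factorial : ℂ))⁻¹ • (M ^ n *ᵥ w) := by
    have h := ((mulVecCLM w).summable (f := fun n : ℕ => ((n.factorial : ℂ))⁻¹ • M ^ n)
      (summable_exp_series M))
    simpa using h
  calc (∑' n : ℕ, ((n.factorial : ℂ))⁻¹ • (M ^ n *ᵥ L w))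
      = ∑' n : ℕ, (LinearMap.toContinuousLinearMap L) (((n.factorial : ℂ))⁻¹ • (M ^ n *ᵥ w)) := by
        refine tsum_congr fun n => ?_
        simp [hpow n w]
    _ = (LinearMap.toContinuousLinearMap L) (∑' n : ℕ, ((n.factorial : ℂ))⁻¹ • (M ^ n *ᵥ w)) :=
        ((LinearMap.toContinuousLinearMap L).map_tsum hsum).symm
    _ = L (∑' n : ℕ, ((n.factorial : ℂ))⁻¹ • (M ^ n *ᵥ w)) := by simp

end ExpLemmas

open CategoryTheory

variable {G : Type} [Group G] [Fintype G] [DecidableEq G]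

/-- Schur: a class function convolved against an irreducible character acts as a scalar. -/
lemma schur_sum (W : FDRep ℂ G) [Simple W] (f : G → ℂ)
    (hf : ∀ (g x : G), f (g * x * g⁻¹) = f x) :
    ∃ c : ℂ, ∀ x : G, ∑ g : G, f g * W.character (g * x) = c * W.character x := by
  classical
  let T' : W →ₗ[ℂ] W := ∑ g : G, f g • (W.ρ g : W →ₗ[ℂ] W)
  have lhs : ∀ x : G, T' * (W.ρ x : W →ₗ[ℂ] W) = ∑ g : G, f g • ((W.ρ (g * x) : W →ₗ[ℂ] W)) := by
    intro x
    rw [Finset.sum_mul]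
    refine Finset.sum_congr rfl fun g _ => ?_
    rw [smul_mul_assoc, ← _root_.map_mul]
  have hcomm : ∀ x : G, T' * (W.ρ x : W →ₗ[ℂ] W) = (W.ρ x : W →ₗ[ℂ] W) * T' := by
    intro x
    have rhs : (W.ρ x : W →ₗ[ℂ] W) * T' = ∑ g : G, f g • ((W.ρ (x * g) : W →ₗ[ℂ] W)) := by
      rw [Finset.mul_sum]
      refine Finset.sum_congr rfl fun g _ => ?_
      rw [mul_smul_comm, ← _root_.map_mul]
    rw [lhs x, rhs]
    refine Fintype.sum_equiv ((Equiv.mulLeft x⁻¹).trans (Equiv.mulRight x)) _ _ fun g => ?_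
    simp only [Equiv.trans_apply, Equiv.coe_mulLeft, Equiv.coe_mulRight]
    have h2 : x * (x⁻¹ * g * x) = g * x := by group
    have h1 : f (x⁻¹ * g * x) = f g := by
      have h := hf x⁻¹ g
      rwa [inv_inv] at h
    rw [h2, h1]
  -- package as a morphism in `FDRep ℂ G`
  let T : W ⟶ W := ⟨FGModuleCat.ofHom T', fun x => by ext v; exact LinearMap.congr_fun (hcomm x) v⟩
  obtain ⟨c, hc⟩ := endomorphism_simple_eq_smul_id (𝕜 := ℂ) T
  have h2 : c • (LinearMap.id : W →ₗ[ℂ] W) = T' := by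
    have h := congrArg Action.Hom.hom hc
    rw [Action.smul_hom] at h
    ext v; exact congrArg (fun f => f.hom.hom v) h
  refine ⟨c, fun x => ?_⟩
  have h3 : T' * (W.ρ x : W →ₗ[ℂ] W) = c • (W.ρ x : W →ₗ[ℂ] W) := by
    rw [← h2, smul_mul_assoc, Module.End.mul_eq_comp, LinearMap.id_comp]
  have h4 : ∑ g : G, f g * W.character (g * x) = LinearMap.trace ℂ W (T' * (W.ρ x : W →ₗ[ℂ] W)) := by
    rw [lhs x, map_sum]
    refine Finset.sum_congr rfl fun g _ => ?_
    rw [_root_.map_smul, smul_eq_mul]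
    rfl
  have h5 : LinearMap.trace ℂ W (T' * (W.ρ x : W →ₗ[ℂ] W)) = c * W.character x := by
    rw [h3, _root_.map_smul, smul_eq_mul]
    rfl
  rw [h4, h5]

/-- The weight function of the signed Cayley adjacency matrix. -/
noncomputable def fW (C : Set G) (x : G) : ℂ :=
  C.indicator (fun _ => (1 : ℂ)) x - C.indicator (fun _ => (1 : ℂ)) x⁻¹

lemma cayAdj_apply (C : Set G) (g h : G) : cayAdj G C g h = fW C (h * g⁻¹) := rfl

lemma fW_eq (C : Set G) (x : G) [Decidable (x ∈ C)] [Decidable (x⁻¹ ∈ C)] :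
    fW C x = (if x ∈ C then (1 : ℂ) else 0) - (if x⁻¹ ∈ C then (1 : ℂ) else 0) := by
  simp [fW, Set.indicator_apply]

lemma fW_inv (C : Set G) (x : G) : fW C x⁻¹ = - fW C x := by
  classical
  rw [fW_eq, fW_eq, inv_inv]
  ring

lemma fW_conj {C : Set G} (hCC : IsConjClosed C) (g x : G) : fW C (g * x * g⁻¹) = fW C x := by
  classical
  have hmem : ∀ y : G, g * y * g⁻¹ ∈ C ↔ y ∈ C := by
    intro y
    constructor
    · intro h
      have h2 := hCC _ h g⁻¹
      have : g⁻¹ * (g * y * g⁻¹) * g⁻¹⁻¹ = y := by group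
      rwa [this] at h2
    · intro h
      exact hCC y h g
  have hinv : (g * x * g⁻¹)⁻¹ = g * x⁻¹ * g⁻¹ := by group
  rw [fW_eq, fW_eq, hinv]
  rw [if_congr (hmem x) rfl rfl, if_congr (hmem x⁻¹) rfl rfl]

lemma sum_fW (C : Set G) : ∑ x : G, fW C x = 0 := by
  classical
  have h : ∑ x : G, C.indicator (fun _ => (1:ℂ)) x⁻¹ = ∑ x : G, C.indicator (fun _ => (1:ℂ)) x :=
    Fintype.sum_equiv (Equiv.inv G) _ _ fun x => by simp
  simp only [fW, Finset.sum_sub_distrib, h, sub_self]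


section CayleyLemmas

variable {C : Set G}

/-- mulVec eigen equation for a character-type vector. -/
lemma mulVec_char (χ : G → ℂ) (c : ℂ) (hc : ∀ x : G, ∑ g : G, fW C g * χ (g * x) = c * χ x) :
    cayAdj G C *ᵥ χ = c • χ := by
  funext x
  have h : (cayAdj G C *ᵥ χ) x = ∑ h : G, fW C (h * x⁻¹) * χ h := by
    simp [Matrix.mulVec, dotProduct, cayAdj_apply]
  rw [h]
  have h2 : ∑ h : G, fW C (h * x⁻¹) * χ h = ∑ g : G, fW C g * χ (g * x) :=
    Fintype.sum_equiv (Equiv.mulRight x⁻¹) _ _ fun g => by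
      simp only [Equiv.coe_mulRight]
      rw [inv_mul_cancel_right]
  rw [h2, hc x]
  simp [mul_comm]

/-- vecMul eigen equation for a character-type vector. -/
lemma vecMul_char (χ : G → ℂ) (c : ℂ) (hc : ∀ x : G, ∑ g : G, fW C g * χ (g * x) = c * χ x) :
    χ ᵥ* cayAdj G C = (-c) • χ := by
  funext x
  have h : (χ ᵥ* cayAdj G C) x = ∑ g : G, χ g * fW C (x * g⁻¹) := by
    simp [Matrix.vecMul, dotProduct, cayAdj_apply]
  rw [h]
  have h2 : ∑ g : G, χ g * fW C (x * g⁻¹) = ∑ g : G, χ (g * x) * fW C g⁻¹ := by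
    refine Fintype.sum_equiv (Equiv.mulRight x⁻¹) _ _ fun g => ?_
    simp only [Equiv.coe_mulRight]
    have e1 : g * x⁻¹ * x = g := by group
    have e2 : (g * x⁻¹)⁻¹ = x * g⁻¹ := by group
    rw [e1, e2]
  rw [h2]
  have h3 : ∑ g : G, χ (g * x) * fW C g⁻¹ = -∑ g : G, fW C g * χ (g * x) := by
    rw [← Finset.sum_neg_distrib]
    refine Finset.sum_congr rfl fun g _ => ?_
    rw [fW_inv]
    ring
  rw [h3, hc x]
  simp

/-- Right translation as a linear map on vectors. -/
def rkL (k : G) : (G → ℂ) →ₗ[ℂ] (G → ℂ) where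
  toFun w := fun x => w (x * k)
  map_add' _ _ := rfl
  map_smul' _ _ := rfl

lemma rkL_single (k a : G) : rkL k (Pi.single a 1) = (Pi.single (a * k⁻¹) 1 : G → ℂ) := by
  funext x
  simp only [rkL, LinearMap.coe_mk, AddHom.coe_mk, Pi.single_apply]
  by_cases h : x = a * k⁻¹
  · subst h; simp
  · rw [if_neg (by intro h2; apply h; rw [← h2]; group), if_neg h]

lemma cayAdj_mulVec_rkL (k : G) (w : G → ℂ) :
    cayAdj G C *ᵥ (rkL k w) = rkL k (cayAdj G C *ᵥ w) := by
  funext x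
  show ∑ h : G, fW C (h * x⁻¹) * w (h * k) = ∑ h : G, fW C (h * (x * k)⁻¹) * w h
  refine Fintype.sum_equiv (Equiv.mulRight k) _ _ fun h => ?_
  simp only [Equiv.coe_mulRight]
  have e1 : h * k * (x * k)⁻¹ = h * x⁻¹ := by group
  rw [e1]

lemma transU_rkL (t : ℝ) (k : G) (w : G → ℂ) :
    transU (cayAdj G C) t *ᵥ (rkL k w) = rkL k (transU (cayAdj G C) t *ᵥ w) := by
  refine exp_mulVec_comm _ (rkL k) (fun u => ?_) w
  rw [Matrix.smul_mulVec, cayAdj_mulVec_rkL, ← _root_.map_smul, ← Matrix.smul_mulVec]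

lemma pst_shift {a b : G} {t : ℝ} (h : PST (cayAdj G C) a b t) (k : G) :
    PST (cayAdj G C) (a * k) (b * k) t := by
  obtain ⟨lam, hlam, hU⟩ := h
  refine ⟨lam, hlam, ?_⟩
  have h1 : (Pi.single (a * k) 1 : G → ℂ) = rkL k⁻¹ (Pi.single a 1) := by
    rw [rkL_single, inv_inv]
  rw [h1, transU_rkL, hU, _root_.map_smul, rkL_single, inv_inv]

lemma transU_add (A : Matrix G G ℂ) (t s : ℝ) :
    transU A (t + s) = transU A s * transU A t := by
  unfold transU
  rw [← Matrix.exp_add_of_commute]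
  · congr 1
    push_cast
    rw [add_smul, add_comm]
  · exact (Commute.refl A).smul_left _ |>.smul_right _

lemma pst_comp {a b c : G} {t s : ℝ} (h1 : PST (cayAdj G C) a b t)
    (h2 : PST (cayAdj G C) b c s) : PST (cayAdj G C) a c (t + s) := by
  obtain ⟨l1, hl1, hU1⟩ := h1
  obtain ⟨l2, hl2, hU2⟩ := h2
  refine ⟨l2 * l1, by rw [norm_mul, hl1, hl2, mul_one], ?_⟩
  rw [transU_add, ← Matrix.mulVec_mulVec, hU1, Matrix.mulVec_smul, hU2, smul_smul, mul_comm]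

lemma pst_rev {a b : G} {t : ℝ} (h : PST (cayAdj G C) a b t) : PST (cayAdj G C) b a (-t) := by
  obtain ⟨lam, hlam, hU⟩ := h
  have hlam0 : lam ≠ 0 := by intro h0; rw [h0] at hlam; simp at hlam
  refine ⟨lam⁻¹, by rw [norm_inv, hlam]; norm_num, ?_⟩
  have h1 : transU (cayAdj G C) (-t) * transU (cayAdj G C) t = 1 := by
    rw [← transU_add]
    simp [transU, NormedSpace.exp_zero]
  have h2 : transU (cayAdj G C) (-t) *ᵥ (transU (cayAdj G C) t *ᵥ Pi.single a 1)
      = Pi.single a 1 := by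
    rw [Matrix.mulVec_mulVec, h1, Matrix.one_mulVec]
  rw [hU, Matrix.mulVec_smul] at h2
  rw [← inv_smul_smul₀ hlam0 (transU (cayAdj G C) (-t) *ᵥ Pi.single b 1), h2]

lemma pst_pow {w : G} {t : ℝ} (h : PST (cayAdj G C) 1 w t) (k : ℕ) :
    PST (cayAdj G C) 1 (w ^ (k + 1)) ((k + 1 : ℕ) * t) := by
  induction k with
  | zero => simpa using h
  | succ k ih =>
      have h2 : PST (cayAdj G C) (w ^ (k+1)) (w ^ (k+1+1)) t := by
        have h' := pst_shift h (w ^ (k+1))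
        rw [one_mul] at h'
        have hw : w * w ^ (k+1) = w ^ (k+1+1) := (pow_succ' w (k+1)).symm
        rwa [hw] at h'
      have h3 := pst_comp ih h2
      have : ((k+1 : ℕ) : ℝ) * t + t = ((k + 1 + 1 : ℕ) : ℝ) * t := by push_cast; ring
      rwa [this] at h3

/-- Every PST scalar on a Cayley graph with zero-sum weights equals `1`. -/
lemma pst_lam_one {a b : G} {t : ℝ} {lam : ℂ}
    (hU : transU (cayAdj G C) t *ᵥ Pi.single a 1 = lam • (Pi.single b 1 : G → ℂ)) : lam = 1 := by
  classical
  set ones : G → ℂ := fun _ => 1 with hones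
  have h0 : ones ᵥ* cayAdj G C = (0 : ℂ) • ones := by
    funext x
    show ∑ g : G, 1 * fW C (x * g⁻¹) = _
    have h1 : ∑ g : G, 1 * fW C (x * g⁻¹) = ∑ g : G, fW C g := by
      refine Fintype.sum_equiv ((Equiv.inv G).trans (Equiv.mulLeft x)) _ _ fun g => by simp
    rw [h1, sum_fW]
    simp
  have h2 : ones ᵥ* ((t : ℂ) • cayAdj G C) = (0 : ℂ) • ones := by
    rw [vecMul_smul_matrix, h0]
    simp
  have h3 : ones ᵥ* transU (cayAdj G C) t = ones := by
    have := exp_vecMul_eigen ((t : ℂ) • cayAdj G C) ones 0 h2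
    simpa [transU] using this
  have h4 := congrArg (fun v => ones ⬝ᵥ v) hU
  rw [Matrix.dotProduct_mulVec, h3] at h4
  have h5 : ones ⬝ᵥ (Pi.single a 1 : G → ℂ) = 1 := by
    simp [dotProduct, Pi.single_apply, hones]
  have h6 : ones ⬝ᵥ (lam • (Pi.single b 1 : G → ℂ)) = lam := by
    rw [dotProduct_smul, smul_eq_mul]
    simp [dotProduct, Pi.single_apply, hones]
  rw [h5, h6] at h4
  exact h4.symm

/-- The key spectral identity from a PST equation and a character eigenvector. -/
lemma key_eq {χ : G → ℂ} {c : ℂ} (hc : ∀ x : G, ∑ g : G, fW C g * χ (g * x) = c * χ x)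
    {a b : G} {t : ℝ} {lam : ℂ}
    (hU : transU (cayAdj G C) t *ᵥ Pi.single a 1 = lam • (Pi.single b 1 : G → ℂ)) :
    Complex.exp (-(t * c)) * χ a = lam * χ b := by
  have hvec := vecMul_char χ c hc
  have h1 : χ ᵥ* ((t : ℂ) • cayAdj G C) = (-((t : ℂ) * c)) • χ := by
    rw [vecMul_smul_matrix, hvec, smul_smul]
    ring_nf
  have h2 : χ ᵥ* transU (cayAdj G C) t = Complex.exp (-((t : ℂ) * c)) • χ :=
    exp_vecMul_eigen _ _ _ h1
  have h4 := congrArg (fun v => χ ⬝ᵥ v) hU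
  rw [Matrix.dotProduct_mulVec, h2, smul_dotProduct, dotProduct_smul,
    dotProduct_single, dotProduct_single] at h4
  simpa [smul_eq_mul] using h4

end CayleyLemmas

end Stmt8Aux

open Stmt8Aux

/-- let `z ∈ Z(G)` and suppose there is a set `Y` of irreducible complex
characters of `G` with `χ(z) ≠ χ(e)` for all `χ ∈ Y` and `⋂_{χ ∈ Y} ℚ(χ) = ℚ`. Then for every
conjugation-closed `C` with `C ∩ C⁻¹ = ∅`, PST never occurs from `e` to `z` in `Cay(G, C)`;
in particular no oriented normal Cayley graph on `G` has multiple state transfer on `⟨z⟩`. -/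
theorem stmt8 {G : Type} [Group G] [Fintype G] [DecidableEq G]
    (z : G) (hz : z ∈ Subgroup.center G)
    (Y : Set (G → ℂ))
    (hirr : ∀ χ ∈ Y, ∃ W : FDRep ℂ G, CategoryTheory.Simple W ∧ W.character = χ)
    (hker : ∀ χ ∈ Y, χ z ≠ χ 1)
    (hfield : (⨅ χ ∈ Y, Subfield.closure (Set.range χ)) = (⊥ : Subfield ℂ)) :
    ∀ C : Set G, IsConjClosed C → IsOrientedSet C →
      (∀ τ : ℝ, 0 < τ → ¬ PST (cayAdj G C) 1 z τ) ∧
      ¬ (∃ a : G, (Subgroup.zpowers z : Set G) = Sset (cayAdj G C) a ∧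
          3 ≤ ((Subgroup.zpowers z : Set G)).ncard) := by
  intro C hCC hCO
  classical
  have part1 : ∀ τ : ℝ, 0 < τ → ¬ PST (cayAdj G C) 1 z τ := by
    intro τ hτ hPST
    obtain ⟨lam, hlam, hU⟩ := hPST
    have hlam1 : lam = 1 := pst_lam_one hU
    subst hlam1
    set m := orderOf z with hmdef
    have hm : 0 < m := orderOf_pos z
    have hmτ : ((m : ℂ) * (τ : ℂ)) ≠ 0 := by
      apply mul_ne_zero
      · exact_mod_cast Nat.pos_iff_ne_zero.mp hm
      · exact_mod_cast ne_of_gt hτ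
    -- PST from 1 to 1 at time m*τ
    have hPm := pst_pow ⟨1, by simp, hU⟩ (m - 1)
    rw [Nat.sub_add_cancel hm] at hPm
    rw [pow_orderOf_eq_one z] at hPm
    obtain ⟨lam2, hlam2, hU2⟩ := hPm
    have hlam21 : lam2 = 1 := pst_lam_one hU2
    subst hlam21
    -- for each χ in Y produce the eigenvalue data
    have key : ∀ χ ∈ Y, ∃ c : ℂ, c ∈ Subfield.closure (Set.range χ) ∧
        ∃ n : ℤ, n ≠ 0 ∧ ((m : ℂ) * (τ : ℂ)) * c = (n : ℂ) * (2 * Real.pi * Complex.I) := by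
      intro χ hχ
      obtain ⟨W, hW, hchar⟩ := hirr χ hχ
      haveI := hW
      obtain ⟨c, hc⟩ := schur_sum W (fW C) (fun g x => fW_conj hCC g x)
      rw [hchar] at hc
      have E1 := key_eq hc hU
      have E2 := key_eq hc hU2
      rw [one_mul] at E1 E2
      have hχ1 : χ 1 ≠ 0 := by
        intro h0
        rw [h0, mul_zero] at E1
        exact hker χ hχ (by rw [← E1, h0])
      have hE2' : Complex.exp (-((((m : ℝ) * τ : ℝ) : ℂ) * c)) = 1 := by
        have h := E2
        nth_rewrite 2 [← one_mul (χ 1)] at h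
        exact mul_right_cancel₀ hχ1 h
      have hcne : c ≠ 0 := by
        intro h0
        rw [h0] at E1
        simp only [mul_zero, neg_zero, Complex.exp_zero, one_mul] at E1
        exact hker χ hχ E1.symm
      obtain ⟨n, hn⟩ := Complex.exp_eq_one_iff.mp hE2'
      refine ⟨c, ?_, -n, ?_, ?_⟩
      · have hval := hc 1
        simp only [mul_one] at hval
        have hsum : (∑ g : G, fW C g * χ g) ∈ Subfield.closure (Set.range χ) := by
          refine Subfield.sum_mem _ fun g _ => ?_
          refine Subfield.mul_mem _ ?_ (Subfield.subset_closure ⟨g, rfl⟩)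
          rw [fW_eq]
          refine Subfield.sub_mem _ ?_ ?_ <;>
            · split
              · exact Subfield.one_mem _
              · exact Subfield.zero_mem _
        have hceq : c = (∑ g : G, fW C g * χ g) * (χ 1)⁻¹ := by
          field_simp
          exact hval.symm
        rw [hceq]
        exact Subfield.mul_mem _ hsum
          (Subfield.inv_mem _ (Subfield.subset_closure ⟨1, rfl⟩))
      · intro h0
        rw [neg_eq_zero] at h0
        subst h0
        rw [Int.cast_zero, zero_mul] at hn
        rw [neg_eq_zero] at hn
        have : c = 0 := by
          have hc0 : (((m : ℝ) * τ : ℝ) : ℂ) ≠ 0 := by push_cast; exact hmτ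
          exact (mul_eq_zero.mp hn).resolve_left hc0
        exact hcne this
      · push_cast
        have h1 : (((m : ℝ) * τ : ℝ) : ℂ) * c = -((n : ℂ) * (2 * Real.pi * Complex.I)) := by
          rw [← hn]; ring
        push_cast at h1
        rw [h1]; ring
    -- Y is nonempty
    have hYne : Y.Nonempty := by
      by_contra hY
      rw [Set.not_nonempty_iff_eq_empty] at hY
      subst hY
      rw [iInf_emptyset] at hfield
      have hI : Complex.I ∈ (⊥ : Subfield ℂ) := by rw [← hfield]; trivial
      have hle : (⊥ : Subfield ℂ) ≤ Complex.ofRealHom.fieldRange := bot_le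
      obtain ⟨r, hr⟩ := RingHom.mem_fieldRange.mp (hle hI)
      have := congrArg Complex.im hr
      simp at this
    obtain ⟨χ₀, hχ₀⟩ := hYne
    obtain ⟨c₀, hc₀mem, n₀, hn₀, heq₀⟩ := key χ₀ hχ₀
    have hbot : c₀ ∈ (⊥ : Subfield ℂ) := by
      rw [← hfield]
      rw [Subfield.mem_iInf]
      intro χ
      rw [Subfield.mem_iInf]
      intro hχ
      obtain ⟨c, hcmem, n, hnne, heq⟩ := key χ hχ
      have hnc : (n : ℂ) ≠ 0 := Int.cast_ne_zero.mpr hnne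
      have hmul : (n : ℂ) * c₀ = (n₀ : ℂ) * c := by
        have h1 : ((m : ℂ) * (τ : ℂ)) * ((n : ℂ) * c₀)
            = ((m : ℂ) * (τ : ℂ)) * ((n₀ : ℂ) * c) := by
          linear_combination (n : ℂ) * heq₀ - (n₀ : ℂ) * heq
        exact mul_left_cancel₀ hmτ h1
      have hdiv : c₀ = ((n₀ : ℂ) * c) / (n : ℂ) := by
        rw [eq_div_iff hnc, mul_comm c₀ (n:ℂ), hmul]
      rw [hdiv]
      exact Subfield.div_mem _
        (Subfield.mul_mem _ (Subfield.intCast_mem _ n₀) hcmem)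
        (Subfield.intCast_mem _ n)
    have hreal : c₀.im = 0 := by
      have hle : (⊥ : Subfield ℂ) ≤ Complex.ofRealHom.fieldRange := bot_le
      obtain ⟨r, hr⟩ := RingHom.mem_fieldRange.mp (hle hbot)
      rw [← hr]
      rfl
    -- contradiction: imaginary part of heq₀
    have him := congrArg Complex.im heq₀
    rw [show ((m : ℂ) * (τ : ℂ)) * c₀ = (((m : ℝ) * τ : ℝ) : ℂ) * c₀ by push_cast; ring] at him
    rw [show ((((m : ℝ) * τ : ℝ) : ℂ) * c₀).im = ((m : ℝ) * τ) * c₀.im by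
      simp [Complex.mul_im]] at him
    rw [hreal, mul_zero] at him
    simp only [Complex.mul_im, Complex.mul_re, Complex.intCast_re, Complex.intCast_im,
      Complex.ofReal_re, Complex.ofReal_im, Complex.I_re, Complex.I_im, Complex.re_ofNat,
      Complex.im_ofNat, mul_zero, zero_mul, mul_one, sub_zero, add_zero, zero_add,
      mul_eq_zero] at him
    have hn0' : (n₀ : ℝ) ≠ 0 := Int.cast_ne_zero.mpr hn₀
    have him' : (n₀ : ℝ) * (2 * Real.pi) = 0 := him.symm
    rcases mul_eq_zero.mp him' with h | h
    · exact hn0' h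
    · nlinarith [Real.pi_pos]
  refine ⟨part1, ?_⟩
  rintro ⟨a, hSeq, hcard⟩
  have hord : ((Subgroup.zpowers z : Set G)).ncard = orderOf z := by
    rw [← Nat.card_zpowers z]
    exact (Nat.card_coe_set_eq _).symm
  rw [hord] at hcard
  have h1mem : (1 : G) ∈ Sset (cayAdj G C) a := by
    rw [← hSeq]
    exact Subgroup.one_mem _
  have hzmem : z ∈ Sset (cayAdj G C) a := by
    rw [← hSeq]
    exact Subgroup.mem_zpowers z
  obtain ⟨s, hs, hPa1⟩ := h1mem
  obtain ⟨t, ht, hPaz⟩ := hzmem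
  have hP1z : PST (cayAdj G C) 1 z (-s + t) := by
    have h := pst_comp (pst_rev hPa1) hPaz
    simpa using h
  rcases lt_trichotomy 0 (-s + t) with hu | hu | hu
  · exact part1 _ hu hP1z
  · -- time zero forces `z = 1`, contradicting `3 ≤ orderOf z`
    rw [← hu] at hP1z
    obtain ⟨lam, hlam, hU⟩ := hP1z
    have hT0 : transU (cayAdj G C) 0 = 1 := by
      simp [transU, NormedSpace.exp_zero]
    rw [hT0, Matrix.one_mulVec] at hU
    by_cases hz1 : z = 1
    · rw [hz1, orderOf_one] at hcard
      omega
    · have h1 := congrFun hU 1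
      rw [Pi.single_eq_same, Pi.smul_apply, Pi.single_apply,
        if_neg (fun h => hz1 h.symm)] at h1
      simp at h1
  · -- negative time: reverse, then iterate to reach `z` at a positive time
    have hrev := pst_rev hP1z
    have hsh := pst_shift hrev z⁻¹
    rw [mul_inv_cancel, one_mul] at hsh
    have hpow := pst_pow hsh (orderOf z - 2)
    have h2 : orderOf z - 2 + 1 = orderOf z - 1 := by omega
    rw [h2] at hpow
    have hzpow : z⁻¹ ^ (orderOf z - 1) = z := by
      have hzz : z ^ (orderOf z - 1) * z = 1 := by
        rw [← pow_succ, Nat.sub_add_cancel (by omega), pow_orderOf_eq_one]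
      rw [inv_pow, eq_inv_of_mul_eq_one_left hzz, inv_inv]
    rw [hzpow] at hpow
    refine part1 _ ?_ hpow
    have hpos : (0:ℝ) < -(-s + t) := by linarith
    have hk : (0:ℝ) < ((orderOf z - 1 : ℕ) : ℝ) := by
      have : 1 ≤ orderOf z - 1 := by omega
      exact_mod_cast Nat.lt_of_lt_of_le Nat.zero_lt_one this
    positivity
end

section
/- Let n ≥ 1, let C ⊆ (ℤ/4ℤ)^n \ {0} satisfy C ∩ (−C) = ∅, and let σ = Σ_{w∈C} w ∈ (ℤ/4ℤ)^n. Let A be the adjacency matrix of Cay((ℤ/4ℤ)^n, C), and U(t) = exp(tA). Then U(π/2) e_0 = e_{2σ}. In particular, perfect state transfer occurs from 0 to 2σ at time π/2 if and only if σ has order 4 in (ℤ/4ℤ)^n (equivalently 2σ ≠ 0). -/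
open Matrix

/-- Adjacency matrix of the oriented Cayley graph `Cay(V, C)` on an additive group:
entry `(v, w)` is `1` if `w - v ∈ C`, `-1` if `w - v ∈ -C`, and `0` otherwise
(assuming `C ∩ (-C) = ∅`). -/
noncomputable def cayAddAdj {V : Type*} [AddGroup V] [DecidableEq V] (C : Finset V) :
    Matrix V V ℂ :=
  Matrix.of fun v w => (if w - v ∈ C then (1 : ℂ) else 0) - (if v - w ∈ C then (1 : ℂ) else 0)

section ExpLemmas

open NormedSpace

lemma exp_smul_idem {A : Type*} [NormedRing A] [NormedAlgebra ℂ A] [CompleteSpace A]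
    (p : A) (hp : p * p = p) (a : ℂ) :
    exp (a • p) = 1 + (Complex.exp a - 1) • p := by
  have hpn : ∀ n : ℕ, p ^ (n + 1) = p := by
    intro n
    induction n with
    | zero => simp
    | succ k ih => rw [pow_succ, ih, hp]
  have hsum : Summable fun n : ℕ => ((n.factorial : ℂ)⁻¹) • (a • p) ^ n :=
    expSeries_summable' (𝕂 := ℂ) _
  rw [exp_eq_tsum ℂ]
  show (∑' n : ℕ, ((n.factorial : ℂ)⁻¹) • (a • p) ^ n) = _
  rw [Summable.tsum_eq_zero_add hsum]
  simp only [pow_zero, Nat.factorial_zero, Nat.cast_one, inv_one, one_smul]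
  congr 1
  have h1 : ∀ n : ℕ, (((n+1).factorial : ℂ)⁻¹) • (a • p) ^ (n + 1)
      = ((((n+1).factorial : ℂ)⁻¹) * a ^ (n + 1)) • p := by
    intro n
    rw [smul_pow, hpn, smul_smul]
  simp only [h1]
  have hc : Summable fun n : ℕ => (((n+1).factorial : ℂ)⁻¹) * a ^ (n + 1) := by
    have := expSeries_summable' (𝕂 := ℂ) a
    simp only [smul_eq_mul] at this
    exact ((summable_nat_add_iff (f := fun n : ℕ => ((n.factorial : ℂ))⁻¹ * a ^ n) 1).2 this)
  rw [Summable.tsum_smul_const hc p]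
  congr 1
  have := expSeries_summable' (𝕂 := ℂ) a
  simp only [smul_eq_mul] at this
  have h2 := Summable.tsum_eq_zero_add this
  simp only [pow_zero, Nat.factorial_zero, Nat.cast_one, inv_one, mul_one] at h2
  have h3 : Complex.exp a = ∑' n : ℕ, ((n.factorial : ℂ)⁻¹) * a ^ n := by
    rw [Complex.exp_eq_exp_ℂ, exp_eq_tsum ℂ]
    simp [smul_eq_mul]
  rw [h3, h2]
  ring

lemma exp_key {A : Type*} [NormedRing A] [NormedAlgebra ℂ A] [CompleteSpace A]
    (T : A) (hT : T ^ 4 = 1) :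
    exp (((Real.pi / 2 : ℝ) : ℂ) • (T - T ^ 3)) = T ^ 2 := by
  have e6 : T ^ 2 * T ^ 2 = 1 := by rw [← pow_add]; exact hT
  have e4 : T * T ^ 3 = 1 := by rw [← pow_succ']; exact hT
  have e5 : T ^ 3 * T = 1 := by rw [← pow_succ]; exact hT
  have e7 : T ^ 2 * T ^ 3 = T := by
    rw [show (3:ℕ) = 2 + 1 from rfl, pow_add, ← mul_assoc, e6, one_mul, pow_one]
  have e8 : T ^ 3 * T ^ 2 = T := by
    rw [show (3:ℕ) = 1 + 2 from rfl, pow_add, mul_assoc, e6, mul_one, pow_one]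
  have e9 : T ^ 3 * T ^ 3 = T ^ 2 := by
    rw [← pow_add, show (3+3:ℕ) = 4+2 from rfl, pow_add, hT, one_mul]
  have e2 : T * T ^ 2 = T ^ 3 := by rw [← pow_succ']
  have e3 : T ^ 2 * T = T ^ 3 := by rw [← pow_succ]
  have e1 : T * T = T ^ 2 := by rw [← pow_two]
  set E : A := (1/2 : ℂ) • (1 - T ^ 2) with hEdef
  set J : A := (1/2 : ℂ) • (T - T ^ 3) with hJdef
  have hEE : E * E = E := by
    rw [hEdef]
    simp only [smul_mul_assoc, mul_smul_comm, smul_smul, mul_sub, sub_mul, one_mul, mul_one, e6]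
    module
  have hJJ : J * J = -E := by
    rw [hEdef, hJdef]
    simp only [smul_mul_assoc, mul_smul_comm, smul_smul, mul_sub, sub_mul, one_mul, mul_one,
      e1, e4, e5, e9]
    module
  have hEJ : E * J = J := by
    rw [hEdef, hJdef]
    simp only [smul_mul_assoc, mul_smul_comm, smul_smul, mul_sub, sub_mul, one_mul, mul_one,
      e2, e3, e7, e8]
    module
  have hJE : J * E = J := by
    rw [hEdef, hJdef]
    simp only [smul_mul_assoc, mul_smul_comm, smul_smul, mul_sub, sub_mul, one_mul, mul_one,
      e2, e3, e7, e8]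
    module
  have key : ∀ a b c d : ℂ, (a • E + b • J) * (c • E + d • J)
      = (a * c - b * d) • E + (a * d + b * c) • J := by
    intro a b c d
    simp only [add_mul, mul_add, smul_mul_assoc, mul_smul_comm, smul_smul, hEE, hEJ, hJE, hJJ,
      smul_neg]
    module
  set p : A := (1/2 : ℂ) • E + (-(Complex.I)/2) • J with hpdef
  set q : A := (1/2 : ℂ) • E + ((Complex.I)/2) • J with hqdef
  have hpp : p * p = p := by
    rw [hpdef, key]
    match_scalars <;> simp [Complex.ext_iff] <;> ring
  have hqq : q * q = q := by
    rw [hqdef, key]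
    match_scalars <;> simp [Complex.ext_iff] <;> ring
  have hpq : p * q = 0 := by
    rw [hpdef, hqdef, key]
    match_scalars <;> simp [Complex.ext_iff] <;> ring
  have hqp : q * p = 0 := by
    rw [hqdef, hpdef, key]
    match_scalars <;> simp [Complex.ext_iff] <;> ring
  have hM : ((Real.pi / 2 : ℝ) : ℂ) • (T - T ^ 3)
      = ((Real.pi : ℂ) * Complex.I) • p + (-((Real.pi : ℂ) * Complex.I)) • q := by
    rw [hpdef, hqdef, hJdef]
    push_cast
    match_scalars <;> simp [Complex.ext_iff] <;> ring
  have hcomm : Commute (((Real.pi : ℂ) * Complex.I) • p) ((-((Real.pi : ℂ) * Complex.I)) • q) := by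
    have : Commute p q := by rw [Commute, SemiconjBy, hpq, hqp]
    exact (this.smul_left _).smul_right _
  rw [hM, NormedSpace.exp_add_of_commute_of_mem_ball (𝕂 := ℂ) hcomm
    ((expSeries_radius_eq_top ℂ A).symm ▸ edist_lt_top _ _)
    ((expSeries_radius_eq_top ℂ A).symm ▸ edist_lt_top _ _), exp_smul_idem p hpp, exp_smul_idem q hqq]
  rw [Complex.exp_pi_mul_I]
  have hexpneg : Complex.exp (-((Real.pi : ℂ) * Complex.I)) = -1 := by
    rw [Complex.exp_neg, Complex.exp_pi_mul_I]
    norm_num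
  rw [hexpneg]
  have h2 : ((-1 : ℂ) - 1) = (-2 : ℂ) := by norm_num
  rw [h2]
  have expand : (1 + (-2 : ℂ) • p) * (1 + (-2 : ℂ) • q)
      = 1 + (-2 : ℂ) • p + (-2 : ℂ) • q + ((4 : ℂ)) • (p * q) := by
    simp only [add_mul, mul_add, one_mul, mul_one, smul_mul_assoc, mul_smul_comm, smul_smul]
    module
  rw [expand, hpq, smul_zero, add_zero, hpdef, hqdef, hEdef]
  match_scalars <;> simp [Complex.ext_iff] <;> ring

lemma exp_key_matrix {m : Type*} [Fintype m] [DecidableEq m]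
    (T : Matrix m m ℂ) (hT : T ^ 4 = 1) :
    exp (((Real.pi / 2 : ℝ) : ℂ) • (T - T ^ 3)) = T ^ 2 := by
  letI : SeminormedRing (Matrix m m ℂ) := Matrix.linftyOpSemiNormedRing
  letI : NormedRing (Matrix m m ℂ) := Matrix.linftyOpNormedRing
  letI : NormedAlgebra ℂ (Matrix m m ℂ) := Matrix.linftyOpNormedAlgebra
  exact exp_key T hT

end ExpLemmas

noncomputable def Pm {V : Type*} [AddGroup V] [DecidableEq V] (a : V) : Matrix V V ℂ :=
  Matrix.of fun v w => if w - v = a then (1 : ℂ) else 0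

section PmLemmas

variable {V : Type*} [AddCommGroup V] [DecidableEq V] [Fintype V]

lemma Pm_mul (a b : V) : Pm a * Pm b = Pm (a + b) := by
  ext v w
  simp only [Pm, Matrix.mul_apply, Matrix.of_apply]
  rw [Finset.sum_eq_single (a + v)]
  · have h5 : (w - (a + v) = b) = (w - v = a + b) := by
      rw [eq_iff_iff, sub_eq_iff_eq_add, sub_eq_iff_eq_add]
      constructor <;> intro h <;> (rw [h]; abel)
    simp only [add_sub_cancel_right, eq_self_iff_true, if_true, one_mul, h5]
  · intro u _ hu
    rw [if_neg, zero_mul]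
    intro h
    exact hu (sub_eq_iff_eq_add.mp h)
  · intro h
    exact absurd (Finset.mem_univ _) h

omit [Fintype V] in
lemma Pm_zero : (Pm 0 : Matrix V V ℂ) = 1 := by
  ext v w
  simp [Pm, Matrix.one_apply, sub_eq_zero, eq_comm]

omit [Fintype V] in
lemma cay_eq_sum' (C : Finset V) :
    (Matrix.of fun v w =>
        (if w - v ∈ C then (1 : ℂ) else 0) - (if v - w ∈ C then (1 : ℂ) else 0))
      = ∑ c ∈ C, (Pm c - Pm (-c)) := by
  ext v w
  simp only [Matrix.of_apply, Matrix.sum_apply, Matrix.sub_apply, Pm]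
  rw [Finset.sum_sub_distrib]
  congr 1
  · rw [Finset.sum_ite_eq C (w - v) (fun _ => (1:ℂ))]
  · have : ∀ c ∈ C, (if w - v = -c then (1:ℂ) else 0) = if v - w = c then 1 else 0 := by
      intro c _
      have h : (w - v = -c) = (v - w = c) := by
        rw [eq_iff_iff]
        constructor <;> intro h
        · rw [show v - w = -(w - v) from (neg_sub w v).symm, h, neg_neg]
        · rw [show w - v = -(v - w) from (neg_sub v w).symm, h]
      simp only [h]
    rw [Finset.sum_congr rfl this, Finset.sum_ite_eq C (v - w) (fun _ => (1:ℂ))]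

lemma Pm_mulVec (b : V) :
    (Pm b : Matrix V V ℂ) *ᵥ Pi.single (0 : V) 1 = Pi.single (-b) 1 := by
  funext v
  rw [Matrix.mulVec_single_one]
  simp only [Pm, Matrix.col_apply, Matrix.of_apply, mul_one, zero_sub, Pi.single_apply]
  congr 1
  rw [eq_iff_iff]
  exact neg_eq_iff_eq_neg

lemma Pm_commute (a b : V) : Commute (Pm a : Matrix V V ℂ) (Pm b) := by
  rw [Commute, SemiconjBy, Pm_mul, Pm_mul, add_comm]

end PmLemmas

section Main

variable {n : ℕ}

lemma zmod4_add4 (a : Fin n → ZMod 4) : a + a + a + a = 0 := by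
  funext i
  simp only [Pi.add_apply, Pi.zero_apply]
  revert i
  intro i
  have : ∀ y : ZMod 4, y + y + y + y = 0 := by decide
  exact this (a i)

lemma Pm_pow4 (a : Fin n → ZMod 4) : (Pm a : Matrix _ _ ℂ) ^ 4 = 1 := by
  have h43 : (Pm a : Matrix _ _ ℂ) ^ 4 = Pm a ^ 3 * Pm a := pow_succ _ 3
  have h32 : (Pm a : Matrix _ _ ℂ) ^ 3 = Pm a ^ 2 * Pm a := pow_succ _ 2
  rw [h43, h32, pow_two, Pm_mul, Pm_mul, Pm_mul, zmod4_add4, Pm_zero]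

lemma Pm_pow3 (a : Fin n → ZMod 4) : (Pm a : Matrix _ _ ℂ) ^ 3 = Pm (-a) := by
  have h32 : (Pm a : Matrix _ _ ℂ) ^ 3 = Pm a ^ 2 * Pm a := pow_succ _ 2
  have h1 : (Pm a : Matrix _ _ ℂ) ^ 3 = Pm (a + a + a) := by
    rw [h32, pow_two, Pm_mul, Pm_mul]
  have h2 : a + a + a = -a := by
    funext i
    have : ∀ y : ZMod 4, y + y + y = -y := by decide
    exact this (a i)
  rw [h1, h2]

lemma Pm_pow2 (a : Fin n → ZMod 4) : (Pm a : Matrix _ _ ℂ) ^ 2 = Pm (2 • a) := by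
  rw [pow_two, Pm_mul, two_nsmul]

lemma exp_sum_eq (s : Finset (Fin n → ZMod 4)) :
    NormedSpace.exp (((Real.pi / 2 : ℝ) : ℂ) • ∑ c ∈ s, ((Pm c : Matrix _ _ ℂ) - Pm (-c)))
      = Pm (2 • ∑ c ∈ s, c) := by
  induction s using Finset.cons_induction with
  | empty => simp [NormedSpace.exp_zero, Pm_zero]
  | cons a s ha ih =>
    rw [Finset.sum_cons, smul_add]
    have hcomm : Commute (((Real.pi / 2 : ℝ) : ℂ) • ((Pm a : Matrix _ _ ℂ) - Pm (-a)))
        (((Real.pi / 2 : ℝ) : ℂ) • ∑ c ∈ s, ((Pm c : Matrix _ _ ℂ) - Pm (-c))) := by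
      have hc : Commute ((Pm a : Matrix _ _ ℂ) - Pm (-a))
          (∑ c ∈ s, ((Pm c : Matrix _ _ ℂ) - Pm (-c))) := by
        apply Commute.sum_right
        intro c _
        exact ((Pm_commute a c).sub_right (Pm_commute a (-c))).sub_left
          ((Pm_commute (-a) c).sub_right (Pm_commute (-a) (-c)))
      exact (hc.smul_left _).smul_right _
    rw [Matrix.exp_add_of_commute _ _ hcomm, ih]
    have hfac : NormedSpace.exp (((Real.pi / 2 : ℝ) : ℂ) • ((Pm a : Matrix _ _ ℂ) - Pm (-a)))
        = Pm (2 • a) := by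
      rw [← Pm_pow3, exp_key_matrix (Pm a) (Pm_pow4 a), Pm_pow2]
    rw [hfac, Pm_mul, Finset.sum_cons, smul_add]

end Main

/-- Perfect state transfer (between distinct vertices) from `a` to `b` at time `t`. -/
def PSTproper {V : Type*} [Fintype V] [DecidableEq V]
    (A : Matrix V V ℂ) (a b : V) (t : ℝ) : Prop :=
  a ≠ b ∧ PST A a b t

/-- for `C ⊆ (ℤ/4ℤ)^n \ {0}` with `C ∩ (-C) = ∅` and `σ = Σ_{w ∈ C} w`,
one has `U(π/2) e_0 = e_{2σ}`; in particular PST occurs from `0` to `2σ` at time `π/2` iff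
`σ` has order `4` (equivalently `2σ ≠ 0`). -/
theorem stmt11 (n : ℕ) (hn : 1 ≤ n) (C : Finset (Fin n → ZMod 4))
    (h0 : (0 : Fin n → ZMod 4) ∉ C) (hd : ∀ c ∈ C, -c ∉ C) :
    (transU (cayAddAdj C) (Real.pi / 2)) *ᵥ (Pi.single (0 : Fin n → ZMod 4) 1) =
      (Pi.single (2 • ∑ w ∈ C, w) 1 : (Fin n → ZMod 4) → ℂ) ∧
    (PSTproper (cayAddAdj C) 0 (2 • ∑ w ∈ C, w) (Real.pi / 2) ↔
      addOrderOf (∑ w ∈ C, w) = 4) ∧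
    (addOrderOf (∑ w ∈ C, w) = 4 ↔ 2 • (∑ w ∈ C, w) ≠ 0) := by
  set σ := ∑ w ∈ C, w with hσ
  have hneg : -(2 • σ) = (2 • σ : Fin n → ZMod 4) := by
    funext i
    simp only [Pi.neg_apply, Pi.smul_apply]
    have : ∀ y : ZMod 4, -(2 • y) = (2 • y : ZMod 4) := by decide
    exact this (σ i)
  have h1 : transU (cayAddAdj C) (Real.pi / 2) *ᵥ Pi.single (0 : Fin n → ZMod 4) 1
      = Pi.single (2 • σ) 1 := by
    have hU : transU (cayAddAdj C) (Real.pi / 2) = Pm (2 • σ) := by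
      rw [transU]
      have hc : cayAddAdj C = ∑ c ∈ C, ((Pm c : Matrix _ _ ℂ) - Pm (-c)) := cay_eq_sum' C
      rw [hc]
      exact exp_sum_eq C
    rw [hU, Pm_mulVec, hneg]
  have h4σ : (4 : ℕ) • σ = 0 := by
    funext i
    simp only [Pi.smul_apply, Pi.zero_apply]
    have : ∀ y : ZMod 4, (4 : ℕ) • y = 0 := by decide
    exact this (σ i)
  have hdvd : addOrderOf σ ∣ 4 := addOrderOf_dvd_of_nsmul_eq_zero h4σ
  have h2iff : addOrderOf σ = 4 ↔ 2 • σ ≠ 0 := by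
    constructor
    · intro h4 h2
      have hd2 : addOrderOf σ ∣ 2 := addOrderOf_dvd_of_nsmul_eq_zero h2
      rw [h4] at hd2
      exact absurd (Nat.le_of_dvd two_pos hd2) (by norm_num)
    · intro h2
      have hpos : 0 < addOrderOf σ := addOrderOf_pos σ
      have hle : addOrderOf σ ≤ 4 := Nat.le_of_dvd (by norm_num) hdvd
      have hcases : addOrderOf σ = 1 ∨ addOrderOf σ = 2 ∨ addOrderOf σ = 4 := by
        interval_cases h : addOrderOf σ <;> omega
      rcases hcases with h | h | h
      · exfalso
        apply h2
        exact addOrderOf_dvd_iff_nsmul_eq_zero.mp (h ▸ one_dvd 2)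
      · exfalso
        apply h2
        exact addOrderOf_dvd_iff_nsmul_eq_zero.mp (by rw [h])
      · exact h
  refine ⟨h1, ?_, h2iff⟩
  constructor
  · rintro ⟨hne, _⟩
    exact h2iff.mpr (fun h => hne h.symm)
  · intro h4
    have h2 := h2iff.mp h4
    exact ⟨fun e => h2 e.symm, ⟨1, norm_one, by rw [h1, one_smul]⟩⟩
end

section
/- Let n ≥ 1 and let C ⊆ (ℤ/4ℤ)^n \ {0} satisfy C ∩ (−C) = ∅. Let A be the adjacency matrix of Cay((ℤ/4ℤ)^n, C) and U(t) = exp(tA). Then for every element z ∈ (ℤ/4ℤ)^n of order 4, perfect state transfer does not occur from 0 to z at any time τ > 0; consequently the oriented Cayley graph Cay((ℤ/4ℤ)^n, C) does not have multiple state transfer on a set of size 4. -/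
open Matrix

namespace Stmt12Aux

open Complex Nat

noncomputable def iu (x : ZMod 4) : ℂ := Complex.I ^ x.val

def sg (x : ZMod 4) : ℤ := if x = 1 then 1 else if x = 3 then -1 else 0

lemma zmod4_cases : ∀ x : ZMod 4, x = 0 ∨ x = 1 ∨ x = 2 ∨ x = 3 := by decide

lemma I_pow_mod (k : ℕ) : Complex.I ^ (k % 4) = Complex.I ^ k := by
  conv_rhs => rw [← Nat.mod_add_div k 4]
  rw [pow_add, pow_mul, Complex.I_pow_four, one_pow, mul_one]

lemma iu_add (x y : ZMod 4) : iu (x + y) = iu x * iu y := by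
  rw [iu, iu, iu, ZMod.val_add, I_pow_mod, pow_add]

lemma iu0 : iu 0 = 1 := by norm_num [iu, show ((0:ZMod 4)).val = 0 from rfl]
lemma iu1 : iu 1 = Complex.I := by norm_num [iu, show ((1:ZMod 4)).val = 1 from rfl]
lemma iu2 : iu 2 = -1 := by
  norm_num [iu, show ((2:ZMod 4)).val = 2 from rfl, Complex.I_sq]
lemma iu3 : iu 3 = -Complex.I := by
  have : Complex.I ^ 3 = -Complex.I := by
    rw [pow_succ, Complex.I_sq]; ring
  norm_num [iu, show ((3:ZMod 4)).val = 3 from rfl, this]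

lemma iu_zero : iu 0 = 1 := iu0

lemma iu_ne_zero (x : ZMod 4) : iu x ≠ 0 := pow_ne_zero _ Complex.I_ne_zero

lemma iu_inj {x y : ZMod 4} (h : iu x = iu y) : x = y := by
  rcases zmod4_cases x with rfl|rfl|rfl|rfl <;> rcases zmod4_cases y with rfl|rfl|rfl|rfl <;>
    simp_all [iu0, iu1, iu2, iu3, Complex.ext_iff] <;> norm_num at h

lemma iu_neg_sub (x : ZMod 4) : iu (-x) - iu x = (-2 * Complex.I) * (sg x : ℂ) := by
  rcases zmod4_cases x with rfl|rfl|rfl|rfl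
  · rw [show (-(0:ZMod 4)) = 0 by decide, iu0, sg, if_neg (by decide), if_neg (by decide)]
    norm_num
  · rw [show (-(1:ZMod 4)) = 3 by decide, iu3, iu1, sg, if_pos (by decide)]; norm_num; ring
  · rw [show (-(2:ZMod 4)) = 2 by decide, iu2, sg, if_neg (by decide), if_neg (by decide)]
    norm_num
  · rw [show (-(3:ZMod 4)) = 1 by decide, iu1, iu3, sg, if_neg (by decide), if_pos (by decide)]
    norm_num; ring

lemma sg_two_mul : ∀ x : ZMod 4, sg (2 * x) = 0 := by decide

lemma sg_zero : sg 0 = 0 := by decide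


section Exp

variable {V : Type*} [Fintype V] [DecidableEq V]

lemma vecMul_smul_mat (f : V → ℂ) (c : ℂ) (A : Matrix V V ℂ) :
    f ᵥ* (c • A) = c • (f ᵥ* A) := by
  ext i
  simp only [Matrix.vecMul, dotProduct, Matrix.smul_apply, Pi.smul_apply, smul_eq_mul,
    Finset.mul_sum]
  exact Finset.sum_congr rfl fun _ _ => by ring

lemma vecMul_exp (M : Matrix V V ℂ) (f : V → ℂ) (μ : ℂ)
    (h : f ᵥ* M = μ • f) : f ᵥ* (NormedSpace.exp M) = Complex.exp μ • f := by
  letI : SeminormedRing (Matrix V V ℂ) := Matrix.linftyOpSemiNormedRing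
  letI : NormedRing (Matrix V V ℂ) := Matrix.linftyOpNormedRing
  letI : NormedAlgebra ℂ (Matrix V V ℂ) := Matrix.linftyOpNormedAlgebra
  have hpow : ∀ N : ℕ, f ᵥ* (M ^ N) = (μ ^ N) • f := by
    intro N
    induction N with
    | zero => simp
    | succ N ih =>
        rw [pow_succ, ← Matrix.vecMul_vecMul, ih, Matrix.smul_vecMul, h, smul_smul, pow_succ]
  let L0 : Matrix V V ℂ →ₗ[ℂ] (V → ℂ) :=
    { toFun := fun N => f ᵥ* N
      map_add' := fun A B => Matrix.vecMul_add A B f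
      map_smul' := fun c A => vecMul_smul_mat f c A }
  let L : Matrix V V ℂ →L[ℂ] (V → ℂ) := L0.toContinuousLinearMap
  have hsum : Summable (fun N : ℕ => (N !⁻¹ : ℂ) • M ^ N) :=
    NormedSpace.expSeries_summable' (𝕂 := ℂ) M
  have hsumc : Summable (fun N : ℕ => (N !⁻¹ : ℂ) • μ ^ N) :=
    NormedSpace.expSeries_summable' (𝕂 := ℂ) μ
  have hL : ∀ A, L A = f ᵥ* A := fun _ => rfl
  calc f ᵥ* (NormedSpace.exp M) = L (∑' N : ℕ, (N !⁻¹ : ℂ) • M ^ N) := by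
        rw [hL, NormedSpace.exp_eq_tsum (𝕂 := ℂ)]
    _ = ∑' N : ℕ, L ((N !⁻¹ : ℂ) • M ^ N) := L.map_tsum hsum
    _ = ∑' N : ℕ, ((N !⁻¹ : ℂ) • μ ^ N) • f := by
        refine tsum_congr fun N => ?_
        rw [L.map_smul, hL, hpow, smul_smul, smul_eq_mul]
    _ = (∑' N : ℕ, (N !⁻¹ : ℂ) • μ ^ N) • f := hsumc.tsum_smul_const f
    _ = Complex.exp μ • f := by
        rw [Complex.exp_eq_exp_ℂ, NormedSpace.exp_eq_tsum (𝕂 := ℂ)]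

end Exp


section Cay

variable {V : Type*} [AddCommGroup V] [Fintype V] [DecidableEq V]

lemma vecMul_cay (C : Finset V) (f : V → ℂ) (hf : ∀ a b : V, f (a + b) = f a * f b) :
    f ᵥ* (cayAddAdj C) = (∑ c ∈ C, (f (-c) - f c)) • f := by
  ext w
  simp only [Matrix.vecMul, dotProduct, cayAddAdj, Matrix.of_apply, Pi.smul_apply,
    smul_eq_mul, mul_sub, mul_ite, mul_one, mul_zero]
  rw [Finset.sum_sub_distrib]
  have h1 : ∑ v : V, (if w - v ∈ C then f v else 0) = ∑ c ∈ C, f (w + -c) := by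
    rw [Fintype.sum_equiv (Equiv.subLeft w) _ (fun u => if u ∈ C then f (w + -u) else 0)
      (fun v => by simp [Equiv.subLeft, sub_sub_cancel, sub_eq_add_neg])]
    rw [Finset.sum_ite_mem, Finset.univ_inter]
  have h2 : ∑ v : V, (if v - w ∈ C then f v else 0) = ∑ c ∈ C, f (c + w) := by
    rw [Fintype.sum_equiv (Equiv.subRight w) _ (fun u => if u ∈ C then f (u + w) else 0)
      (fun v => by simp [Equiv.subRight, sub_add_cancel])]
    rw [Finset.sum_ite_mem, Finset.univ_inter]
  rw [h1, h2, Finset.sum_sub_distrib, sub_mul, Finset.sum_mul, Finset.sum_mul]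
  congr 1
  · exact Finset.sum_congr rfl fun c _ => by rw [hf w (-c)]; ring
  · exact Finset.sum_congr rfl fun c _ => by rw [hf c w]

end Cay


variable {n : ℕ}

noncomputable def chi (j v : Fin n → ZMod 4) : ℂ := iu (∑ m, j m * v m)

def kk (C : Finset (Fin n → ZMod 4)) (j : Fin n → ZMod 4) : ℤ :=
  ∑ c ∈ C, sg (∑ m, j m * c m)

lemma chi_add (j a b : Fin n → ZMod 4) : chi j (a + b) = chi j a * chi j b := by
  rw [chi, chi, chi, ← iu_add]
  congr 1
  rw [← Finset.sum_add_distrib]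
  exact Finset.sum_congr rfl fun m _ => by rw [Pi.add_apply, mul_add]

lemma chi_zero (j : Fin n → ZMod 4) : chi j 0 = 1 := by
  rw [chi]
  have : ∑ m, j m * (0 : Fin n → ZMod 4) m = 0 := by simp
  rw [this, iu0]

lemma chi_zero_left (v : Fin n → ZMod 4) : chi 0 v = 1 := by
  rw [chi]
  have : ∑ m, (0 : Fin n → ZMod 4) m * v m = 0 := by simp
  rw [this, iu0]

lemma chi_ne_zero (j v : Fin n → ZMod 4) : chi j v ≠ 0 := iu_ne_zero _

lemma kk_zero (C : Finset (Fin n → ZMod 4)) : kk C 0 = 0 := by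
  rw [kk]
  refine Finset.sum_eq_zero fun c _ => ?_
  have : ∑ m, (0 : Fin n → ZMod 4) m * c m = 0 := by simp
  rw [this, sg_zero]

lemma sum_single_mul (m : Fin n) (x : ZMod 4) (v : Fin n → ZMod 4) :
    ∑ m', (Pi.single m x : Fin n → ZMod 4) m' * v m' = x * v m := by
  rw [Finset.sum_eq_single m]
  · rw [Pi.single_eq_same]
  · intro m' _ hne
    rw [Pi.single_eq_of_ne hne, zero_mul]
  · intro habs
    exact absurd (Finset.mem_univ m) habs

lemma chi_neg_sum (j c : Fin n → ZMod 4) : chi j (-c) = iu (-(∑ m, j m * c m)) := by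
  rw [chi]
  congr 1
  rw [← Finset.sum_neg_distrib]
  exact Finset.sum_congr rfl fun m _ => by rw [Pi.neg_apply, mul_neg]

lemma vecMul_cay_chi (C : Finset (Fin n → ZMod 4)) (j : Fin n → ZMod 4) :
    (chi j) ᵥ* (cayAddAdj C) = ((-2 * Complex.I) * (kk C j : ℂ)) • chi j := by
  rw [vecMul_cay C (chi j) (chi_add j)]
  congr 1
  rw [kk]
  push_cast
  rw [Finset.mul_sum]
  refine Finset.sum_congr rfl fun c _ => ?_
  rw [chi_neg_sum, chi, iu_neg_sub]

lemma vecMul_transU (C : Finset (Fin n → ZMod 4)) (τ : ℝ) (j : Fin n → ZMod 4) :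
    (chi j) ᵥ* (transU (cayAddAdj C) τ) =
      Complex.exp ((τ : ℂ) * (-2 * Complex.I * (kk C j : ℂ))) • chi j := by
  rw [transU]
  refine vecMul_exp _ _ _ ?_
  rw [vecMul_smul_mat, vecMul_cay_chi, smul_smul]

lemma pst_cond {C : Finset (Fin n → ZMod 4)} {a b : Fin n → ZMod 4} {τ : ℝ}
    (h : PST (cayAddAdj C) a b τ) (j : Fin n → ZMod 4) :
    Complex.exp ((τ : ℂ) * (-2 * Complex.I * (kk C j : ℂ))) = chi j (b - a) := by
  obtain ⟨lam, _, heq⟩ := h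
  have key : ∀ j : Fin n → ZMod 4,
      Complex.exp ((τ : ℂ) * (-2 * Complex.I * (kk C j : ℂ))) * chi j a = lam * chi j b := by
    intro j
    have h1 := congrArg (fun u => dotProduct (chi j) u) heq
    rwa [Matrix.dotProduct_mulVec, vecMul_transU, smul_dotProduct,
      dotProduct_smul, dotProduct_single, dotProduct_single,
      smul_eq_mul, smul_eq_mul, mul_one, mul_one] at h1
  have h0 := key 0
  rw [kk_zero, chi_zero_left, chi_zero_left, mul_one, mul_one] at h0
  simp only [Int.cast_zero, mul_zero, Complex.exp_zero] at h0
  have hj := key j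
  rw [← h0, one_mul] at hj
  have hb : chi j b = chi j (b - a) * chi j a := by
    rw [← chi_add, sub_add_cancel]
  rw [hb] at hj
  exact mul_right_cancel₀ (chi_ne_zero j a) hj


lemma parity_nat {J : Type*} (q q' : ℕ) (hq : q ≠ 0) (hq' : q' ≠ 0) (M M' : J → ℕ)
    (h : ∀ j, M j * q = M' j * q')
    (ho : ∃ j, Odd (M j)) (ho' : ∃ j, Odd (M' j)) :
    ∀ j, (Odd (M j) ↔ Odd (M' j)) := by
  obtain ⟨j2, hj2⟩ := ho
  obtain ⟨j2', hj2'⟩ := ho'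
  set e := q.factorization 2 with he
  set e' := q'.factorization 2 with he'
  set u := ordCompl[2] q with hu0
  set u' := ordCompl[2] q' with hu'0
  have hqe : 2 ^ e * u = q := Nat.ordProj_mul_ordCompl_eq_self q 2
  have hqe' : 2 ^ e' * u' = q' := Nat.ordProj_mul_ordCompl_eq_self q' 2
  have hu : Odd u := Nat.odd_iff.2 (Nat.two_dvd_ne_zero.1 (Nat.not_dvd_ordCompl Nat.prime_two hq))
  have hu' : Odd u' := Nat.odd_iff.2 (Nat.two_dvd_ne_zero.1 (Nat.not_dvd_ordCompl Nat.prime_two hq'))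
  have key : ∀ (a b : ℕ) (ea eb : ℕ) (ua ub : ℕ), Odd a → Odd ua →
      a * (2 ^ ea * ua) = b * (2 ^ eb * ub) → ¬ (ea < eb) := by
    intro a b ea eb ua ub ha hua heq hlt
    have hdvd : (2:ℕ) ^ (ea + 1) ∣ b * (2 ^ eb * ub) :=
      Dvd.dvd.mul_left (dvd_mul_of_dvd_left (pow_dvd_pow 2 (by omega)) ub) b
    rw [← heq, show a * (2 ^ ea * ua) = 2 ^ ea * (a * ua) by ring, pow_succ] at hdvd
    have h2 : 2 ∣ a * ua :=
      (Nat.mul_dvd_mul_iff_left (by positivity : 0 < (2:ℕ) ^ ea)).mp hdvd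
    have h3 := Nat.odd_iff.1 (ha.mul hua)
    omega
  have hee : e = e' := by
    have h1 := key (M j2) (M' j2) e e' u u' hj2 hu (by rw [hqe, hqe']; exact h j2)
    have h2 := key (M' j2') (M j2') e' e u' u hj2' hu' (by rw [hqe, hqe']; exact (h j2').symm)
    omega
  intro j
  have hj := h j
  rw [← hqe, ← hqe', ← hee] at hj
  have hcan : M j * u = M' j * u' := by
    have : 2 ^ e * (M j * u) = 2 ^ e * (M' j * u') := by
      rw [show (2:ℕ) ^ e * (M j * u) = M j * (2^e * u) by ring,
        show (2:ℕ) ^ e * (M' j * u') = M' j * (2^e * u') by ring]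
      exact hj
    exact Nat.eq_of_mul_eq_mul_left (by positivity : 0 < (2:ℕ) ^ e) this
  constructor
  · intro hOdd
    have : Odd (M' j * u') := hcan ▸ hOdd.mul hu
    exact (Nat.odd_mul.mp this).1
  · intro hOdd
    have : Odd (M j * u) := hcan.symm ▸ hOdd.mul hu'
    exact (Nat.odd_mul.mp this).1

lemma parity_int {J : Type*} (Q Q' : ℤ) (hQ : Q ≠ 0) (hQ' : Q' ≠ 0) (M M' : J → ℤ)
    (h : ∀ j, M j * Q = M' j * Q')
    (ho : ∃ j, Odd (M j)) (ho' : ∃ j, Odd (M' j)) :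
    ∀ j, (Odd (M j) ↔ Odd (M' j)) := by
  have key := parity_nat Q.natAbs Q'.natAbs (Int.natAbs_ne_zero.2 hQ) (Int.natAbs_ne_zero.2 hQ')
    (fun j => (M j).natAbs) (fun j => (M' j).natAbs)
    (fun j => by rw [← Int.natAbs_mul, ← Int.natAbs_mul, h j])
    (ho.imp fun j hj => Int.natAbs_odd.2 hj) (ho'.imp fun j hj => Int.natAbs_odd.2 hj)
  intro j
  exact (Int.natAbs_odd (n := M j)).symm.trans ((key j).trans Int.natAbs_odd)

variable {n : ℕ}

def Cnd (C : Finset (Fin n → ZMod 4)) (z : Fin n → ZMod 4) (τ : ℝ) : Prop :=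
  ∀ j : Fin n → ZMod 4, Complex.exp ((τ:ℂ) * (-2 * Complex.I * (kk C j : ℂ))) = chi j z


lemma chi_single (m : Fin n) (x : ZMod 4) (z : Fin n → ZMod 4) :
    chi (Pi.single m x) z = iu (x * z m) := by
  rw [chi, sum_single_mul]

lemma kk_single_two (C : Finset (Fin n → ZMod 4)) (m : Fin n) :
    kk C (Pi.single m 2) = 0 := by
  rw [kk]
  refine Finset.sum_eq_zero fun c _ => ?_
  rw [sum_single_mul, sg_two_mul]

lemma cnd_two_torsion {C : Finset (Fin n → ZMod 4)} {z : Fin n → ZMod 4} {τ : ℝ}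
    (h : Cnd C z τ) : ∀ m, 2 * z m = 0 := by
  intro m
  have hj := h (Pi.single m 2)
  rw [kk_single_two, chi_single] at hj
  simp only [Int.cast_zero, mul_zero, Complex.exp_zero] at hj
  have : iu (2 * z m) = iu 0 := by rw [← hj, iu0]
  exact iu_inj this

lemma cnd_exists_m {C : Finset (Fin n → ZMod 4)} {z : Fin n → ZMod 4} {τ : ℝ}
    (h : Cnd C z τ) (h2 : ∀ m, 2 * z m = 0) :
    ∀ j, ∃ M : ℤ, 2 * (kk C j : ℝ) * τ = M * Real.pi ∧ chi j z = (-1 : ℂ) ^ M := by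
  intro j
  have hd : 2 * (∑ m, j m * z m) = 0 := by
    rw [Finset.mul_sum]
    refine Finset.sum_eq_zero fun m _ => ?_
    rw [mul_left_comm, h2 m, mul_zero]
  have hchi : chi j z = iu (∑ m, j m * z m) := rfl
  rcases zmod4_cases (∑ m, j m * z m) with hs|hs|hs|hs
  · rw [hs, iu0] at hchi
    have hexp := h j
    rw [hchi] at hexp
    obtain ⟨N, hN⟩ := Complex.exp_eq_one_iff.1 hexp
    refine ⟨-2 * N, ?_, ?_⟩
    · have e1 : ((τ:ℂ)) * (-2 * Complex.I * (kk C j : ℂ))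
          = ((-2 * (kk C j : ℝ) * τ : ℝ) : ℂ) * Complex.I := by push_cast; ring
      have e2 : (N:ℂ) * (2 * (Real.pi:ℂ) * Complex.I)
          = ((2 * (N:ℝ) * Real.pi : ℝ) : ℂ) * Complex.I := by push_cast; ring
      rw [e1, e2] at hN
      have hre : (-2 * (kk C j : ℝ) * τ : ℝ) = 2 * (N:ℝ) * Real.pi := by
        exact_mod_cast mul_right_cancel₀ Complex.I_ne_zero hN
      push_cast
      linarith
    · rw [hchi]
      exact (Even.neg_one_zpow ⟨-N, by ring⟩).symm
  · rw [hs] at hd; exact absurd hd (by decide)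
  · rw [hs, iu2] at hchi
    have hexp := h j
    rw [hchi] at hexp
    have hone : Complex.exp ((τ:ℂ) * (-2 * Complex.I * (kk C j : ℂ)) + Real.pi * Complex.I)
        = 1 := by
      rw [Complex.exp_add, hexp, Complex.exp_pi_mul_I]; ring
    obtain ⟨N, hN⟩ := Complex.exp_eq_one_iff.1 hone
    refine ⟨1 - 2 * N, ?_, ?_⟩
    · have e1 : ((τ:ℂ)) * (-2 * Complex.I * (kk C j : ℂ)) + Real.pi * Complex.I
          = ((-2 * (kk C j : ℝ) * τ + Real.pi : ℝ) : ℂ) * Complex.I := by push_cast; ring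
      have e2 : (N:ℂ) * (2 * (Real.pi:ℂ) * Complex.I)
          = ((2 * (N:ℝ) * Real.pi : ℝ) : ℂ) * Complex.I := by push_cast; ring
      rw [e1, e2] at hN
      have hre : (-2 * (kk C j : ℝ) * τ + Real.pi : ℝ) = 2 * (N:ℝ) * Real.pi := by
        exact_mod_cast mul_right_cancel₀ Complex.I_ne_zero hN
      push_cast
      linarith
    · rw [hchi]
      exact (Odd.neg_one_zpow ⟨-N, by ring⟩).symm
  · rw [hs] at hd; exact absurd hd (by decide)

lemma odd_ne_zero {x : ℤ} (hx : Odd x) : x ≠ 0 := by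
  intro h0
  rw [h0] at hx
  have := Int.odd_iff.1 hx
  omega

lemma cnd_unique {C : Finset (Fin n → ZMod 4)} {z z' : Fin n → ZMod 4} {τ τ' : ℝ}
    (hz : z ≠ 0) (hz' : z' ≠ 0) (h : Cnd C z τ) (h' : Cnd C z' τ') : z = z' := by
  have h2 := cnd_two_torsion h
  have h2' := cnd_two_torsion h'
  choose mm hm1 hm2 using cnd_exists_m h h2
  choose mm' hm1' hm2' using cnd_exists_m h' h2'
  -- a coordinate where z is 2
  obtain ⟨m0, hm0⟩ := Function.ne_iff.1 hz
  have hzm0 : z m0 = 2 := by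
    rcases zmod4_cases (z m0) with h4|h4|h4|h4
    · exact absurd h4 (by simpa using hm0)
    · have := h2 m0; rw [h4] at this; exact absurd this (by decide)
    · exact h4
    · have := h2 m0; rw [h4] at this; exact absurd this (by decide)
  obtain ⟨m0', hm0'⟩ := Function.ne_iff.1 hz'
  have hzm0' : z' m0' = 2 := by
    rcases zmod4_cases (z' m0') with h4|h4|h4|h4
    · exact absurd h4 (by simpa using hm0')
    · have := h2' m0'; rw [h4] at this; exact absurd this (by decide)
    · exact h4
    · have := h2' m0'; rw [h4] at this; exact absurd this (by decide)
  set j2 := (Pi.single m0 1 : Fin n → ZMod 4) with hj2def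
  set j2' := (Pi.single m0' 1 : Fin n → ZMod 4) with hj2'def
  have hchi2 : chi j2 z = -1 := by rw [hj2def, chi_single, hzm0, one_mul, iu2]
  have hchi2' : chi j2' z' = -1 := by rw [hj2'def, chi_single, hzm0', one_mul, iu2]
  have hodd2 : Odd (mm j2) := by
    rcases Int.even_or_odd (mm j2) with he|ho
    · exfalso
      have := hm2 j2
      rw [hchi2, he.neg_one_zpow] at this
      norm_num at this
    · exact ho
  have hodd2' : Odd (mm' j2') := by
    rcases Int.even_or_odd (mm' j2') with he|ho
    · exfalso
      have := hm2' j2'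
      rw [hchi2', he.neg_one_zpow] at this
      norm_num at this
    · exact ho
  have kk_ne : ∀ (jj : Fin n → ZMod 4) (mmf : (Fin n → ZMod 4) → ℤ),
      (2 * (kk C jj : ℝ) * τ = mmf jj * Real.pi ∨ 2 * (kk C jj : ℝ) * τ' = mmf jj * Real.pi) →
      Odd (mmf jj) → kk C jj ≠ 0 := by
    intro jj mmf heq hodd hk0
    have hmm : (mmf jj : ℝ) * Real.pi = 0 := by
      rcases heq with heq | heq <;> rw [hk0] at heq <;> push_cast at heq <;> linarith
    rcases mul_eq_zero.1 hmm with hc | hc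
    · exact odd_ne_zero hodd (by exact_mod_cast hc)
    · exact Real.pi_ne_zero hc
  have hk2 : kk C j2 ≠ 0 := kk_ne j2 mm (Or.inl (hm1 j2)) hodd2
  have hk2' : kk C j2' ≠ 0 := kk_ne j2' mm' (Or.inr (hm1' j2')) hodd2'
  have cross : ∀ j, mm j * kk C j2 = kk C j * mm j2 := by
    intro j
    have a1 := hm1 j
    have a2 := hm1 j2
    have hreal : (mm j : ℝ) * (kk C j2 : ℝ) * Real.pi = (kk C j : ℝ) * (mm j2 : ℝ) * Real.pi := by
      linear_combination (kk C j : ℝ) * a2 - (kk C j2 : ℝ) * a1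
    have := mul_right_cancel₀ Real.pi_ne_zero hreal
    exact_mod_cast this
  have cross' : ∀ j, mm' j * kk C j2' = kk C j * mm' j2' := by
    intro j
    have a1 := hm1' j
    have a2 := hm1' j2'
    have hreal : (mm' j : ℝ) * (kk C j2' : ℝ) * Real.pi
        = (kk C j : ℝ) * (mm' j2' : ℝ) * Real.pi := by
      linear_combination (kk C j : ℝ) * a2 - (kk C j2' : ℝ) * a1
    have := mul_right_cancel₀ Real.pi_ne_zero hreal
    exact_mod_cast this
  have hp := parity_int (kk C j2 * mm' j2') (kk C j2' * mm j2)
    (mul_ne_zero hk2 (odd_ne_zero hodd2')) (mul_ne_zero hk2' (odd_ne_zero hodd2))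
    mm mm'
    (fun j => by linear_combination (mm' j2') * cross j - (mm j2) * cross' j)
    ⟨j2, hodd2⟩ ⟨j2', hodd2'⟩
  have hchieq : ∀ j, chi j z = chi j z' := by
    intro j
    rw [hm2 j, hm2' j]
    rcases Int.even_or_odd (mm j) with he|ho
    · have he' : Even (mm' j) := by
        rcases Int.even_or_odd (mm' j) with he'|ho'
        · exact he'
        · exact absurd ((hp j).2 ho') (Int.not_odd_iff_even.2 he)
      rw [he.neg_one_zpow, he'.neg_one_zpow]
    · rw [ho.neg_one_zpow, ((hp j).1 ho).neg_one_zpow]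
  funext m
  have := hchieq (Pi.single m 1)
  rw [chi_single, chi_single, one_mul, one_mul] at this
  exact iu_inj this


end Stmt12Aux

open Stmt12Aux

/-- for any `C ⊆ (ℤ/4ℤ)^n \ {0}` with `C ∩ (-C) = ∅` and any `z` of
order `4`, PST does not occur from `0` to `z` at any time `τ > 0`; consequently the
oriented Cayley graph `Cay((ℤ/4ℤ)^n, C)` has no multiple state transfer on a set of
size `4`. -/
theorem stmt12 (n : ℕ) (hn : 1 ≤ n) (C : Finset (Fin n → ZMod 4))
    (h0 : (0 : Fin n → ZMod 4) ∉ C) (hd : ∀ c ∈ C, -c ∉ C) :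
    (∀ z : Fin n → ZMod 4, addOrderOf z = 4 →
      ∀ τ : ℝ, 0 < τ → ¬ PST (cayAddAdj C) 0 z τ) ∧
    (∀ a : Fin n → ZMod 4, (Sset (cayAddAdj C) a).ncard ≠ 4) := by
  constructor
  · intro z hz4 τ hτ hPST
    have hcnd : Cnd C z τ := by
      intro j
      have := pst_cond hPST j
      rwa [sub_zero] at this
    have h2 := cnd_two_torsion hcnd
    have hsm : (2 : ℕ) • z = 0 := by
      funext m
      simpa [nsmul_eq_mul] using h2 m
    have hdvd := addOrderOf_dvd_of_nsmul_eq_zero hsm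
    rw [hz4] at hdvd
    have := Nat.le_of_dvd (by norm_num) hdvd
    omega
  · intro a hcard
    have hU : ∀ b ∈ Sset (cayAddAdj C) a, ∀ c ∈ Sset (cayAddAdj C) a, b ≠ a → c ≠ a → b = c := by
      intro b hb c hc hba hca
      obtain ⟨τb, hτb, hPb⟩ := hb
      obtain ⟨τc, hτc, hPc⟩ := hc
      have hcb : Cnd C (b - a) τb := fun j => pst_cond hPb j
      have hcc : Cnd C (c - a) τc := fun j => pst_cond hPc j
      have := cnd_unique (sub_ne_zero_of_ne hba) (sub_ne_zero_of_ne hca) hcb hcc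
      exact sub_left_injective this
    by_cases hex : ∃ b ∈ Sset (cayAddAdj C) a, b ≠ a
    · obtain ⟨b0, hb0, hb0ne⟩ := hex
      have hsub : Sset (cayAddAdj C) a ⊆ {a, b0} := by
        intro x hx
        by_cases hxa : x = a
        · exact Or.inl hxa
        · exact Or.inr (hU x hx b0 hb0 hxa hb0ne)
      have hle := Set.ncard_le_ncard hsub (Set.toFinite _)
      have h2 : ({a, b0} : Set (Fin n → ZMod 4)).ncard ≤ 2 :=
        (Set.ncard_insert_le a {b0}).trans (by simp)
      omega
    · push_neg at hex
      have hsub : Sset (cayAddAdj C) a ⊆ {a} := fun x hx => hex x hx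
      have hle := Set.ncard_le_ncard hsub (Set.toFinite _)
      simp only [Set.ncard_singleton] at hle
      omega
end

section
/- Let n ≥ 4 and let G be a finite group of order 2^n generated by elements x and σ satisfying x^{2^{n−1}} = σ^2 = e and σxσ = x^{2^{n−2}+1} (the modular maximal-cyclic group M_2(n)). Then every non-linear irreducible complex character χ of G satisfies: (i) χ(g) = 0 for all g not in the center Z(G); and (ii) χ(x^{2^{n−3}}) = 2i or χ(x^{2^{n−3}}) = −2i. -/
open CategoryTheory Module

open CategoryTheory Module

namespace Stmt14Aux

variable {G : Type} [Group G]

/-- Schur: an endomorphism commuting with the whole action is scalar. -/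
lemma schur_scalar (W : FDRep ℂ G) [Simple W] (z : G)
    (hz : ∀ g, W.ρ g * W.ρ z = W.ρ z * W.ρ g) :
    ∃ c : ℂ, W.ρ z = c • (1 : W →ₗ[ℂ] W) := by
  let f : W ⟶ W := ⟨(FGModuleCat.ofHom (W.ρ z) : W.V ⟶ W.V), fun g => by
    ext v
    show W.ρ z (W.ρ g v) = W.ρ g (W.ρ z v)
    have := DFunLike.congr_fun (hz g) v
    simpa using this.symm⟩
  obtain ⟨c, hc⟩ := endomorphism_simple_eq_smul_id ℂ f
  refine ⟨c, ?_⟩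
  have := congrArg (fun φ : W ⟶ W => φ.hom.hom.hom) hc.symm
  exact this

lemma finrank_pos (W : FDRep ℂ G) [Simple W] : 0 < finrank ℂ W := by
  by_contra hcon
  have h0 : finrank ℂ W = 0 := by omega
  have hss : Subsingleton W := Module.finrank_zero_iff.mp h0
  apply CategoryTheory.id_nonzero W
  apply Action.hom_ext
  apply FGModuleCat.hom_ext
  apply LinearMap.ext
  intro v
  exact @Subsingleton.elim W hss _ _

lemma char_scalar (W : FDRep ℂ G) {z : G} {c : ℂ} (hz : W.ρ z = c • (1 : W →ₗ[ℂ] W)) :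
    W.character z = c * (finrank ℂ W : ℂ) := by
  show LinearMap.trace ℂ W (W.ρ z) = _
  rw [hz, map_smul, LinearMap.trace_one, smul_eq_mul]

lemma char_mul_scalar (W : FDRep ℂ G) (g : G) {z : G} {c : ℂ}
    (hz : W.ρ z = c • (1 : W →ₗ[ℂ] W)) :
    W.character (g * z) = c * W.character g := by
  show LinearMap.trace ℂ W (W.ρ (g * z)) = c * LinearMap.trace ℂ W (W.ρ g)
  rw [map_mul, hz, mul_smul_comm, mul_one, map_smul, smul_eq_mul]

lemma scalar_finrank_le (W : FDRep ℂ G) [Simple W]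
    (hsc : ∀ g : G, ∃ c : ℂ, W.ρ g = c • (1 : W →ₗ[ℂ] W)) :
    finrank ℂ W * finrank ℂ W ≤ 1 := by
  have comm : ∀ (u : W →ₗ[ℂ] W) (g : MonCat.of G),
      (Action.ρ W g : W.V ⟶ W.V) ≫ (show W.V ⟶ W.V from FGModuleCat.ofHom u) = (show W.V ⟶ W.V from FGModuleCat.ofHom u) ≫ (Action.ρ W g : W.V ⟶ W.V) := by
    intro u g
    apply FGModuleCat.hom_ext
    show u * W.ρ g = W.ρ g * u
    obtain ⟨c, hc⟩ := hsc g
    rw [hc]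
    ext v
    simp
  let Φ : (W →ₗ[ℂ] W) →ₗ[ℂ] (W ⟶ W) :=
    { toFun := fun u => ⟨FGModuleCat.ofHom u, comm u⟩
      map_add' := by intro u v; ext; rfl
      map_smul' := by intro c u; ext; rfl }
  have hinj : Function.Injective Φ := fun u v huv => congrArg (fun φ : W ⟶ W => φ.hom.hom.hom) huv
  have h1 := LinearMap.finrank_le_finrank_of_injective hinj
  rw [Module.finrank_linearMap] at h1
  rwa [finrank_endomorphism_simple_eq_one ℂ W] at h1

lemma sum_char (W : FDRep ℂ G) [Fintype G] [Simple W] :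
    ∑ g : G, W.character g * W.character g⁻¹ = (Fintype.card G : ℂ) := by
  have h2 : (Fintype.card G : ℂ) ≠ 0 := by simp [Fintype.card_ne_zero]
  letI : Invertible ((Nat.card G) : ℂ) := invertibleOfNonzero (by rw [Nat.card_eq_fintype_card]; exact h2)
  have key := FDRep.char_orthonormal W W
  rw [if_pos ⟨Iso.refl W⟩] at key
  have key2 : ⅟ ((Fintype.card G) : ℂ) • ∑ g : G, W.character g * W.character g⁻¹ = 1 := by
    rw [invOf_eq_inv, smul_eq_mul]; rw [Nat.card_eq_fintype_card] at key; simpa using key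
  calc ∑ g : G, W.character g * W.character g⁻¹
      = (Fintype.card G : ℂ) *
        (⅟ (Fintype.card G : ℂ) • ∑ g : G, W.character g * W.character g⁻¹) := by
        rw [smul_eq_mul, ← mul_assoc, mul_invOf_self, one_mul]
    _ = (Fintype.card G : ℂ) := by rw [key2]; simp

end Stmt14Aux


/-- let `G` be the modular maximal-cyclic group `M_2(n)` of order `2^n`
(`n ≥ 4`), generated by `x, σ` with `x^(2^(n-1)) = σ^2 = e` and `σxσ = x^(2^(n-2)+1)`.
Then every non-linear irreducible complex character `χ` of `G` vanishes off the center and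
satisfies `χ(x^(2^(n-3))) = ±2i`. -/
theorem stmt14 {G : Type} [Group G] [Fintype G] [DecidableEq G] (n : ℕ) (hn : 4 ≤ n)
    (hcard : Fintype.card G = 2 ^ n) (x σ : G)
    (hgen : Subgroup.closure ({x, σ} : Set G) = ⊤)
    (hx : x ^ (2 ^ (n - 1)) = 1) (hσ : σ ^ 2 = 1)
    (hrel : σ * x * σ = x ^ (2 ^ (n - 2) + 1)) :
    ∀ W : FDRep ℂ G, CategoryTheory.Simple W → W.character 1 ≠ 1 →
      (∀ g : G, g ∉ Subgroup.center G → W.character g = 0) ∧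
      (W.character (x ^ (2 ^ (n - 3))) = 2 * Complex.I ∨
        W.character (x ^ (2 ^ (n - 3))) = -(2 * Complex.I)) := by
  classical
  intro W hS hNL
  haveI := hS
  set q : ℕ := 2 ^ (n - 2) with hqdef
  have hx1 : x ^ (q * 2) = 1 := by
    rw [show q * 2 = 2 ^ (n - 1) by rw [hqdef, ← pow_succ, show n - 2 + 1 = n - 1 by omega]]
    exact hx
  have hq3 : q = 2 ^ (n - 3) * 2 := by
    rw [hqdef, ← pow_succ, show n - 3 + 1 = n - 2 by omega]
  have hxqq : x ^ (q * q) = 1 := by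
    have h1 : q * q = (q * 2) * 2 ^ (n - 3) := by rw [hq3]; ring
    rw [h1, pow_mul, hx1, one_pow]
  have hσσ : σ * σ = 1 := by rw [← sq]; exact hσ
  have hσinv : σ⁻¹ = σ := inv_eq_of_mul_eq_one_right hσσ
  have hconj : σ * x * σ⁻¹ = x ^ (q + 1) := by rw [hσinv]; exact hrel
  have hconjpow : ∀ a : ℕ, σ * x ^ a * σ⁻¹ = x ^ ((q + 1) * a) := by
    intro a
    calc σ * x ^ a * σ⁻¹ = (σ * x * σ⁻¹) ^ a := conj_pow.symm
      _ = (x ^ (q + 1)) ^ a := by rw [hconj]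
      _ = x ^ ((q + 1) * a) := by rw [← pow_mul]
  have hswap : ∀ a : ℕ, σ * x ^ a = x ^ ((q + 1) * a) * σ := by
    intro a
    have h2 : σ * x ^ a * σ = x ^ ((q + 1) * a) := by
      have h3 := hconjpow a
      rwa [hσinv] at h3
    calc σ * x ^ a = σ * x ^ a * σ * σ := by rw [mul_assoc (σ * x ^ a), hσσ, mul_one]
      _ = x ^ ((q + 1) * a) * σ := by rw [h2]
  have hq2pos : 0 < q * 2 := by positivity
  have hxmod : ∀ a : ℕ, x ^ a = x ^ (a % (q * 2)) := by
    intro a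
    conv_lhs => rw [← Nat.div_add_mod a (q * 2)]
    rw [pow_add, pow_mul, hx1, one_pow, one_mul]
  have hxinv : ∀ a : ℕ, ∃ m : ℕ, x ^ a * x ^ m = 1 := by
    intro a
    refine ⟨q * 2 - a % (q * 2), ?_⟩
    have hlt : a % (q * 2) < q * 2 := Nat.mod_lt _ hq2pos
    rw [hxmod a, ← pow_add, show a % (q * 2) + (q * 2 - a % (q * 2)) = q * 2 by omega]
    exact hx1
  let S : Subgroup G :=
    { carrier := {g | ∃ a : ℕ, g = x ^ a ∨ g = x ^ a * σ}
      one_mem' := ⟨0, Or.inl (pow_zero x).symm⟩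
      mul_mem' := by
        rintro g g' ⟨a, rfl | rfl⟩ ⟨b, rfl | rfl⟩
        · exact ⟨a + b, Or.inl (by rw [pow_add])⟩
        · exact ⟨a + b, Or.inr (by rw [pow_add, mul_assoc])⟩
        · refine ⟨a + (q + 1) * b, Or.inr ?_⟩
          rw [mul_assoc, hswap b, ← mul_assoc, ← pow_add]
        · refine ⟨a + (q + 1) * b, Or.inl ?_⟩
          calc x ^ a * σ * (x ^ b * σ) = x ^ a * (σ * x ^ b) * σ := by
                rw [mul_assoc, mul_assoc, mul_assoc]
            _ = x ^ a * (x ^ ((q + 1) * b) * σ) * σ := by rw [hswap b]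
            _ = x ^ (a + (q + 1) * b) * (σ * σ) := by
                rw [← mul_assoc, ← mul_assoc, ← pow_add, mul_assoc]
            _ = x ^ (a + (q + 1) * b) := by rw [hσσ, mul_one]
      inv_mem' := by
        rintro g ⟨a, rfl | rfl⟩
        · obtain ⟨m, hm⟩ := hxinv a
          exact ⟨m, Or.inl (inv_eq_of_mul_eq_one_right hm)⟩
        · obtain ⟨m, hm⟩ := hxinv a
          refine ⟨(q + 1) * m, Or.inr ?_⟩
          have key : x ^ ((q + 1) * m) * σ * (x ^ a * σ) = 1 := by
            calc x ^ ((q + 1) * m) * σ * (x ^ a * σ)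
                = x ^ ((q + 1) * m) * (σ * x ^ a) * σ := by
                  rw [mul_assoc, mul_assoc, mul_assoc]
              _ = x ^ ((q + 1) * m) * (x ^ ((q + 1) * a) * σ) * σ := by rw [hswap a]
              _ = x ^ ((q + 1) * m + (q + 1) * a) * (σ * σ) := by
                  rw [← mul_assoc, ← mul_assoc, ← pow_add, mul_assoc]
              _ = x ^ ((a + m) * (q + 1)) := by rw [hσσ, mul_one]; ring_nf
              _ = (x ^ (a + m)) ^ (q + 1) := by rw [pow_mul]
              _ = 1 := by rw [← pow_add x a m] at hm; rw [hm, one_pow]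
          exact (inv_eq_of_mul_eq_one_left key) }
  have hform : ∀ g : G, ∃ a : ℕ, g = x ^ a ∨ g = x ^ a * σ := by
    intro g
    have htop : (⊤ : Subgroup G) ≤ S := by
      rw [← hgen]
      rw [Subgroup.closure_le]
      intro g' hg'
      rcases hg' with h | h
      · exact ⟨1, Or.inl (by rw [h, pow_one])⟩
      · exact ⟨0, Or.inr (by rw [pow_zero, one_mul]; exact h)⟩
    exact htop (Subgroup.mem_top g)
  have hcent_even : ∀ m : ℕ, x ^ (m * 2) ∈ Subgroup.center G := by
    intro m
    rw [Subgroup.mem_center_iff]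
    intro g
    obtain ⟨b, rfl | rfl⟩ := hform g
    · rw [← pow_add, ← pow_add, Nat.add_comm]
    · calc x ^ b * σ * x ^ (m * 2) = x ^ b * (x ^ ((q + 1) * (m * 2)) * σ) := by
            rw [mul_assoc, hswap]
        _ = x ^ (b + (q + 1) * (m * 2)) * σ := by rw [← mul_assoc, ← pow_add]
        _ = x ^ (b + m * 2) * σ := by
            rw [show b + (q + 1) * (m * 2) = (b + m * 2) + (q * 2) * m by ring,
              pow_add, pow_mul, hx1, one_pow, mul_one]
        _ = x ^ (m * 2) * (x ^ b * σ) := by rw [← mul_assoc, ← pow_add, Nat.add_comm]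
  -- h := x^q basic facts
  have hh2 : x ^ q * x ^ q = 1 := by
    rw [← pow_add, show q + q = q * 2 by ring]; exact hx1
  have hhq_center : x ^ q ∈ Subgroup.center G := by
    rw [hq3]; exact hcent_even _
  -- conjugation off the center
  have hconj_off : ∀ g : G, g ∉ Subgroup.center G → ∃ u : G, u * g * u⁻¹ = g * x ^ q := by
    intro g hg
    obtain ⟨a, rfl | rfl⟩ := hform g
    · rcases Nat.even_or_odd a with ⟨m, hm⟩ | ⟨m, hm⟩
      · exact absurd (by rw [hm, show m + m = m * 2 by ring]; exact hcent_even m) hg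
      · refine ⟨σ, ?_⟩
        rw [hconjpow a, hm,
          show (q + 1) * (2 * m + 1) = ((2 * m + 1) + q) + (q * 2) * m by ring,
          pow_add, pow_mul, hx1, one_pow, mul_one, pow_add]
    · refine ⟨x, ?_⟩
      rw [mul_inv_eq_iff_eq_mul]
      calc x * (x ^ a * σ) = x ^ (a + 1) * σ := by
            rw [← mul_assoc, ← pow_succ']
        _ = x ^ (a + 1) * (x ^ (q * q) * x ^ (q * 2)) * σ := by rw [hxqq, hx1, mul_one, mul_one]
        _ = x ^ (a + (q + 1) * (q + 1)) * σ := by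
            rw [← pow_add, ← pow_add, show a + 1 + (q * q + q * 2) = a + (q+1)*(q+1) by ring]
        _ = x ^ a * (x ^ ((q + 1) * (q + 1)) * σ) := by
            rw [← mul_assoc, ← pow_add]
        _ = x ^ a * (σ * x ^ (q + 1)) := by rw [hswap]
        _ = x ^ a * σ * x ^ q * x := by
            rw [mul_assoc, mul_assoc, pow_succ]
  -- order of x
  have hmpos : 0 < orderOf x := orderOf_pos x
  have hordx : orderOf x = 2 ^ (n - 1) := by
    have hmdvd : orderOf x ∣ 2 ^ (n - 1) := orderOf_dvd_of_pow_eq_one hx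
    have hmle : orderOf x ≤ 2 ^ (n - 1) := Nat.le_of_dvd (by positivity) hmdvd
    have hsurj : Function.Surjective
        (fun p : Fin (orderOf x) × Fin 2 => x ^ (p.1 : ℕ) * σ ^ (p.2 : ℕ)) := by
      intro g
      obtain ⟨a, rfl | rfl⟩ := hform g
      · exact ⟨(⟨a % orderOf x, Nat.mod_lt _ hmpos⟩, ⟨0, by norm_num⟩),
          by simp [pow_mod_orderOf]⟩
      · exact ⟨(⟨a % orderOf x, Nat.mod_lt _ hmpos⟩, ⟨1, by norm_num⟩),
          by simp [pow_mod_orderOf]⟩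
    have hle := Fintype.card_le_of_surjective _ hsurj
    rw [hcard] at hle
    simp only [Fintype.card_prod, Fintype.card_fin] at hle
    have h2n : (2 : ℕ) ^ n = 2 ^ (n - 1) * 2 := by
      rw [← pow_succ, show n - 1 + 1 = n by omega]
    omega
  have hordx2 : orderOf (x ^ 2) = 2 ^ (n - 2) := by
    rw [orderOf_pow, hordx]
    have hdvd : (2 : ℕ) ∣ 2 ^ (n - 1) := dvd_pow_self 2 (by omega)
    rw [Nat.gcd_comm, Nat.gcd_eq_left hdvd,
      show (2:ℕ) ^ (n - 1) = 2 ^ (n - 2) * 2 by rw [← pow_succ, show n - 2 + 1 = n - 1 by omega]]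
    exact Nat.mul_div_cancel _ (by norm_num)
  -- center lower bound
  have hZcard : 2 ^ (n - 2) ≤ (Finset.univ.filter (· ∈ Subgroup.center G)).card := by
    have hmem : ∀ i ∈ Finset.range (2 ^ (n - 2)),
        (x ^ 2) ^ i ∈ Finset.univ.filter (· ∈ Subgroup.center G) := by
      intro i hi
      simp only [Finset.mem_filter, Finset.mem_univ, true_and]
      rw [← pow_mul, show 2 * i = i * 2 by ring]
      exact hcent_even i
    have hinj : Set.InjOn (fun i : ℕ => (x ^ 2) ^ i) (Finset.range (2 ^ (n - 2))) := by
      intro i hi j hj hij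
      have h1 := pow_injOn_Iio_orderOf (x := x ^ 2)
      exact h1 (by simpa [hordx2] using Finset.mem_range.mp hi)
        (by simpa [hordx2] using Finset.mem_range.mp hj) hij
    calc 2 ^ (n - 2) = (Finset.range (2 ^ (n - 2))).card := (Finset.card_range _).symm
      _ ≤ _ := Finset.card_le_card_of_injOn _ hmem hinj
  -- representation-theoretic part
  have hcommρ : ∀ z ∈ Subgroup.center G, ∀ g, W.ρ g * W.ρ z = W.ρ z * W.ρ g := by
    intro z hz g
    rw [← map_mul, ← map_mul, Subgroup.mem_center_iff.mp hz g]
  have hd0 : 0 < Module.finrank ℂ W := Stmt14Aux.finrank_pos W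
  have hdC : ((Module.finrank ℂ W : ℂ)) ≠ 0 := by exact_mod_cast hd0.ne'
  have hd1 : Module.finrank ℂ W ≠ 1 := by
    intro h1
    apply hNL
    rw [FDRep.char_one, h1]
    norm_num
  have hd2 : 2 ≤ Module.finrank ℂ W := by omega
  -- the scalar by which x^q acts is -1
  obtain ⟨c, hc⟩ := Stmt14Aux.schur_scalar W (x ^ q) (hcommρ _ hhq_center)
  have hcc : c * c = 1 := by
    have h1 : W.ρ (x ^ q) * W.ρ (x ^ q) = 1 := by rw [← map_mul, hh2, map_one]
    rw [hc] at h1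
    rw [smul_mul_smul_comm, mul_one] at h1
    have h3 : (c * c) • (1 : W →ₗ[ℂ] W) = 1 := h1
    have h4 := congrArg (LinearMap.trace ℂ W) h3
    rw [map_smul, LinearMap.trace_one, smul_eq_mul] at h4
    exact mul_right_cancel₀ hdC (by rw [h4, one_mul])
  have hcneg : c = -1 := by
    rcases mul_self_eq_one_iff.mp hcc with h1 | h2
    · exfalso
      rw [h1, one_smul] at hc
      have hsx : σ * x = x * (x ^ q * σ) := by
        have h5 := hswap 1
        rw [mul_one, pow_one] at h5
        rw [h5, pow_succ', mul_assoc]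
      have hcommxσ : Commute (W.ρ x) (W.ρ σ) := by
        have h6 : W.ρ σ * W.ρ x = W.ρ x * W.ρ σ := by
          rw [← map_mul, hsx, map_mul, map_mul, hc, one_mul]
        exact h6.symm
      have hpows : ∀ u : G, Commute (W.ρ x) (W.ρ u) ∧ Commute (W.ρ σ) (W.ρ u) := by
        intro u
        obtain ⟨a, rfl | rfl⟩ := hform u
        · refine ⟨?_, ?_⟩
          · rw [map_pow]
            exact (Commute.refl (W.ρ x)).pow_right a
          · rw [map_pow]
            exact hcommxσ.symm.pow_right a
        · refine ⟨?_, ?_⟩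
          · rw [map_mul, map_pow]
            exact ((Commute.refl (W.ρ x)).pow_right a).mul_right hcommxσ
          · rw [map_mul, map_pow]
            exact (hcommxσ.symm.pow_right a).mul_right (Commute.refl (W.ρ σ))
      have hsc : ∀ g : G, ∃ cg : ℂ, W.ρ g = cg • (1 : W →ₗ[ℂ] W) := by
        intro g
        apply Stmt14Aux.schur_scalar W g
        intro g'
        obtain ⟨a, rfl | rfl⟩ := hform g'
        · rw [map_pow]
          exact (hpows g).1.pow_left a
        · rw [map_mul, map_pow]
          exact Commute.mul_left ((hpows g).1.pow_left a) (hpows g).2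
      have hle1 := Stmt14Aux.scalar_finrank_le W hsc
      nlinarith [hd2]
    · exact h2
  rw [hcneg] at hc
  -- part (i)
  have part1 : ∀ g : G, g ∉ Subgroup.center G → W.character g = 0 := by
    intro g hg
    obtain ⟨u, hu⟩ := hconj_off g hg
    have h1 : W.character g = W.character (g * x ^ q) := by
      rw [← hu, FDRep.char_conj]
    rw [Stmt14Aux.char_mul_scalar W g hc] at h1
    linear_combination h1 / 2
  refine ⟨part1, ?_⟩
  -- central terms of the orthogonality sum
  have hcentral_term : ∀ z ∈ Finset.univ.filter (· ∈ Subgroup.center G),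
      W.character z * W.character z⁻¹ = ((Module.finrank ℂ W : ℂ)) ^ 2 := by
    intro z hz
    have hzc : z ∈ Subgroup.center G := (Finset.mem_filter.mp hz).2
    obtain ⟨c1, hc1⟩ := Stmt14Aux.schur_scalar W z (hcommρ z hzc)
    obtain ⟨c2, hc2⟩ := Stmt14Aux.schur_scalar W z⁻¹ (hcommρ z⁻¹ (inv_mem hzc))
    have h12 : c1 * c2 = 1 := by
      have h1 : W.ρ z * W.ρ z⁻¹ = 1 := by rw [← map_mul, mul_inv_cancel, map_one]
      rw [hc1, hc2] at h1
      rw [smul_mul_smul_comm, mul_one] at h1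
      have h3 : (c1 * c2) • (1 : W →ₗ[ℂ] W) = 1 := h1
      have h4 := congrArg (LinearMap.trace ℂ W) h3
      rw [map_smul, LinearMap.trace_one, smul_eq_mul] at h4
      exact mul_right_cancel₀ hdC (by rw [h4, one_mul])
    rw [Stmt14Aux.char_scalar W hc1, Stmt14Aux.char_scalar W hc2]
    linear_combination (Module.finrank ℂ W : ℂ) ^ 2 * h12
  -- orthogonality sum gives |Z| * d^2 = 2^n
  have hsum := Stmt14Aux.sum_char W
  rw [← Finset.sum_filter_add_sum_filter_not Finset.univ (· ∈ Subgroup.center G)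
      (fun g => W.character g * W.character g⁻¹)] at hsum
  have hzero : ∑ g ∈ Finset.univ.filter (fun g => ¬ g ∈ Subgroup.center G),
      W.character g * W.character g⁻¹ = 0 := by
    apply Finset.sum_eq_zero
    intro g hg
    rw [part1 g (Finset.mem_filter.mp hg).2, zero_mul]
  rw [hzero, add_zero, Finset.sum_congr rfl hcentral_term, Finset.sum_const,
    nsmul_eq_mul, hcard] at hsum
  have hnat : (Finset.univ.filter (· ∈ Subgroup.center G)).card
      * (Module.finrank ℂ W) ^ 2 = 2 ^ n := by exact_mod_cast hsum
  -- d = 2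
  have hdeq : Module.finrank ℂ W = 2 := by
    have h4 : (2 : ℕ) ^ n = 2 ^ (n - 2) * 4 := by
      conv_lhs => rw [show n = (n - 2) + 2 by omega]
      rw [pow_add]
      norm_num
    by_contra hne
    have h3le : 3 ≤ Module.finrank ℂ W := by omega
    have h9 : 9 ≤ (Module.finrank ℂ W) ^ 2 := by nlinarith
    have hpos : 0 < (2:ℕ) ^ (n - 2) := by positivity
    nlinarith [hZcard, hnat, h4, h9]
  -- part (ii)
  have ht_center : x ^ (2 ^ (n - 3)) ∈ Subgroup.center G := by
    rw [show (2:ℕ) ^ (n - 3) = 2 ^ (n - 4) * 2 by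
      rw [← pow_succ, show n - 4 + 1 = n - 3 by omega]]
    exact hcent_even _
  obtain ⟨μ, hμ⟩ := Stmt14Aux.schur_scalar W _ (hcommρ _ ht_center)
  have htt : x ^ (2 ^ (n - 3)) * x ^ (2 ^ (n - 3)) = x ^ q := by
    rw [← pow_add, hq3]
    congr 1
    ring
  have hμ2 : μ * μ = -1 := by
    have h1 : W.ρ (x ^ (2 ^ (n - 3))) * W.ρ (x ^ (2 ^ (n - 3))) = W.ρ (x ^ q) := by
      rw [← map_mul, htt]
    rw [hμ, hc] at h1
    rw [smul_mul_smul_comm, mul_one] at h1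
    have h3 : (μ * μ) • (1 : W →ₗ[ℂ] W) = (-1 : ℂ) • 1 := h1
    have h4 := congrArg (LinearMap.trace ℂ W) h3
    rw [map_smul, map_smul, LinearMap.trace_one, smul_eq_mul, smul_eq_mul] at h4
    exact mul_right_cancel₀ hdC h4
  have hχt : W.character (x ^ (2 ^ (n - 3))) = μ * 2 := by
    rw [Stmt14Aux.char_scalar W hμ, hdeq]
    norm_num
  have hμI : μ = Complex.I ∨ μ = -Complex.I := by
    have hfac : (μ - Complex.I) * (μ + Complex.I) = 0 := by
      linear_combination hμ2 - Complex.I_mul_I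
    rcases mul_eq_zero.mp hfac with h | h
    · left; exact sub_eq_zero.mp h
    · right; exact eq_neg_of_add_eq_zero_left h
  rcases hμI with h | h
  · left; rw [hχt, h]; ring
  · right; rw [hχt, h]; ring
end
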